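/- arXiv:2007.07641 — 5 statements merged into one kernel-verified Lean document; each statement's English description precedes it below -/
import Mathlib

section
/- For every odd integer n ≥ 1, the number of partitions of n into odd parts equals the sum, over all odd triangular numbers t = j(j+1)/2 with t ≤ n, of p((n − t)/2); that is, p_o(n) = p((n−1)/2) + p((n−3)/2) + p((n−15)/2) + p((n−21)/2) + ⋯, the sum ranging over all nonnegative integers j with j(j+1)/2 odd and j(j+1)/2 ≤ n. -/
/-- `p n` is the number of (unrestricted) partitions of `n`. -/
noncomputable def p (n : ℕ) : ℕ := Fintype.card (Nat.Partition n)

/-- `po n` is the number of partitions of `n` into odd parts. -/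
def po (n : ℕ) : ℕ := (Nat.Partition.odds n).card

/-!
Let `Θ(q) = ∑_{j ≥ 0} q^(j(j+1)/2)`. The generating functions of `po` and of partitions into even
parts are `∏ 1 / (1 - q^(2i-1))` and `∏ 1 / (1 - q^(2i))`, and the coefficient of `q^m` in the
latter is `p (m / 2)` for even `m` and `0` for odd `m`. So the theorem is the coefficient of `q^n`
in Gauss's identity `Θ(q) ∏ (1 - q^(2i-1)) = ∏ (1 - q^(2i))`, which follows from Euler's
`∏ (1 + q^i) (1 - q^(2i-1)) = 1` and Jacobi's triple product at `z = 1`,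
`∏ (1 + q^i)² (1 - q^i) = Θ(q)`. The latter is the limit of the polynomial identity
`∏_{i<m} (1 + q^i) (1 + q^(i+1)) = ∑_{k ≤ 2m} [2m choose k]_q q^(T(k-m))`, `T(j) = j(j+1)/2`,
because `[2m choose k]_q (q; q)_{2m} ≡ 1` modulo `q^(min(k, 2m-k)+1)` while `T(k-m)` grows with
`|k-m|`.
-/

open Finset PowerSeries Filter Topology
open scoped PowerSeries.WithPiTopology

section QBinomial

variable {R : Type*} [CommRing R] (q : R)

/-- The q-Pochhammer symbol `(q; q)_n`. -/
def qPochhammer (n : ℕ) : R := ∏ i ∈ range n, (1 - q ^ (i + 1))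

def qBinomial : ℕ → ℕ → R
  | _, 0 => 1
  | 0, _ + 1 => 0
  | n + 1, k + 1 => qBinomial n (k + 1) + q ^ (n - k) * qBinomial n k

@[simp] lemma qBinomial_zero_right (n : ℕ) : qBinomial q n 0 = 1 := by cases n <;> rfl

lemma qBinomial_succ_succ (n k : ℕ) :
    qBinomial q (n + 1) (k + 1) = qBinomial q n (k + 1) + q ^ (n - k) * qBinomial q n k := rfl

lemma qBinomial_eq_zero_of_lt {n k : ℕ} (h : n < k) : qBinomial q n k = 0 := by
  induction n generalizing k with
  | zero => obtain ⟨k, rfl⟩ := Nat.exists_eq_add_one.mpr h; rfl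
  | succ n ih =>
    obtain ⟨k, rfl⟩ := Nat.exists_eq_add_one.mpr (n.zero_lt_succ.trans h)
    rw [qBinomial_succ_succ, ih (by omega), ih (by omega), mul_zero, add_zero]

@[simp] lemma qPochhammer_zero : qPochhammer q 0 = 1 := prod_range_zero _

lemma qPochhammer_succ (n : ℕ) : qPochhammer q (n + 1) = qPochhammer q n * (1 - q ^ (n + 1)) :=
  prod_range_succ _ _

theorem qBinomial_mul_qPochhammer_mul_qPochhammer {n k : ℕ} (h : k ≤ n) :
    qBinomial q n k * qPochhammer q k * qPochhammer q (n - k) = qPochhammer q n := by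
  induction n generalizing k with
  | zero =>
    obtain rfl : k = 0 := by omega
    simp
  | succ n ih =>
    rcases k with _ | k
    · simp
    rcases (Nat.lt_succ_iff.mp h).lt_or_eq with hk | rfl
    · obtain ⟨d, rfl⟩ := Nat.exists_eq_add_of_lt hk
      have h₁ := ih (k := k + 1) (by omega)
      have h₂ := ih (k := k) (by omega)
      rw [show k + d + 1 - (k + 1) = d by omega] at h₁
      rw [show k + d + 1 - k = d + 1 by omega] at h₂
      rw [show k + d + 1 + 1 - (k + 1) = d + 1 by omega, qBinomial_succ_succ,
        show k + d + 1 - k = d + 1 by omega, qPochhammer_succ q (k + d + 1)]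
      linear_combination (1 - q ^ (d + 1)) * h₁ + q ^ (d + 1) * (1 - q ^ (k + 1)) * h₂
        + qBinomial q (k + d + 1) (k + 1) * qPochhammer q (k + 1) * qPochhammer_succ q d
        + q ^ (d + 1) * qBinomial q (k + d + 1) k * qPochhammer q (d + 1) * qPochhammer_succ q k
    · have := ih (k := k) le_rfl
      rw [Nat.sub_self, qPochhammer_zero, mul_one] at this
      rw [Nat.sub_self, qBinomial_succ_succ, qBinomial_eq_zero_of_lt q (Nat.lt_succ_self k),
        Nat.sub_self, qPochhammer_succ q k, qPochhammer_zero, mul_one]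
      linear_combination (1 - q ^ (k + 1)) * this

/-- The q-binomial theorem. -/
theorem prod_add_mul_pow_eq_sum_qBinomial (x y : R) (N : ℕ) :
    ∏ i ∈ range N, (x + y * q ^ i) =
      ∑ k ∈ range (N + 1), qBinomial q N k * q ^ k.choose 2 * y ^ k * x ^ (N - k) := by
  induction N with
  | zero => simp
  | succ N ih =>
    set T : ℕ → R := fun k ↦ qBinomial q N k * q ^ k.choose 2 * y ^ k * x ^ (N - k)
    set A : ℕ → R := fun k ↦
      qBinomial q N (k + 1) * q ^ (k + 1).choose 2 * y ^ (k + 1) * x ^ (N - k)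
    have hsplit : ∀ k ∈ range (N + 1),
        qBinomial q (N + 1) (k + 1) * q ^ (k + 1).choose 2 * y ^ (k + 1) * x ^ (N + 1 - (k + 1))
          = A k + T k * (y * q ^ N) := by
      intro k hk
      obtain ⟨d, rfl⟩ := Nat.exists_eq_add_of_le (Nat.lt_succ_iff.mp (mem_range.mp hk))
      simp only [A, T, qBinomial_succ_succ, Nat.choose_succ_succ', Nat.choose_one_right,
        show k + d + 1 - (k + 1) = d by omega, show k + d - k = d by omega]
      ring
    have hshift : ∑ k ∈ range (N + 1), A k + qBinomial q (N + 1) 0 * q ^ (0).choose 2 * y ^ 0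
        * x ^ (N + 1 - 0) = (∑ k ∈ range (N + 1), T k) * x := by
      rw [sum_mul, sum_range_succ, sum_range_succ' _ N]
      simp only [A, T, qBinomial_eq_zero_of_lt q (Nat.lt_succ_self N)]
      have : ∀ k ∈ range N, qBinomial q N (k + 1) * q ^ (k + 1).choose 2 * y ^ (k + 1)
          * x ^ (N - k) = qBinomial q N (k + 1) * q ^ (k + 1).choose 2 * y ^ (k + 1)
          * x ^ (N - (k + 1)) * x := by
        intro k hk
        rw [mul_assoc _ (x ^ _), ← pow_succ, show N - (k + 1) + 1 = N - k by
          have := mem_range.mp hk; omega]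
      rw [sum_congr rfl this]
      simp only [qBinomial_zero_right, zero_mul, add_zero, Nat.sub_zero, pow_succ x N]
      ring
    rw [prod_range_succ, ih, sum_range_succ' _ (N + 1), sum_congr rfl hsplit, sum_add_distrib,
      ← sum_mul]
    linear_combination -hshift

end QBinomial

def intTri (j : ℤ) : ℕ := (j * (j + 1) / 2).toNat

lemma two_mul_intTri (j : ℤ) : 2 * (intTri j : ℤ) = j * (j + 1) := by
  have hnonneg : 0 ≤ j * (j + 1) := by rcases le_or_gt 0 j with h | h <;> nlinarith
  rw [intTri, Int.toNat_of_nonneg (Int.ediv_nonneg hnonneg zero_le_two),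
    Int.mul_ediv_cancel' (Int.even_mul_succ_self j).two_dvd]

lemma intTri_natCast (n : ℕ) : intTri n = n * (n + 1) / 2 := by
  have h := two_mul_intTri n
  have hdvd : 2 ∣ n * (n + 1) := (Nat.even_mul_succ_self n).two_dvd
  zify [hdvd] at h ⊢
  omega

lemma intTri_neg_sub_one (j : ℤ) : intTri (-j - 1) = intTri j := by
  have h := two_mul_intTri (-j - 1)
  rw [show (-j - 1) * (-j - 1 + 1) = j * (j + 1) by ring, ← two_mul_intTri j] at h
  omega

lemma le_intTri (j : ℤ) : j ≤ intTri j := by nlinarith [two_mul_intTri j]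

lemma neg_sub_one_le_intTri (j : ℤ) : -j - 1 ≤ intTri j := by nlinarith [two_mul_intTri j]

lemma natCast_choose_two_mul_two (k : ℕ) : (k.choose 2 : ℤ) * 2 = k * (k - 1) := by
  induction k with
  | zero => simp
  | succ k ih =>
    rw [Nat.choose_succ_succ', Nat.choose_one_right]
    push_cast
    linear_combination ih

lemma choose_two_add_add_mul_sub_eq {m k : ℕ} (hk : k ≤ 2 * m) :
    k.choose 2 + k + m * (2 * m - k) = ∑ i ∈ range (m + 1), i + m * m + intTri (k - m) := by
  have hsum : ((∑ i ∈ range (m + 1), i : ℕ) : ℤ) * 2 = (m + 1) * m := by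
    exact_mod_cast sum_range_id_mul_two (m + 1)
  have h2 : 2 * ((k.choose 2 : ℤ) + k + m * (2 * m - k)) =
      2 * ((∑ i ∈ range (m + 1), i : ℕ) + m * m + intTri (k - m)) := by
    linear_combination natCast_choose_two_mul_two k - hsum - two_mul_intTri (k - m)
  zify [hk]
  push_cast at h2 ⊢
  linarith

section JacobiTripleProduct

variable {R : Type*} [CommRing R] (q : R)

lemma prod_pow_add_mul_pow (m : ℕ) :
    ∏ i ∈ range (2 * m), (q ^ m + q * q ^ i) =
      q ^ (∑ i ∈ range (m + 1), i + m * m) * ∏ i ∈ range m, ((1 + q ^ i) * (1 + q ^ (i + 1))) := by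
  have hlow : ∏ i ∈ range m, (q ^ m + q * q ^ i) = q ^ (∑ i ∈ range (m + 1), i) *
      ∏ i ∈ range m, (1 + q ^ i) := by
    have : ∀ i ∈ range m, q ^ m + q * q ^ i = q ^ (i + 1) * (1 + q ^ (m - 1 - i)) := by
      intro i hi
      rw [mul_add, mul_one, ← pow_add, show i + 1 + (m - 1 - i) = m by
        have := mem_range.mp hi; omega]
      ring
    rw [prod_congr rfl this, prod_mul_distrib, prod_range_reflect (fun i ↦ 1 + q ^ i),
      prod_pow_eq_pow_sum, sum_range_succ' _ m, add_zero]
  have hhigh : ∏ i ∈ range m, (q ^ m + q * q ^ (m + i)) = q ^ (m * m) *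
      ∏ i ∈ range m, (1 + q ^ (i + 1)) := by
    have : ∀ i ∈ range m, q ^ m + q * q ^ (m + i) = q ^ m * (1 + q ^ (i + 1)) := fun i _ ↦ by
      ring
    rw [prod_congr rfl this, prod_mul_distrib, prod_const, card_range, ← pow_mul]
  rw [two_mul, prod_range_add, hlow, hhigh, prod_mul_distrib, pow_add]
  ring

/-- A finite form of Jacobi's triple product identity: the q-binomial theorem at `x = q ^ m`,
`y = q`, divided by `q ^ E`. -/
theorem prod_one_add_pow_mul_one_add_pow_succ_eq_sum_qBinomial [IsDomain R] (hq : q ≠ 0)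
    (m : ℕ) :
    ∏ i ∈ range m, ((1 + q ^ i) * (1 + q ^ (i + 1))) =
      ∑ k ∈ range (2 * m + 1), qBinomial q (2 * m) k * q ^ intTri (k - m) := by
  set E := ∑ i ∈ range (m + 1), i + m * m
  refine mul_left_cancel₀ (pow_ne_zero E hq) ?_
  rw [← prod_pow_add_mul_pow, prod_add_mul_pow_eq_sum_qBinomial, mul_sum]
  refine sum_congr rfl fun k hk ↦ ?_
  have hk : k ≤ 2 * m := Nat.lt_succ_iff.mp (mem_range.mp hk)
  have hexp := choose_two_add_add_mul_sub_eq hk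
  rw [← pow_mul, show q ^ E * (qBinomial q (2 * m) k * q ^ intTri (k - m))
    = qBinomial q (2 * m) k * q ^ (E + intTri (k - m)) by ring, ← hexp]
  ring

end JacobiTripleProduct

section PowerSeriesCongruences
variable {R : Type*} [CommRing R]

lemma X_pow_succ_dvd_qPochhammer_sub {a b : ℕ} (h : a ≤ b) :
    (X : R⟦X⟧) ^ (a + 1) ∣ qPochhammer X b - qPochhammer X a := by
  induction b, h using Nat.le_induction with
  | base => simp
  | succ b hab ih =>
    rw [qPochhammer_succ, show qPochhammer (X : R⟦X⟧) b * (1 - X ^ (b + 1)) - qPochhammer X a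
      = qPochhammer X b - qPochhammer X a - qPochhammer X b * X ^ (b + 1) by ring]
    exact dvd_sub ih (dvd_mul_of_dvd_right (pow_dvd_pow X (by omega)) _)

lemma isUnit_qPochhammer_X (n : ℕ) : IsUnit (qPochhammer (X : R⟦X⟧) n) := by
  rw [isUnit_iff_constantCoeff, qPochhammer, map_prod]
  simp

/-- Modulo `X ^ (a + 1)` with `a = min k (n - k)`, all three q-Pochhammer symbols in
`qBinomial_mul_qPochhammer_mul_qPochhammer` agree with `qPochhammer X a`, which is a unit. -/
lemma X_pow_dvd_qBinomial_mul_qPochhammer_sub_one {n k : ℕ} (hk : k ≤ n) :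
    (X : R⟦X⟧) ^ (min k (n - k) + 1) ∣ qBinomial X n k * qPochhammer X n - 1 := by
  set a := min k (n - k)
  set π := Ideal.Quotient.mk (Ideal.span {(X : R⟦X⟧) ^ (a + 1)})
  have hπ : ∀ b, a ≤ b → π (qPochhammer X b) = π (qPochhammer X a) := fun b hb ↦
    Ideal.Quotient.eq.mpr (Ideal.mem_span_singleton.mpr (X_pow_succ_dvd_qPochhammer_sub hb))
  have h := congrArg π (qBinomial_mul_qPochhammer_mul_qPochhammer X hk)
  rw [map_mul, map_mul, hπ k (min_le_left _ _), hπ (n - k) (min_le_right _ _),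
    hπ n (by omega)] at h
  rw [← Ideal.mem_span_singleton, ← Ideal.Quotient.eq_zero_iff_mem, map_sub, map_mul, map_one,
    hπ n (by omega), ← ((isUnit_qPochhammer_X a).map π).mul_left_eq_zero]
  linear_combination h

end PowerSeriesCongruences

section IntegerPowerSeries

lemma X_pow_dvd_prod_mul_qPochhammer_sub_sum (m : ℕ) :
    (X : ℤ⟦X⟧) ^ m ∣ (∏ i ∈ range m, ((1 + X ^ i) * (1 + X ^ (i + 1)))) * qPochhammer X (2 * m)
      - ∑ k ∈ range (2 * m + 1), X ^ intTri (k - m) := by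
  rw [prod_one_add_pow_mul_one_add_pow_succ_eq_sum_qBinomial X X_ne_zero, sum_mul,
    ← sum_sub_distrib]
  refine dvd_sum fun k hk ↦ ?_
  have hk : k ≤ 2 * m := Nat.lt_succ_iff.mp (mem_range.mp hk)
  have hexp : m ≤ min k (2 * m - k) + 1 + intTri (k - m) := by
    have := le_intTri (k - m)
    have := neg_sub_one_le_intTri (k - m)
    omega
  have hdvd := mul_dvd_mul (X_pow_dvd_qBinomial_mul_qPochhammer_sub_one hk)
    (dvd_refl ((X : ℤ⟦X⟧) ^ intTri (k - m)))
  rw [← pow_add] at hdvd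
  convert (pow_dvd_pow X hexp).trans hdvd using 1
  ring

lemma tendsto_zero_of_X_pow_dvd {f : ℕ → ℤ⟦X⟧} (h : ∀ m, X ^ m ∣ f m) :
    Tendsto f atTop (𝓝 0) := by
  rw [WithPiTopology.tendsto_iff_coeff_tendsto]
  intro d
  rw [map_zero]
  exact tendsto_atTop_of_eventually_const (i₀ := d + 1) fun m hm ↦
    X_pow_dvd_iff.mp (h m) d (by omega)

lemma tendsto_order_X_pow_of_tendsto {g : ℕ → ℕ} (hg : Tendsto g atTop atTop) :
    Tendsto (fun i ↦ ((X : ℤ⟦X⟧) ^ g i).order) atTop (𝓝 ⊤) := by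
  simp_rw [order_X_pow]
  exact ENat.tendsto_nhds_top_iff_natCast_lt.mpr fun n ↦
    (hg.eventually_gt_atTop n).mono fun i hi ↦ by exact_mod_cast hi

lemma summable_X_pow_of_tendsto {g : ℕ → ℕ} (hg : Tendsto g atTop atTop) :
    Summable fun i ↦ (X : ℤ⟦X⟧) ^ g i :=
  WithPiTopology.summable_of_tendsto_order_atTop_nhds_top _ (tendsto_order_X_pow_of_tendsto hg)

lemma multipliable_one_add_X_pow_of_tendsto {g : ℕ → ℕ} (hg : Tendsto g atTop atTop) :
    Multipliable fun i ↦ 1 + (X : ℤ⟦X⟧) ^ g i :=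
  WithPiTopology.multipliable_one_add_of_tendsto_order_atTop_nhds_top _
    (tendsto_order_X_pow_of_tendsto hg)

lemma multipliable_one_sub_X_pow_of_tendsto {g : ℕ → ℕ} (hg : Tendsto g atTop atTop) :
    Multipliable fun i ↦ 1 - (X : ℤ⟦X⟧) ^ g i := by
  simp_rw [sub_eq_add_neg]
  refine WithPiTopology.multipliable_one_add_of_tendsto_order_atTop_nhds_top _ ?_
  simpa only [order_neg] using tendsto_order_X_pow_of_tendsto hg

lemma tendsto_two_mul_add_atTop (c : ℕ) : Tendsto (fun k ↦ 2 * k + c) atTop atTop :=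
  tendsto_atTop_mono (fun k ↦ show k ≤ 2 * k + c by omega) tendsto_id

lemma tendsto_intTri_atTop : Tendsto (fun j : ℕ ↦ intTri j) atTop atTop :=
  tendsto_atTop_mono (fun j ↦ by exact_mod_cast le_intTri j) tendsto_id

lemma tendsto_sum_X_pow_intTri :
    Tendsto (fun m : ℕ ↦ ∑ k ∈ range (2 * m + 1), (X : ℤ⟦X⟧) ^ intTri (k - m)) atTop
      (𝓝 (2 * ∑' j : ℕ, X ^ intTri j)) := by
  have hsplit : ∀ m : ℕ, ∑ k ∈ range (2 * m + 1), (X : ℤ⟦X⟧) ^ intTri (k - m) =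
      ∑ j ∈ range m, X ^ intTri j + ∑ j ∈ range (m + 1), X ^ intTri j := by
    intro m
    rw [show 2 * m + 1 = m + (m + 1) by ring, sum_range_add, ← sum_range_reflect]
    congr 1
    · refine sum_congr rfl fun j hj ↦ ?_
      rw [← intTri_neg_sub_one (j : ℤ)]
      have := mem_range.mp hj
      congr 2
      omega
    · simp
  have hΘ := (summable_X_pow_of_tendsto tendsto_intTri_atTop).hasSum.tendsto_sum_nat
  simp_rw [hsplit, two_mul]
  exact hΘ.add ((tendsto_add_atTop_iff_nat 1).mpr hΘ)

lemma tendsto_prod_one_add_X_pow_mul_one_add_X_pow_succ :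
    Tendsto (fun m ↦ ∏ i ∈ range m, ((1 + (X : ℤ⟦X⟧) ^ i) * (1 + X ^ (i + 1)))) atTop
      (𝓝 (2 * (∏' i, (1 + X ^ (i + 1))) ^ 2)) := by
  have hD :=
    (multipliable_one_add_X_pow_of_tendsto (tendsto_add_atTop_nat 1)).tendsto_prod_tprod_nat
  have hD' : Tendsto (fun m ↦ ∏ i ∈ range m, (1 + (X : ℤ⟦X⟧) ^ i)) atTop
      (𝓝 (2 * ∏' i, (1 + X ^ (i + 1)))) := by
    refine (tendsto_add_atTop_iff_nat 1).mp ?_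
    simp_rw [prod_range_succ', pow_zero, mul_comm _ (1 + 1 : ℤ⟦X⟧), one_add_one_eq_two]
    exact hD.const_mul 2
  simp_rw [prod_mul_distrib, sq, ← mul_assoc]
  exact hD'.mul hD

/-- Jacobi's triple product identity at `z = 1`: the limit of
`prod_one_add_pow_mul_one_add_pow_succ_eq_sum_qBinomial` multiplied by `qPochhammer X (2 * m)`. -/
theorem tprod_one_add_X_pow_sq_mul_tprod_one_sub_X_pow :
    (∏' i, (1 + (X : ℤ⟦X⟧) ^ (i + 1))) ^ 2 * ∏' i, (1 - X ^ (i + 1)) =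
      ∑' j : ℕ, X ^ intTri j := by
  have hP := (multipliable_one_sub_X_pow_of_tendsto (tendsto_add_atTop_nat 1))
    |>.tendsto_prod_tprod_nat |>.comp (tendsto_two_mul_add_atTop 0)
  have hlim := tendsto_nhds_unique
    ((tendsto_prod_one_add_X_pow_mul_one_add_X_pow_succ.mul hP).sub tendsto_sum_X_pow_intTri)
    (tendsto_zero_of_X_pow_dvd X_pow_dvd_prod_mul_qPochhammer_sub_sum)
  have htwo : (2 : ℤ⟦X⟧) ≠ 0 := fun h ↦ by
    have := congrArg constantCoeff h
    rw [map_ofNat, map_zero] at this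
    norm_num at this
  refine mul_left_cancel₀ htwo ?_
  linear_combination hlim

lemma tprod_one_sub_X_pow_odd_mul_even :
    (∏' i, (1 - (X : ℤ⟦X⟧) ^ (2 * i + 1))) * ∏' i, (1 - X ^ (2 * i + 2)) =
      ∏' i, (1 - X ^ (i + 1)) := by
  rw [← tprod_even_mul_odd (f := fun i ↦ 1 - (X : ℤ⟦X⟧) ^ (i + 1))
    (multipliable_one_sub_X_pow_of_tendsto (tendsto_two_mul_add_atTop 1))
    (multipliable_one_sub_X_pow_of_tendsto (tendsto_two_mul_add_atTop 2))]

/-- Euler's identity `∏ (1 + q ^ i) = ∏ 1 / (1 - q ^ (2 i - 1))`. -/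
theorem tprod_one_add_X_pow_mul_tprod_one_sub_X_pow_odd :
    (∏' i, (1 + (X : ℤ⟦X⟧) ^ (i + 1))) * ∏' i, (1 - X ^ (2 * i + 1)) = 1 := by
  have hmul : (∏' i, (1 + (X : ℤ⟦X⟧) ^ (i + 1))) * ∏' i, (1 - X ^ (i + 1)) =
      ∏' i, (1 - X ^ (2 * i + 2)) := by
    rw [← (multipliable_one_add_X_pow_of_tendsto (tendsto_add_atTop_nat 1)).tprod_mul
      (multipliable_one_sub_X_pow_of_tendsto (tendsto_add_atTop_nat 1))]
    exact tprod_congr fun i ↦ by ring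
  have hne : ∏' i, (1 - (X : ℤ⟦X⟧) ^ (2 * i + 2)) ≠ 0 := by
    refine right_ne_zero_of_mul (a := ∏' i, (1 - (X : ℤ⟦X⟧) ^ (2 * i + 1))) ?_
    rw [tprod_one_sub_X_pow_odd_mul_even]
    exact WithPiTopology.tprod_one_sub_X_pow_ne_zero ℤ
  refine mul_right_cancel₀ hne ?_
  linear_combination
    (∏' i, (1 + (X : ℤ⟦X⟧) ^ (i + 1))) * tprod_one_sub_X_pow_odd_mul_even + hmul

/-- Gauss's identity `∑ q ^ (j (j + 1) / 2) = ∏ (1 - q ^ (2 i)) / (1 - q ^ (2 i - 1))`. -/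
theorem tsum_X_pow_intTri_mul_tprod_one_sub_X_pow_odd :
    (∑' j : ℕ, (X : ℤ⟦X⟧) ^ intTri j) * ∏' i, (1 - X ^ (2 * i + 1)) =
      ∏' i, (1 - X ^ (2 * i + 2)) := by
  rw [← tprod_one_add_X_pow_sq_mul_tprod_one_sub_X_pow, ← tprod_one_sub_X_pow_odd_mul_even]
  have := tprod_one_add_X_pow_mul_tprod_one_sub_X_pow_odd
  set D := ∏' i, (1 + (X : ℤ⟦X⟧) ^ (i + 1))
  set Qo := ∏' i, (1 - (X : ℤ⟦X⟧) ^ (2 * i + 1))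
  set Qe := ∏' i, (1 - (X : ℤ⟦X⟧) ^ (2 * i + 2))
  linear_combination Qe * (D * Qo + 1) * this

end IntegerPowerSeries

namespace Nat.Partition

def scale {n : ℕ} (c : ℕ) (hc : 0 < c) (p : n.Partition) : (c * n).Partition where
  parts := p.parts.map (c * ·)
  parts_pos hi := by
    obtain ⟨a, ha, rfl⟩ := Multiset.mem_map.mp hi
    exact Nat.mul_pos hc (p.parts_pos ha)
  parts_sum := by rw [Multiset.sum_map_mul_left, Multiset.map_id', p.parts_sum]

lemma scale_injective {n c : ℕ} (hc : 0 < c) : Function.Injective (scale (n := n) c hc) :=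
  fun _ _ h ↦ Nat.Partition.ext <| Multiset.map_injective (fun _ _ ↦ Nat.eq_of_mul_eq_mul_left hc)
    (congrArg Nat.Partition.parts h)

theorem card_restricted_mul_dvd {c : ℕ} (hc : 0 < c) (n : ℕ) :
    #(restricted (c * n) (c ∣ ·)) = Fintype.card n.Partition := by
  rw [← Finset.card_univ, ← Finset.card_image_of_injective univ (scale_injective hc)]
  congr 1
  ext q
  simp only [restricted, mem_filter, mem_univ, true_and, mem_image]
  constructor
  · intro hq
    have hmap : q.parts.map (fun i ↦ c * (i / c)) = q.parts :=
      (Multiset.map_congr rfl fun i hi ↦ Nat.mul_div_cancel' (hq i hi)).trans (Multiset.map_id _)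
    have hsum : (q.parts.map (· / c)).sum = n := by
      apply Nat.eq_of_mul_eq_mul_left hc
      rw [← Multiset.sum_map_mul_left, hmap, q.parts_sum]
    refine ⟨ofSums n _ hsum, Nat.Partition.ext ?_⟩
    have hpos : ∀ i ∈ q.parts, i / c ≠ 0 := fun i hi h ↦
      (q.parts_pos hi).ne' (by rw [← Nat.mul_div_cancel' (hq i hi), h, mul_zero])
    simp only [scale, ofSums, Multiset.filter_map, Multiset.map_map, Function.comp_def]
    rw [Multiset.filter_eq_self.mpr hpos, hmap]
  · rintro ⟨p, rfl⟩ i hi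
    obtain ⟨a, -, rfl⟩ := Multiset.mem_map.mp hi
    exact dvd_mul_right c a

theorem card_restricted_even (m : ℕ) :
    #(restricted m Even) = if Even m then Fintype.card (m / 2).Partition else 0 := by
  split_ifs with hm
  · obtain ⟨r, rfl⟩ := hm
    rw [← two_mul, Nat.mul_div_cancel_left r two_pos, ← card_restricted_mul_dvd two_pos]
    congr 1
    ext q
    simp [restricted, even_iff_two_dvd]
  · refine Finset.card_eq_zero.mpr (filter_eq_empty_iff.mpr fun q _ hq ↦ hm ?_)
    rw [← q.parts_sum, even_iff_two_dvd]
    exact Multiset.dvd_sum fun x hx ↦ even_iff_two_dvd.mp (hq x hx)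

end Nat.Partition

section GeneratingFunctions

open Nat.Partition

lemma mul_eq_one_of_hasProd_tsum_X_pow {g : ℕ → ℕ} (hg : ∀ k, g k ≠ 0) {F Q : ℤ⟦X⟧}
    (hF : HasProd (fun k ↦ ∑' j, X ^ (g k * j)) F) (hQ : HasProd (fun k ↦ 1 - X ^ g k) Q) :
    F * Q = 1 := by
  refine (hF.mul hQ).unique ?_
  convert hasProd_one with k
  simp_rw [pow_mul]
  exact WithPiTopology.tsum_pow_mul_one_sub_of_constantCoeff_eq_zero (by simp [hg k])

theorem hasProd_card_odds :
    HasProd (fun k ↦ ∑' j, (X : ℤ⟦X⟧) ^ ((2 * k + 1) * j)) (mk fun n ↦ (#(odds n) : ℤ)) := by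
  have h := hasProd_powerSeriesMk_card_restricted ℤ (¬ Even ·)
  rw [← Function.Injective.hasProd_iff (g := (2 * ·)) (fun _ _ ↦ by simp)] at h
  · exact h.congr_fun fun k ↦ by simp [parity_simps]
  · intro i hi
    obtain ⟨r, rfl⟩ : Odd i :=
      Nat.not_even_iff_odd.mp fun ⟨r, hr⟩ ↦ hi ⟨r, by simp [hr, two_mul]⟩
    simp [parity_simps]

theorem hasProd_card_restricted_even :
    HasProd (fun k ↦ ∑' j, (X : ℤ⟦X⟧) ^ ((2 * k + 2) * j))
      (mk fun n ↦ (#(restricted n Even) : ℤ)) := by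
  have h := hasProd_powerSeriesMk_card_restricted ℤ Even
  rw [← Function.Injective.hasProd_iff (g := (2 * · + 1)) (fun _ _ ↦ by simp)] at h
  · exact h.congr_fun fun k ↦ by simp [parity_simps]
  · intro i hi
    obtain ⟨r, rfl⟩ : Even i := Nat.not_odd_iff_even.mp fun ⟨r, hr⟩ ↦ hi ⟨r, hr.symm⟩
    simp [parity_simps]

theorem powerSeriesMk_card_odds_eq_tsum_mul :
    PowerSeries.mk (fun n ↦ (#(odds n) : ℤ)) =
      (∑' j : ℕ, X ^ intTri j) * PowerSeries.mk fun n ↦ (#(restricted n Even) : ℤ) := by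
  have hodd := mul_eq_one_of_hasProd_tsum_X_pow (fun k ↦ by omega) hasProd_card_odds
    (multipliable_one_sub_X_pow_of_tendsto (tendsto_two_mul_add_atTop 1)).hasProd
  have heven := mul_eq_one_of_hasProd_tsum_X_pow (fun k ↦ by omega) hasProd_card_restricted_even
    (multipliable_one_sub_X_pow_of_tendsto (tendsto_two_mul_add_atTop 2)).hasProd
  have hgauss := tsum_X_pow_intTri_mul_tprod_one_sub_X_pow_odd
  set Godd := PowerSeries.mk fun n ↦ (#(odds n) : ℤ)
  set Geven := PowerSeries.mk fun n ↦ (#(restricted n Even) : ℤ)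
  set Θ := ∑' j : ℕ, (X : ℤ⟦X⟧) ^ intTri j
  linear_combination -Godd * heven - Godd * Geven * hgauss + Θ * Geven * hodd

lemma coeff_tsum_X_pow_mul {g : ℕ → ℕ} (hg : Tendsto g atTop atTop) (F : ℤ⟦X⟧) (n : ℕ) :
    coeff n ((∑' j, X ^ g j) * F) = ∑' j, if g j ≤ n then coeff (n - g j) F else 0 := by
  rw [← (summable_X_pow_of_tendsto hg).tsum_mul_right,
    ((summable_X_pow_of_tendsto hg).mul_right F).map_tsum _ (WithPiTopology.continuous_coeff ℤ n)]
  simp_rw [coeff_X_pow_mul']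

end GeneratingFunctions

/-- For every odd `n ≥ 1`, the number of partitions of `n` into odd parts equals
the sum of `p ((n - t) / 2)` over all odd triangular numbers `t = j * (j + 1) / 2 ≤ n`. -/
theorem stmt1 (n : ℕ) (hn : Odd n) :
    (po n : ℤ) =
      ∑' j : ℕ, if Odd (j * (j + 1) / 2) ∧ j * (j + 1) / 2 ≤ n then
        (p ((n - j * (j + 1) / 2) / 2) : ℤ) else 0 := by
  have h := congrArg (coeff n) powerSeriesMk_card_odds_eq_tsum_mul
  rw [coeff_mk, coeff_tsum_X_pow_mul tendsto_intTri_atTop] at h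
  rw [po, h]
  refine tsum_congr fun j ↦ ?_
  rw [intTri_natCast, coeff_mk, Nat.Partition.card_restricted_even]
  by_cases ht : j * (j + 1) / 2 ≤ n
  · simp [ht, p, Nat.even_sub' ht, hn]
  · simp [ht]
end

section
/- For every integer n ≥ 0, the alternating sum p̄(n) + 2·∑_{j≥1} (−1)^j p̄(n − j²) (a finite sum, with the convention p̄(m) = 0 for m < 0) equals 1 if n = 0 and equals 0 if n ≥ 1. -/
open PowerSeries

/-- `pd n` is the number of partitions of `n` into distinct parts. -/
def pd (n : ℕ) : ℕ := (Nat.Partition.distincts n).card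

/-- `pbar n` is the number of overpartitions of `n`: pairs `(μ, λ)` with `μ` a partition
into distinct parts (the overlined parts), `λ` an arbitrary partition, `|μ| + |λ| = n`. -/
noncomputable def pbar (n : ℕ) : ℕ := ∑ k ∈ Finset.range (n + 1), pd k * p (n - k)

/-- `pbarZ` extends `pbar` to `ℤ` by the convention `pbar m = 0` for `m < 0`. -/
noncomputable def pbarZ (x : ℤ) : ℤ := if 0 ≤ x then (pbar x.toNat : ℤ) else 0



namespace OPartGauss

noncomputable section

open Finset

open scoped Classical

/-- A convenience constructor for the power series whose coefficients indicate a subset. -/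
def indicatorSeries (α : Type*) [Semiring α] (s : Set ℕ) : PowerSeries α :=
  PowerSeries.mk fun n => if n ∈ s then 1 else 0

variable {α : Type*}

theorem coeff_indicator (s : Set ℕ) [Semiring α] (n : ℕ) :
    coeff n (indicatorSeries α s) = if n ∈ s then 1 else 0 :=
  coeff_mk _ _

theorem coeff_indicator_pos (s : Set ℕ) [Semiring α] (n : ℕ) (h : n ∈ s) :
    coeff n (indicatorSeries α s) = 1 := by rw [coeff_indicator, if_pos h]

theorem coeff_indicator_neg (s : Set ℕ) [Semiring α] (n : ℕ) (h : n ∉ s) :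
    coeff n (indicatorSeries α s) = 0 := by rw [coeff_indicator, if_neg h]

theorem constantCoeff_indicator (s : Set ℕ) [Semiring α] :
    constantCoeff (indicatorSeries α s) = if 0 ∈ s then 1 else 0 :=
  rfl

theorem two_series (i : ℕ) [Semiring α] :
    1 + (X : PowerSeries α) ^ i.succ = indicatorSeries α {0, i.succ} := by
  ext n
  simp only [coeff_indicator, coeff_one, coeff_X_pow, Set.mem_insert_iff, Set.mem_singleton_iff,
    map_add]
  cases' n with d
  · simp [(Nat.succ_ne_zero i).symm]
  · simp [Nat.succ_ne_zero d]

theorem num_series' [Field α] (i : ℕ) :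
    (1 - (X : PowerSeries α) ^ (i + 1))⁻¹ = indicatorSeries α {k | i + 1 ∣ k} := by
  rw [PowerSeries.inv_eq_iff_mul_eq_one]
  · ext n
    cases n with
    | zero => simp [mul_sub, zero_pow, constantCoeff_indicator]
    | succ n =>
      simp only [coeff_one, if_false, mul_sub, mul_one, coeff_indicator,
        LinearMap.map_sub, reduceCtorEq]
      simp_rw [coeff_mul, coeff_X_pow, coeff_indicator, @boole_mul _ _ _ _]
      simp only [← ite_and, sub_eq_iff_eq_add, zero_add]
      symm
      split_ifs with h
      · suffices #{a ∈ antidiagonal (n + 1) | i + 1 ∣ a.fst ∧ a.snd = i + 1} = 1 by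
          simp only [Set.mem_setOf_eq]; rw [card_filter] at this; convert congr_arg ((↑) : ℕ → α) this <;> norm_cast
        rw [card_eq_one]
        cases' h with p hp
        refine ⟨((i + 1) * (p - 1), i + 1), ?_⟩
        ext ⟨a₁, a₂⟩
        simp only [mem_filter, Prod.mk_inj, Finset.HasAntidiagonal.mem_antidiagonal, mem_singleton]
        constructor
        · rintro ⟨a_left, ⟨a, rfl⟩, rfl⟩
          refine ⟨?_, rfl⟩
          rw [Nat.mul_sub_left_distrib, ← hp, ← a_left, mul_one, Nat.add_sub_cancel]
        · rintro ⟨rfl, rfl⟩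
          match p with
          | 0 => rw [mul_zero] at hp; cases hp
          | p + 1 => rw [hp]; simp [mul_add]
      · suffices #{a ∈ antidiagonal (n + 1) | i + 1 ∣ a.fst ∧ a.snd = i + 1} = 0 by
          simp only [Set.mem_setOf_eq]; rw [card_filter] at this; convert congr_arg ((↑) : ℕ → α) this <;> norm_cast
        rw [card_eq_zero]
        apply eq_empty_of_forall_notMem
        simp only [Prod.forall, mem_filter, not_and, Finset.HasAntidiagonal.mem_antidiagonal]
        rintro _ h₁ h₂ ⟨a, rfl⟩ rfl
        apply h
        simp [← h₂]
  · simp [zero_pow]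

-- The main workhorse (copied from the Mathlib archive).
theorem partialGF_prop (α : Type*) [CommSemiring α] (n : ℕ) (s : Finset ℕ) (hs : ∀ i ∈ s, 0 < i)
    (c : ℕ → Set ℕ) (hc : ∀ i, i ∉ s → 0 ∈ c i) :
    #{p : n.Partition | (∀ j, p.parts.count j ∈ c j) ∧ ∀ j ∈ p.parts, j ∈ s} =
      coeff n (∏ i ∈ s, indicatorSeries α ((· * i) '' c i)) := by
  simp_rw [coeff_prod, coeff_indicator, prod_boole, sum_boole]
  apply congr_arg
  simp only [mem_univ, forall_true_left, not_and, not_forall, exists_prop,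
    Set.mem_image, not_exists]
  set φ : (a : Nat.Partition n) →
    a ∈ filter (fun p ↦ (∀ (j : ℕ), Multiset.count j p.parts ∈ c j) ∧ ∀ j ∈ p.parts, j ∈ s) univ →
    ℕ →₀ ℕ := fun p _ => {
      toFun := fun i => Multiset.count i p.parts • i
      support := Finset.filter (fun i => i ≠ 0) p.parts.toFinset
      mem_support_toFun := fun a => by
        simp only [smul_eq_mul, ne_eq, mul_eq_zero, Multiset.count_eq_zero]
        rw [not_or, not_not]
        simp only [Multiset.mem_toFinset, not_not, mem_filter] }
  refine Finset.card_bij φ ?_ ?_ ?_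
  · intro a ha
    simp only [φ, not_forall, not_exists, not_and, exists_prop, mem_filter]
    rw [mem_finsuppAntidiag]
    dsimp only [ne_eq, smul_eq_mul, id_eq, eq_mpr_eq_cast, le_eq_subset, Finsupp.coe_mk]
    simp only [mem_univ, forall_true_left, not_and, not_forall, exists_prop,
      mem_filter, true_and] at ha
    refine ⟨⟨?_, fun i ↦ ?_⟩, fun i _ ↦ ⟨a.parts.count i, ha.1 i, rfl⟩⟩
    · conv_rhs => simp [← a.parts_sum]
      rw [sum_multiset_count_of_subset _ s]
      · simp only [smul_eq_mul]
      · intro i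
        simp only [Multiset.mem_toFinset, not_not, mem_filter]
        apply ha.2
    · simp only [ne_eq, Multiset.mem_toFinset, not_not, mem_filter, and_imp]
      exact fun hi _ ↦ ha.2 i hi
  · intro p₁ hp₁ p₂ hp₂ h
    apply Nat.Partition.ext
    simp only [true_and, mem_univ, mem_filter] at hp₁ hp₂
    ext i
    simp only [φ, ne_eq, Multiset.mem_toFinset, not_not, smul_eq_mul, Finsupp.mk.injEq] at h
    by_cases hi : i = 0
    · rw [hi]
      rw [Multiset.count_eq_zero_of_notMem]
      · rw [Multiset.count_eq_zero_of_notMem]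
        intro a; exact Nat.lt_irrefl 0 (hs 0 (hp₂.2 0 a))
      intro a; exact Nat.lt_irrefl 0 (hs 0 (hp₁.2 0 a))
    · rw [← mul_left_inj' hi]
      rw [funext_iff] at h
      exact h.2 i
  · simp only [φ, mem_filter, mem_finsuppAntidiag, mem_univ, exists_prop, true_and, and_assoc]
    rintro f ⟨hf, hf₃, hf₄⟩
    have hf' : f ∈ finsuppAntidiag s n := mem_finsuppAntidiag.mpr ⟨hf, hf₃⟩
    simp only [mem_finsuppAntidiag] at hf'
    refine ⟨⟨∑ i ∈ s, Multiset.replicate (f i / i) i, ?_, ?_⟩, ?_, ?_, ?_⟩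
    · intro i hi
      simp only [exists_prop, Multiset.mem_sum, mem_map, Function.Embedding.coeFn_mk] at hi
      rcases hi with ⟨t, ht, z⟩
      apply hs
      rwa [Multiset.eq_of_mem_replicate z]
    · simp_rw [Multiset.sum_sum, Multiset.sum_replicate, Nat.nsmul_eq_mul]
      rw [← hf'.1]
      refine sum_congr rfl fun i hi => Nat.div_mul_cancel ?_
      rcases hf₄ i hi with ⟨w, _, hw₂⟩
      rw [← hw₂]
      exact dvd_mul_left _ _
    · intro i
      simp_rw [Multiset.count_sum', Multiset.count_replicate, sum_ite_eq']
      split_ifs with h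
      · rcases hf₄ i h with ⟨w, hw₁, hw₂⟩
        rwa [← hw₂, Nat.mul_div_cancel _ (hs i h)]
      · exact hc _ h
    · intro i hi
      rw [Multiset.mem_sum] at hi
      rcases hi with ⟨j, hj₁, hj₂⟩
      rwa [Multiset.eq_of_mem_replicate hj₂]
    · ext i
      simp_rw [Multiset.count_sum', Multiset.count_replicate, sum_ite_eq']
      simp only [ne_eq, Multiset.mem_toFinset, not_not, smul_eq_mul, ite_mul,
        zero_mul, Finsupp.coe_mk]
      split_ifs with h
      · apply Nat.div_mul_cancel
        rcases hf₄ i h with ⟨w, _, hw₂⟩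
        apply Dvd.intro_left _ hw₂
      · apply symm
        rw [← Finsupp.notMem_support_iff]
        exact notMem_mono hf'.2 h

theorem partialDistinctGF_prop [CommSemiring α] (n m : ℕ) :
    #{p : n.Partition |
        p.parts.Nodup ∧ ∀ j ∈ p.parts, j ∈ (range m).map ⟨Nat.succ, Nat.succ_injective⟩} =
      coeff (R := α) n (∏ i ∈ range m, (1 + (X : PowerSeries α) ^ (i + 1))) := by
  convert partialGF_prop α n
    ((range m).map ⟨Nat.succ, Nat.succ_injective⟩) _ (fun _ => {0, 1}) (fun _ _ => Or.inl rfl)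
    using 2
  · congr! with p
    rw [Multiset.nodup_iff_count_le_one]
    congr! 1 with i
    rcases Multiset.count i p.parts with (_ | _ | ms) <;> simp
  · simp_rw [Finset.prod_map, two_series]
    congr with i
    simp [Set.image_pair]
  · simp only [mem_map, Function.Embedding.coeFn_mk]
    rintro i ⟨_, _, rfl⟩
    apply Nat.succ_pos

/-- If `m` is big enough, the partial product counts distinct partitions. -/
theorem distinctGF_prop [Field α] (n m : ℕ) (h : n < m + 1) :
    (#(Nat.Partition.distincts n) : α) =
      coeff (R := α) n (∏ i ∈ range m, (1 + (X : PowerSeries α) ^ (i + 1))) := by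
  rw [← partialDistinctGF_prop, Nat.Partition.distincts]
  norm_cast
  congr with p
  apply (and_iff_left _).symm
  intro i hi
  have : i ≤ n := by
    simpa [p.parts_sum] using Multiset.single_le_sum (fun _ _ => Nat.zero_le _) _ hi
  simp only [exists_prop, mem_range, Function.Embedding.coeFn_mk, mem_map]
  refine ⟨i - 1, ?_, Nat.succ_pred_eq_of_pos (p.parts_pos hi)⟩
  rw [tsub_lt_iff_right (Nat.one_le_iff_ne_zero.mpr (p.parts_pos hi).ne')]
  exact lt_of_le_of_lt this h

/-- The analog for all partitions. -/
theorem partialAllGF_prop [Field α] (n m : ℕ) :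
    #{p : n.Partition | ∀ j ∈ p.parts, j ∈ (range m).map ⟨Nat.succ, Nat.succ_injective⟩} =
      coeff (R := α) n (∏ i ∈ range m, (1 - (X : PowerSeries α) ^ (i + 1))⁻¹) := by
  convert partialGF_prop α n
    ((range m).map ⟨Nat.succ, Nat.succ_injective⟩) _ (fun _ => Set.univ) (fun _ _ => trivial)
    using 2
  · congr
    simp only [true_and, forall_const, Set.mem_univ]
  · rw [Finset.prod_map]
    simp_rw [num_series']
    congr! 2 with x
    ext k
    constructor
    · rintro ⟨p, rfl⟩
      refine ⟨p, ⟨⟩, ?_⟩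
      apply mul_comm
    rintro ⟨a_w, -, rfl⟩
    apply Dvd.intro_left a_w rfl
  · simp only [mem_map, Function.Embedding.coeFn_mk]
    rintro i ⟨_, _, rfl⟩
    apply Nat.succ_pos

theorem allGF_prop [Field α] (n m : ℕ) (h : n < m + 1) :
    (Fintype.card (Nat.Partition n) : α) =
      coeff (R := α) n (∏ i ∈ range m, (1 - (X : PowerSeries α) ^ (i + 1))⁻¹) := by
  rw [← partialAllGF_prop]
  norm_cast
  rw [← Finset.card_univ]
  congr with p
  simp only [mem_filter, mem_univ, true_and, iff_true_intro trivial, true_iff]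
  intro i hi
  have : i ≤ n := by
    simpa [p.parts_sum] using Multiset.single_le_sum (fun _ _ => Nat.zero_le _) _ hi
  simp only [exists_prop, mem_range, Function.Embedding.coeFn_mk, mem_map]
  refine ⟨i - 1, ?_, Nat.succ_pred_eq_of_pos (p.parts_pos hi)⟩
  rw [tsub_lt_iff_right (Nat.one_le_iff_ne_zero.mpr (p.parts_pos hi).ne')]
  exact lt_of_le_of_lt this h


abbrev PS := PowerSeries ℚ

/-- `ee m = ∏_{k=1}^m (1 - X^{2k})`. -/
def ee (m : ℕ) : PS := ∏ k ∈ range m, (1 - (X : PS) ^ (2 * k + 2))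

/-- `eo m = ∏_{k=1}^m (1 - X^{2k-1})`. -/
def eo (m : ℕ) : PS := ∏ k ∈ range m, (1 - (X : PS) ^ (2 * k + 1))

lemma constCoeff_one_sub_pow (k : ℕ) (hk : k ≠ 0) :
    constantCoeff (1 - (X : PS) ^ k) = 1 := by
  simp [zero_pow hk]

lemma ee_constCoeff (m : ℕ) : constantCoeff (ee m) = 1 := by
  rw [ee, map_prod]
  rw [Finset.prod_eq_one]
  intro k _
  exact constCoeff_one_sub_pow _ (by omega)

lemma ee_ne (m : ℕ) : constantCoeff (ee m) ≠ 0 := by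
  rw [ee_constCoeff]; norm_num

lemma ee_mul_inv (m : ℕ) : ee m * (ee m)⁻¹ = 1 :=
  PowerSeries.mul_inv_cancel _ (ee_ne m)

lemma ee_zero : ee 0 = 1 := by simp [ee]

lemma ee_succ (m : ℕ) : ee (m + 1) = ee m * (1 - (X : PS) ^ (2 * m + 2)) := by
  rw [ee, ee, prod_range_succ]

lemma eo_succ (m : ℕ) : eo (m + 1) = eo m * (1 - (X : PS) ^ (2 * m + 1)) := by
  rw [eo, eo, prod_range_succ]

lemma mul_right_cancel_unit {A B u : PS} (hu : constantCoeff u ≠ 0) (h : A * u = B * u) :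
    A = B := by
  have h2 := congrArg (· * u⁻¹) h
  simpa [mul_assoc, PowerSeries.mul_inv_cancel _ hu] using h2

/-- Gaussian binomial coefficient (in `X^2`), as a power series over `ℚ`. -/
def gb (M r : ℕ) : PS := if r ≤ M then ee M * (ee r)⁻¹ * (ee (M - r))⁻¹ else 0

lemma gb_zero' (M : ℕ) : gb M 0 = 1 := by
  rw [gb, if_pos (Nat.zero_le M), Nat.sub_zero, ee_zero, inv_one, mul_one, ee_mul_inv]

lemma gb_self (M : ℕ) : gb M M = 1 := by
  rw [gb, if_pos le_rfl, Nat.sub_self, ee_zero, inv_one, mul_one, ee_mul_inv]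

lemma gb_of_gt {M r : ℕ} (h : M < r) : gb M r = 0 := by
  rw [gb, if_neg (by omega)]

/-- First q-Pascal identity. -/
lemma gb_pascal1 (M r : ℕ) :
    gb (M + 1) (r + 1) = gb M (r + 1) + (X : PS) ^ (2 * (M - r)) * gb M r := by
  rcases lt_trichotomy r M with h | rfl | h
  · -- main case : r + 1 ≤ M
    apply mul_right_cancel_unit (u := ee (r + 1) * ee (M - r)) (by
      rw [map_mul, ee_constCoeff, ee_constCoeff]; norm_num)
    have hr1 : r + 1 ≤ M + 1 := by omega
    rw [gb, if_pos hr1, gb, if_pos (by omega : r + 1 ≤ M), gb, if_pos (by omega : r ≤ M)]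
    have e1 : M + 1 - (r + 1) = M - r := by omega
    have e3 : ee (M - r) = ee (M - (r + 1)) * (1 - (X : PS) ^ (2 * (M - r))) := by
      have h2 : M - r = (M - (r + 1)) + 1 := by omega
      rw [h2, ee_succ]
      congr 2 <;> omega
    have e4 : ee (r + 1) = ee r * (1 - (X : PS) ^ (2 * r + 2)) := ee_succ r
    rw [e1]
    have L : ee (M + 1) * (ee (r + 1))⁻¹ * (ee (M - r))⁻¹ * (ee (r + 1) * ee (M - r)) =
        ee (M + 1) := by
      calc ee (M + 1) * (ee (r + 1))⁻¹ * (ee (M - r))⁻¹ * (ee (r + 1) * ee (M - r))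
          = ee (M + 1) * (ee (r + 1) * (ee (r + 1))⁻¹) * (ee (M - r) * (ee (M - r))⁻¹) := by ring
        _ = ee (M + 1) := by rw [ee_mul_inv, ee_mul_inv, mul_one, mul_one]
    have R1 : ee M * (ee (r + 1))⁻¹ * (ee (M - (r + 1)))⁻¹ * (ee (r + 1) * ee (M - r)) =
        ee M * (1 - (X : PS) ^ (2 * (M - r))) := by
      calc ee M * (ee (r + 1))⁻¹ * (ee (M - (r + 1)))⁻¹ * (ee (r + 1) * ee (M - r))
          = ee M * (ee (r + 1))⁻¹ * (ee (M - (r + 1)))⁻¹ *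
              (ee (r + 1) * (ee (M - (r + 1)) * (1 - (X : PS) ^ (2 * (M - r))))) := by rw [← e3]
        _ = ee M * (ee (r + 1) * (ee (r + 1))⁻¹) * (ee (M - (r + 1)) * (ee (M - (r + 1)))⁻¹) *
              (1 - (X : PS) ^ (2 * (M - r))) := by ring
        _ = ee M * (1 - (X : PS) ^ (2 * (M - r))) := by
            rw [ee_mul_inv, ee_mul_inv, mul_one, mul_one]
    have R2 : ee M * (ee r)⁻¹ * (ee (M - r))⁻¹ * (ee (r + 1) * ee (M - r)) =
        ee M * (1 - (X : PS) ^ (2 * r + 2)) := by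
      calc ee M * (ee r)⁻¹ * (ee (M - r))⁻¹ * (ee (r + 1) * ee (M - r))
          = ee M * (ee r)⁻¹ * (ee (M - r))⁻¹ *
              ((ee r * (1 - (X : PS) ^ (2 * r + 2))) * ee (M - r)) := by rw [← e4]
        _ = ee M * (ee r * (ee r)⁻¹) * (ee (M - r) * (ee (M - r))⁻¹) *
              (1 - (X : PS) ^ (2 * r + 2)) := by ring
        _ = ee M * (1 - (X : PS) ^ (2 * r + 2)) := by
            rw [ee_mul_inv, ee_mul_inv, mul_one, mul_one]
    rw [add_mul, L, R1, mul_assoc, R2, ee_succ]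
    have hX : (X : PS) ^ (2 * (M - r)) * (X : PS) ^ (2 * r + 2) = (X : PS) ^ (2 * M + 2) := by
      rw [← pow_add]
      congr 1
      omega
    linear_combination (ee M) * hX
  · -- r = M
    rw [gb_self, gb_of_gt (by omega), Nat.sub_self, mul_zero, pow_zero, gb_self, zero_add, one_mul]
  · -- r > M
    rw [gb_of_gt (by omega), gb_of_gt (by omega), gb_of_gt h, mul_zero, add_zero]

/-- Second q-Pascal identity. -/
lemma gb_pascal2 (M r : ℕ) :
    gb (M + 1) (r + 1) = gb M r + (X : PS) ^ (2 * r + 2) * gb M (r + 1) := by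
  rcases lt_trichotomy r M with h | rfl | h
  · apply mul_right_cancel_unit (u := ee (r + 1) * ee (M - r)) (by
      rw [map_mul, ee_constCoeff, ee_constCoeff]; norm_num)
    have hr1 : r + 1 ≤ M + 1 := by omega
    rw [gb, if_pos hr1, gb, if_pos (by omega : r ≤ M), gb, if_pos (by omega : r + 1 ≤ M)]
    have e1 : M + 1 - (r + 1) = M - r := by omega
    have e3 : ee (M - r) = ee (M - (r + 1)) * (1 - (X : PS) ^ (2 * (M - r))) := by
      have h2 : M - r = (M - (r + 1)) + 1 := by omega
      rw [h2, ee_succ]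
      congr 2 <;> omega
    have e4 : ee (r + 1) = ee r * (1 - (X : PS) ^ (2 * r + 2)) := ee_succ r
    rw [e1]
    have L : ee (M + 1) * (ee (r + 1))⁻¹ * (ee (M - r))⁻¹ * (ee (r + 1) * ee (M - r)) =
        ee (M + 1) := by
      calc ee (M + 1) * (ee (r + 1))⁻¹ * (ee (M - r))⁻¹ * (ee (r + 1) * ee (M - r))
          = ee (M + 1) * (ee (r + 1) * (ee (r + 1))⁻¹) * (ee (M - r) * (ee (M - r))⁻¹) := by ring
        _ = ee (M + 1) := by rw [ee_mul_inv, ee_mul_inv, mul_one, mul_one]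
    have R1 : ee M * (ee r)⁻¹ * (ee (M - r))⁻¹ * (ee (r + 1) * ee (M - r)) =
        ee M * (1 - (X : PS) ^ (2 * r + 2)) := by
      calc ee M * (ee r)⁻¹ * (ee (M - r))⁻¹ * (ee (r + 1) * ee (M - r))
          = ee M * (ee r)⁻¹ * (ee (M - r))⁻¹ *
              ((ee r * (1 - (X : PS) ^ (2 * r + 2))) * ee (M - r)) := by rw [← e4]
        _ = ee M * (ee r * (ee r)⁻¹) * (ee (M - r) * (ee (M - r))⁻¹) *
              (1 - (X : PS) ^ (2 * r + 2)) := by ring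
        _ = ee M * (1 - (X : PS) ^ (2 * r + 2)) := by
            rw [ee_mul_inv, ee_mul_inv, mul_one, mul_one]
    have R2 : ee M * (ee (r + 1))⁻¹ * (ee (M - (r + 1)))⁻¹ * (ee (r + 1) * ee (M - r)) =
        ee M * (1 - (X : PS) ^ (2 * (M - r))) := by
      calc ee M * (ee (r + 1))⁻¹ * (ee (M - (r + 1)))⁻¹ * (ee (r + 1) * ee (M - r))
          = ee M * (ee (r + 1))⁻¹ * (ee (M - (r + 1)))⁻¹ *
              (ee (r + 1) * (ee (M - (r + 1)) * (1 - (X : PS) ^ (2 * (M - r))))) := by rw [← e3]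
        _ = ee M * (ee (r + 1) * (ee (r + 1))⁻¹) * (ee (M - (r + 1)) * (ee (M - (r + 1)))⁻¹) *
              (1 - (X : PS) ^ (2 * (M - r))) := by ring
        _ = ee M * (1 - (X : PS) ^ (2 * (M - r))) := by
            rw [ee_mul_inv, ee_mul_inv, mul_one, mul_one]
    rw [add_mul, L, R1, mul_assoc, R2, ee_succ]
    have hX : (X : PS) ^ (2 * r + 2) * (X : PS) ^ (2 * (M - r)) = (X : PS) ^ (2 * M + 2) := by
      rw [← pow_add]
      congr 1
      omega
    linear_combination (ee M) * hX
  · rw [gb_self, gb_self, gb_of_gt (by omega), mul_zero, add_zero]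
  · rw [gb_of_gt (show M < r + 1 by omega), gb_of_gt (show M + 1 < r + 1 by omega),
        gb_of_gt (show M < r by omega), mul_zero, add_zero]

/-! ### The alternating sum and the telescoping induction -/

lemma neg_one_pow_congr {a b : ℕ} (h : a % 2 = b % 2) : ((-1 : PS)) ^ a = (-1) ^ b := by
  rcases Nat.even_or_odd a with ha | ha
  · rw [ha.neg_one_pow, (Nat.even_iff.2 (by rw [← Nat.even_iff.1 ha]; omega) : Even b).neg_one_pow]
  · rw [ha.neg_one_pow, (Nat.odd_iff.2 (by rw [← Nat.odd_iff.1 ha]; omega) : Odd b).neg_one_pow]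

/-- `w r N = (r - N)^2`. -/
def w (r N : ℕ) : ℕ := (((r : ℤ) - (N : ℤ)).natAbs) ^ 2

lemma w_succ_succ (r N : ℕ) : w (r + 1) (N + 1) = w r N := by
  unfold w
  congr 2
  omega

lemma w_zero (N : ℕ) : w 0 N = N ^ 2 := by
  unfold w
  congr 1
  omega

lemma w_self_add (N j : ℕ) : w (N + j) N = j ^ 2 := by
  unfold w
  congr 1
  omega

lemma w_lower (N i : ℕ) (h : i < N) : w (N - 1 - i) N = (i + 1) ^ 2 := by
  unfold w
  congr 1
  omega

lemma wA (r N : ℕ) (h : r ≤ 2 * N + 1) :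
    w r N + 2 * (2 * N + 1 - r) = w r (N + 1) + (2 * N + 1) := by
  rcases le_or_gt r N with h' | h'
  · obtain ⟨t, rfl⟩ : ∃ t, N = r + t := ⟨N - r, by omega⟩
    have h1 : w r (r + t) = t ^ 2 := by unfold w; congr 1; omega
    have h2 : w r (r + t + 1) = (t + 1) ^ 2 := by unfold w; congr 1; omega
    have h3 : 2 * (r + t) + 1 - r = r + 2 * t + 1 := by omega
    rw [h1, h2, h3]
    ring
  · obtain ⟨s, rfl⟩ : ∃ s, r = N + 1 + s := ⟨r - N - 1, by omega⟩
    obtain ⟨u, rfl⟩ : ∃ u, N = s + u := ⟨N - s, by omega⟩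
    have h1 : w (s + u + 1 + s) (s + u) = (s + 1) ^ 2 := by unfold w; congr 1; omega
    have h2 : w (s + u + 1 + s) (s + u + 1) = s ^ 2 := by unfold w; congr 1; omega
    have h3 : 2 * (s + u) + 1 - (s + u + 1 + s) = u := by omega
    rw [h1, h2, h3]
    ring
lemma wB (r N : ℕ) : w r (N + 1) + 2 * r = w r N + (2 * N + 1) := by
  rcases le_or_gt r N with h' | h'
  · obtain ⟨t, rfl⟩ : ∃ t, N = r + t := ⟨N - r, by omega⟩
    have h1 : w r (r + t) = t ^ 2 := by unfold w; congr 1; omega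
    have h2 : w r (r + t + 1) = (t + 1) ^ 2 := by unfold w; congr 1; omega
    rw [h1, h2]
    ring
  · obtain ⟨s, rfl⟩ : ∃ s, r = N + 1 + s := ⟨r - N - 1, by omega⟩
    have h1 : w (N + 1 + s) N = (s + 1) ^ 2 := by unfold w; congr 1; omega
    have h2 : w (N + 1 + s) (N + 1) = s ^ 2 := by unfold w; congr 1; omega
    rw [h1, h2]
    ring

/-- `Ssum N = ∑_{j=-N}^{N} (-1)^j X^{j²} gb(2N, N+j)`. -/
def Ssum (N : ℕ) : PS :=
  ∑ r ∈ range (2 * N + 1), (-1 : PS) ^ (N + r) * ((X : PS) ^ (w r N) * gb (2 * N) r)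

def Tsum (N : ℕ) : PS :=
  ∑ r ∈ range (2 * N + 2), (-1 : PS) ^ (N + r) * ((X : PS) ^ (w r (N + 1)) * gb (2 * N + 1) r)

lemma term1 (N i : ℕ) (h : i ≤ 2 * N + 1) :
    (-1 : PS) ^ (N + 1 + (i + 1)) * ((X : PS) ^ (w (i + 1) (N + 1)) * gb (2 * (N + 1)) (i + 1)) =
      -((-1 : PS) ^ (N + (i + 1)) * ((X : PS) ^ (w (i + 1) (N + 1)) * gb (2 * N + 1) (i + 1))) +
        (X : PS) ^ (2 * N + 1) *
          ((-1 : PS) ^ (N + i) * ((X : PS) ^ (w i (N + 1)) * gb (2 * N + 1) i)) := by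
  have hp : gb (2 * (N + 1)) (i + 1) =
      gb (2 * N + 1) (i + 1) + (X : PS) ^ (2 * ((2 * N + 1) - i)) * gb (2 * N + 1) i := by
    have h2 : 2 * (N + 1) = (2 * N + 1) + 1 := by ring
    rw [h2, gb_pascal1]
  rw [hp, w_succ_succ]
  have hX : (X : PS) ^ (w i N) * (X : PS) ^ (2 * ((2 * N + 1) - i)) =
      (X : PS) ^ (2 * N + 1) * (X : PS) ^ (w i (N + 1)) := by
    rw [← pow_add, ← pow_add]
    congr 1
    have := wA i N h
    omega
  have hs1 : (-1 : PS) ^ (N + 1 + (i + 1)) = (-1) ^ (N + i) := neg_one_pow_congr (by omega)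
  have hs2 : (-1 : PS) ^ (N + (i + 1)) = (-1) ^ (N + i) * (-1) := by
    rw [← pow_succ]
    exact neg_one_pow_congr (by omega)
  rw [hs1, hs2]
  linear_combination ((-1 : PS) ^ (N + i) * gb (2 * N + 1) i) * hX

lemma step1 (N : ℕ) : Ssum (N + 1) = ((X : PS) ^ (2 * N + 1) - 1) * Tsum N := by
  have hrange : 2 * (N + 1) + 1 = (2 * N + 2) + 1 := by ring
  unfold Ssum
  rw [hrange, Finset.sum_range_succ']
  have hcongr : ∀ i ∈ range (2 * N + 2),
      (-1 : PS) ^ (N + 1 + (i + 1)) * ((X : PS) ^ (w (i + 1) (N + 1)) * gb (2 * (N + 1)) (i + 1)) =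
        -((-1 : PS) ^ (N + (i + 1)) * ((X : PS) ^ (w (i + 1) (N + 1)) * gb (2 * N + 1) (i + 1))) +
          (X : PS) ^ (2 * N + 1) *
            ((-1 : PS) ^ (N + i) * ((X : PS) ^ (w i (N + 1)) * gb (2 * N + 1) i)) := by
    intro i hi
    exact term1 N i (by simpa using Nat.lt_succ_iff.mp (mem_range.mp hi))
  rw [Finset.sum_congr rfl hcongr, Finset.sum_add_distrib, Finset.sum_neg_distrib,
    ← Finset.mul_sum]
  have hshift : ∑ i ∈ range (2 * N + 2),
      (-1 : PS) ^ (N + (i + 1)) * ((X : PS) ^ (w (i + 1) (N + 1)) * gb (2 * N + 1) (i + 1)) =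
      Tsum N - (-1 : PS) ^ (N + 0) * ((X : PS) ^ (w 0 (N + 1)) * gb (2 * N + 1) 0) := by
    have h1 := Finset.sum_range_succ'
      (fun r => (-1 : PS) ^ (N + r) * ((X : PS) ^ (w r (N + 1)) * gb (2 * N + 1) r)) (2 * N + 2)
    have h2 : ∑ r ∈ range (2 * N + 2 + 1),
        (-1 : PS) ^ (N + r) * ((X : PS) ^ (w r (N + 1)) * gb (2 * N + 1) r) = Tsum N := by
      rw [Finset.sum_range_succ, gb_of_gt (by omega)]
      unfold Tsum
      simp
    rw [h2] at h1
    linear_combination -h1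
  rw [hshift]
  unfold Tsum
  rw [w_zero (N + 1), gb_zero' (2 * N + 1), gb_zero' (2 * (N + 1))]
  ring

lemma term2 (N i : ℕ) :
    (-1 : PS) ^ (N + (i + 1)) * ((X : PS) ^ (w (i + 1) (N + 1)) * gb (2 * N + 1) (i + 1)) =
      -((-1 : PS) ^ (N + i) * ((X : PS) ^ (w i N) * gb (2 * N) i)) +
        (X : PS) ^ (2 * N + 1) *
          ((-1 : PS) ^ (N + (i + 1)) * ((X : PS) ^ (w (i + 1) N) * gb (2 * N) (i + 1))) := by
  have hp : gb (2 * N + 1) (i + 1) =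
      gb (2 * N) i + (X : PS) ^ (2 * i + 2) * gb (2 * N) (i + 1) := gb_pascal2 (2 * N) i
  rw [hp]
  have hw1 : w (i + 1) (N + 1) = w i N := w_succ_succ i N
  rw [hw1]
  have hX : (X : PS) ^ (w i N) * (X : PS) ^ (2 * i + 2) =
      (X : PS) ^ (2 * N + 1) * (X : PS) ^ (w (i + 1) N) := by
    rw [← pow_add, ← pow_add]
    congr 1
    have := wB (i + 1) N
    have h2 : w (i + 1) (N + 1) = w i N := w_succ_succ i N
    omega
  have hs2 : (-1 : PS) ^ (N + (i + 1)) = (-1) ^ (N + i) * (-1) := by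
    rw [← pow_succ]
    exact neg_one_pow_congr (by omega)
  rw [hs2]
  linear_combination (-((-1 : PS) ^ (N + i)) * gb (2 * N) (i + 1)) * hX

lemma step2 (N : ℕ) : Tsum N = ((X : PS) ^ (2 * N + 1) - 1) * Ssum N := by
  unfold Tsum
  rw [Finset.sum_range_succ']
  have hcongr : ∀ i ∈ range (2 * N + 1),
      (-1 : PS) ^ (N + (i + 1)) * ((X : PS) ^ (w (i + 1) (N + 1)) * gb (2 * N + 1) (i + 1)) =
        -((-1 : PS) ^ (N + i) * ((X : PS) ^ (w i N) * gb (2 * N) i)) +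
          (X : PS) ^ (2 * N + 1) *
            ((-1 : PS) ^ (N + (i + 1)) * ((X : PS) ^ (w (i + 1) N) * gb (2 * N) (i + 1))) := by
    intro i _
    exact term2 N i
  rw [Finset.sum_congr rfl hcongr, Finset.sum_add_distrib, Finset.sum_neg_distrib,
    ← Finset.mul_sum]
  have hshift : ∑ i ∈ range (2 * N + 1),
      (-1 : PS) ^ (N + (i + 1)) * ((X : PS) ^ (w (i + 1) N) * gb (2 * N) (i + 1)) =
      Ssum N - (-1 : PS) ^ (N + 0) * ((X : PS) ^ (w 0 N) * gb (2 * N) 0) := by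
    have h1 := Finset.sum_range_succ'
      (fun r => (-1 : PS) ^ (N + r) * ((X : PS) ^ (w r N) * gb (2 * N) r)) (2 * N + 1)
    have h2 : ∑ r ∈ range (2 * N + 1 + 1),
        (-1 : PS) ^ (N + r) * ((X : PS) ^ (w r N) * gb (2 * N) r) = Ssum N := by
      rw [Finset.sum_range_succ, gb_of_gt (by omega)]
      unfold Ssum
      simp
    rw [h2] at h1
    linear_combination -h1
  rw [hshift]
  unfold Ssum
  rw [w_zero N, w_zero (N + 1), gb_zero' (2 * N), gb_zero' (2 * N + 1)]
  have hX : (X : PS) ^ (2 * N + 1) * (X : PS) ^ (N ^ 2) = (X : PS) ^ ((N + 1) ^ 2) := by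
    rw [← pow_add]
    congr 1
    ring
  linear_combination (-(-1 : PS) ^ (N + 0)) * hX
lemma gauss_sq (N : ℕ) : Ssum N = (eo N) ^ 2 := by
  induction N with
  | zero =>
    unfold Ssum eo
    simp [w_zero, gb_zero']
  | succ N ih =>
    rw [step1, step2, ih, eo_succ]
    ring

/-- The theta partial sum. -/
def theta (N : ℕ) : PS := ∑ r ∈ range (2 * N + 1), (-1 : PS) ^ (N + r) * (X : PS) ^ (w r N)

lemma theta_eq (N : ℕ) :
    theta N = 1 + 2 * ∑ j ∈ range N, (-1 : PS) ^ (j + 1) * (X : PS) ^ ((j + 1) ^ 2) := by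
  unfold theta
  rw [range_eq_Ico, ← Finset.sum_Ico_consecutive _ (Nat.zero_le N) (by omega : N ≤ 2 * N + 1)]
  have hfirst : ∑ r ∈ Finset.Ico 0 N, (-1 : PS) ^ (N + r) * (X : PS) ^ (w r N) =
      ∑ j ∈ range N, (-1 : PS) ^ (j + 1) * (X : PS) ^ ((j + 1) ^ 2) := by
    rw [← range_eq_Ico, ← Finset.sum_range_reflect]
    apply Finset.sum_congr rfl
    intro i hi
    have hi' : i < N := mem_range.mp hi
    rw [w_lower N i hi', neg_one_pow_congr (show (N + (N - 1 - i)) % 2 = (i + 1) % 2 by omega)]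
  have hsecond : ∑ r ∈ Finset.Ico N (2 * N + 1), (-1 : PS) ^ (N + r) * (X : PS) ^ (w r N) =
      1 + ∑ j ∈ range N, (-1 : PS) ^ (j + 1) * (X : PS) ^ ((j + 1) ^ 2) := by
    rw [Finset.sum_Ico_eq_sum_range]
    have hr : 2 * N + 1 - N = N + 1 := by omega
    rw [hr]
    have hcongr : ∀ i ∈ range (N + 1),
        (-1 : PS) ^ (N + (N + i)) * (X : PS) ^ (w (N + i) N) =
          (-1 : PS) ^ i * (X : PS) ^ (i ^ 2) := by
      intro i _
      rw [w_self_add, neg_one_pow_congr (show (N + (N + i)) % 2 = i % 2 by omega)]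
    rw [Finset.sum_congr rfl hcongr, Finset.sum_range_succ']
    have h00 : ((0 : ℕ) ^ 2) = 0 := by norm_num
    rw [h00, pow_zero, pow_zero, one_mul, add_comm]
  rw [hfirst, hsecond]
  ring


/-! ### Divisibility / truncation arguments -/

lemma prod_sub_one_dvd {s : Finset ℕ} {a : ℕ → ℕ} {c : ℕ} (h : ∀ k ∈ s, c ≤ a k) :
    (X : PS) ^ c ∣ (∏ k ∈ s, (1 - (X : PS) ^ (a k))) - 1 := by
  induction s using Finset.cons_induction with
  | empty => simp
  | cons k s hk ih =>
    rw [Finset.prod_cons]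
    have h1 : (1 - (X : PS) ^ (a k)) * (∏ x ∈ s, (1 - (X : PS) ^ (a x))) - 1 =
        ((∏ x ∈ s, (1 - (X : PS) ^ (a x))) - 1) -
          (X : PS) ^ (a k) * ∏ x ∈ s, (1 - (X : PS) ^ (a x)) := by ring
    rw [h1]
    apply dvd_sub
    · exact ih fun x hx => h x (Finset.mem_cons_of_mem hx)
    · exact Dvd.dvd.mul_right (pow_dvd_pow _ (h k (Finset.mem_cons_self k s))) _

lemma ee_split (a b : ℕ) (h : a ≤ b) :
    ee b = ee a * ∏ k ∈ Finset.Ico a b, (1 - (X : PS) ^ (2 * k + 2)) := by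
  rw [ee, ee, range_eq_Ico, ← Finset.prod_Ico_consecutive _ (Nat.zero_le a) h, range_eq_Ico]

lemma gb_symm (M r : ℕ) (h : r ≤ M) : gb M r = gb M (M - r) := by
  rw [gb, gb, if_pos h, if_pos (by omega), show M - (M - r) = r by omega]
  ring

lemma gb_mul_ee_eq (N r : ℕ) (h : r ≤ N) :
    gb (2 * N) r * ee N = (∏ k ∈ Finset.Ico (2 * N - r) (2 * N), (1 - (X : PS) ^ (2 * k + 2))) *
      ∏ k ∈ Finset.Ico r N, (1 - (X : PS) ^ (2 * k + 2)) := by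
  rw [gb, if_pos (by omega : r ≤ 2 * N)]
  rw [ee_split (2 * N - r) (2 * N) (by omega), ee_split r N h]
  calc ee (2 * N - r) * (∏ k ∈ Finset.Ico (2 * N - r) (2 * N), (1 - (X : PS) ^ (2 * k + 2))) *
        (ee r)⁻¹ * (ee (2 * N - r))⁻¹ *
        (ee r * ∏ k ∈ Finset.Ico r N, (1 - (X : PS) ^ (2 * k + 2)))
      = (ee (2 * N - r) * (ee (2 * N - r))⁻¹) * (ee r * (ee r)⁻¹) *
          ((∏ k ∈ Finset.Ico (2 * N - r) (2 * N), (1 - (X : PS) ^ (2 * k + 2))) *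
            ∏ k ∈ Finset.Ico r N, (1 - (X : PS) ^ (2 * k + 2))) := by ring
    _ = _ := by rw [ee_mul_inv, ee_mul_inv, one_mul, one_mul]

lemma gb_ee_close (N r : ℕ) (h : r ≤ N) :
    (X : PS) ^ (2 * r + 2) ∣ gb (2 * N) r * ee N - 1 := by
  rw [gb_mul_ee_eq N r h]
  have hdisj : Disjoint (Finset.Ico (2 * N - r) (2 * N)) (Finset.Ico r N) := by
    rw [Finset.disjoint_left]
    intro x hx hx'
    rw [Finset.mem_Ico] at hx hx'
    omega
  rw [← Finset.prod_union hdisj]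
  apply prod_sub_one_dvd
  intro k hk
  rw [Finset.mem_union, Finset.mem_Ico, Finset.mem_Ico] at hk
  omega

lemma gb_ee_close' (N r : ℕ) (hr : r ≤ 2 * N) :
    (X : PS) ^ (2 * min r (2 * N - r) + 2) ∣ gb (2 * N) r * ee N - 1 := by
  rcases le_or_gt r N with h | h
  · exact dvd_trans (pow_dvd_pow _ (by omega)) (gb_ee_close N r h)
  · rw [gb_symm _ _ hr]
    exact dvd_trans (pow_dvd_pow _ (by omega)) (gb_ee_close N (2 * N - r) (by omega))

lemma w_eq_of_le {r N : ℕ} (h : r ≤ N) : w r N = (N - r) ^ 2 := by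
  unfold w
  congr 1
  omega

lemma w_eq_of_ge {r N : ℕ} (h : N ≤ r) : w r N = (r - N) ^ 2 := by
  unfold w
  congr 1
  omega

lemma key_dvd (n N r : ℕ) (hN : n ≤ N) (hr : r ≤ 2 * N) :
    (X : PS) ^ (n + 1) ∣ (X : PS) ^ (w r N) * (gb (2 * N) r * ee N - 1) := by
  rcases le_or_gt (n + 1) (w r N) with h | h
  · exact dvd_mul_of_dvd_left (pow_dvd_pow _ h) _
  · have hkey := gb_ee_close' N r hr
    have hle : n + 1 - w r N ≤ 2 * min r (2 * N - r) + 2 := by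
      rcases le_or_gt r N with h' | h'
      · rw [w_eq_of_le h'] at h ⊢
        have ht : N - r ≤ (N - r) ^ 2 + 1 := by
          rcases Nat.eq_zero_or_pos (N - r) with h0 | h0
          · omega
          · have := Nat.le_self_pow (two_ne_zero) (N - r)
            omega
        omega
      · rw [w_eq_of_ge (by omega)] at h ⊢
        have h2s : 2 * (r - N) ≤ (r - N) ^ 2 + 1 := by
          have h0 : 1 ≤ r - N := by omega
          nlinarith [sq_nonneg (r - N - 1), Nat.sub_add_cancel h0]
        omega
    have h1 : (X : PS) ^ (n + 1 - w r N) ∣ gb (2 * N) r * ee N - 1 :=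
      dvd_trans (pow_dvd_pow _ hle) hkey
    have h2 : (X : PS) ^ (n + 1) = (X : PS) ^ (w r N) * (X : PS) ^ (n + 1 - w r N) := by
      rw [← pow_add]
      congr 1
      omega
    rw [h2]
    exact mul_dvd_mul_left _ h1

lemma Ssum_ee_theta (n N : ℕ) (hN : n ≤ N) :
    (X : PS) ^ (n + 1) ∣ Ssum N * ee N - theta N := by
  unfold Ssum theta
  rw [Finset.sum_mul, ← Finset.sum_sub_distrib]
  apply Finset.dvd_sum
  intro r hr
  have hr' : r ≤ 2 * N := by
    have := mem_range.mp hr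
    omega
  have key := key_dvd n N r hN hr'
  have hterm : (-1 : PS) ^ (N + r) * ((X : PS) ^ (w r N) * gb (2 * N) r) * ee N -
      (-1 : PS) ^ (N + r) * (X : PS) ^ (w r N) =
      (-1 : PS) ^ (N + r) * ((X : PS) ^ (w r N) * (gb (2 * N) r * ee N - 1)) := by ring
  rw [hterm]
  exact Dvd.dvd.mul_left key _

/-! ### The counting generating functions -/

def Ee (N : ℕ) : PS := ∏ i ∈ range (2 * N), (1 - (X : PS) ^ (i + 1))

def Dd (N : ℕ) : PS := ∏ i ∈ range (2 * N), (1 + (X : PS) ^ (i + 1))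

def Ff (N : ℕ) : PS := ∏ i ∈ range (2 * N), (1 - (X : PS) ^ (i + 1))⁻¹

lemma Ee_eq (N : ℕ) : Ee N = eo N * ee N := by
  induction N with
  | zero => simp [Ee, eo, ee]
  | succ N ih =>
    unfold Ee at ih ⊢
    have h2 : 2 * (N + 1) = (2 * N + 1) + 1 := by ring
    rw [h2, prod_range_succ, prod_range_succ, ih, eo_succ, ee_succ,
      show 2 * N + 1 + 1 = 2 * N + 2 by omega]
    ring

lemma Dd_mul_Ee (N : ℕ) : Dd N * Ee N = ee (2 * N) := by
  unfold Dd Ee ee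
  rw [← Finset.prod_mul_distrib]
  apply Finset.prod_congr rfl
  intro i _
  have h2 : (X : PS) ^ (2 * i + 2) = ((X : PS) ^ (i + 1)) ^ 2 := by
    rw [← pow_mul]
    congr 1
    ring
  rw [h2]
  ring

lemma Ff_mul_Ee (N : ℕ) : Ff N * Ee N = 1 := by
  unfold Ff Ee
  rw [← Finset.prod_mul_distrib]
  apply Finset.prod_eq_one
  intro i _
  exact PowerSeries.inv_mul_cancel _ (by
    rw [constCoeff_one_sub_pow (i + 1) (by omega)]
    norm_num)

lemma main_dvd (n : ℕ) :
    (X : PS) ^ (n + 1) ∣ theta (n + 1) * (Dd (n + 1) * Ff (n + 1)) - 1 := by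
  set N := n + 1 with hN
  have hth : (X : PS) ^ (n + 1) ∣ (eo N) ^ 2 * ee N - theta N := by
    have h := Ssum_ee_theta n N (by omega)
    rwa [gauss_sq] at h
  have hpsi : (X : PS) ^ (n + 1) ∣
      (∏ k ∈ Finset.Ico N (2 * N), (1 - (X : PS) ^ (2 * k + 2))) - 1 := by
    apply prod_sub_one_dvd
    intro k hk
    have := Finset.mem_Ico.mp hk
    omega
  have hkey : (eo N) ^ 2 * ee N * (Dd N * Ff N) =
      ∏ k ∈ Finset.Ico N (2 * N), (1 - (X : PS) ^ (2 * k + 2)) := by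
    have hsplit : ee (2 * N) =
        ee N * ∏ k ∈ Finset.Ico N (2 * N), (1 - (X : PS) ^ (2 * k + 2)) :=
      ee_split N (2 * N) (by omega)
    calc (eo N) ^ 2 * ee N * (Dd N * Ff N)
        = eo N * ((eo N * ee N) * Dd N) * Ff N := by ring
      _ = eo N * (Ee N * Dd N) * Ff N := by rw [Ee_eq]
      _ = eo N * ee (2 * N) * Ff N := by rw [mul_comm (Ee N), Dd_mul_Ee]
      _ = (eo N * ee N) * Ff N *
            ∏ k ∈ Finset.Ico N (2 * N), (1 - (X : PS) ^ (2 * k + 2)) := by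
          rw [hsplit]
          ring
      _ = (Ff N * Ee N) * ∏ k ∈ Finset.Ico N (2 * N), (1 - (X : PS) ^ (2 * k + 2)) := by
          rw [Ee_eq]
          ring
      _ = _ := by rw [Ff_mul_Ee, one_mul]
  have hsplit2 : theta N * (Dd N * Ff N) - 1 =
      -((((eo N) ^ 2 * ee N) - theta N) * (Dd N * Ff N)) +
        ((∏ k ∈ Finset.Ico N (2 * N), (1 - (X : PS) ^ (2 * k + 2))) - 1) := by
    linear_combination hkey
  rw [hsplit2]
  exact dvd_add (dvd_neg.2 (hth.mul_right _)) hpsi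

lemma coeff_theta_DF (n : ℕ) :
    coeff n (theta (n + 1) * (Dd (n + 1) * Ff (n + 1))) = if n = 0 then 1 else 0 := by
  have h0 : coeff n (theta (n + 1) * (Dd (n + 1) * Ff (n + 1)) - 1) = 0 :=
    PowerSeries.X_pow_dvd_iff.mp (main_dvd n) n (lt_add_one n)
  rw [map_sub, sub_eq_zero] at h0
  rw [h0, PowerSeries.coeff_one]

/-! ### Putting everything together -/

lemma coeff_Dd (n i : ℕ) (hi : i ≤ n) : coeff i (Dd (n + 1)) = (pd i : ℚ) := by
  rw [Dd, ← distinctGF_prop i (2 * (n + 1)) (by omega)]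
  rfl

lemma coeff_Ff (n i : ℕ) (hi : i ≤ n) : coeff i (Ff (n + 1)) = (p i : ℚ) := by
  rw [Ff, ← allGF_prop i (2 * (n + 1)) (by omega)]
  rfl

lemma coeff_DF (n k : ℕ) (hk : k ≤ n) :
    coeff k (Dd (n + 1) * Ff (n + 1)) = (pbar k : ℚ) := by
  rw [coeff_mul, Finset.Nat.sum_antidiagonal_eq_sum_range_succ_mk, pbar]
  push_cast
  apply Finset.sum_congr rfl
  intro i hi
  have hi' : i ≤ k := by
    have := mem_range.mp hi
    omega
  rw [coeff_Dd n i (by omega), coeff_Ff n (k - i) (by omega)]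

lemma main_q (n : ℕ) :
    (pbar n : ℚ) + 2 * ∑ j ∈ range (n + 1),
        (-1 : ℚ) ^ (j + 1) * (if (j + 1) ^ 2 ≤ n then (pbar (n - (j + 1) ^ 2) : ℚ) else 0) =
      if n = 0 then 1 else 0 := by
  have h := coeff_theta_DF n
  rw [theta_eq] at h
  set G := Dd (n + 1) * Ff (n + 1) with hG
  have hexp : (1 + 2 * ∑ j ∈ range (n + 1), (-1 : PS) ^ (j + 1) * (X : PS) ^ ((j + 1) ^ 2)) * G =
      G + ((∑ j ∈ range (n + 1), (-1 : PS) ^ (j + 1) * (X : PS) ^ ((j + 1) ^ 2) * G) +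
        (∑ j ∈ range (n + 1), (-1 : PS) ^ (j + 1) * (X : PS) ^ ((j + 1) ^ 2) * G)) := by
    rw [← Finset.sum_mul]
    ring
  rw [hexp, map_add, map_add, map_sum] at h
  have hterm : ∀ j ∈ range (n + 1),
      coeff n ((-1 : PS) ^ (j + 1) * (X : PS) ^ ((j + 1) ^ 2) * G) =
        (-1 : ℚ) ^ (j + 1) *
          (if (j + 1) ^ 2 ≤ n then (pbar (n - (j + 1) ^ 2) : ℚ) else 0) := by
    intro j _
    have hC : ((-1 : PS) ^ (j + 1)) = C ((-1 : ℚ) ^ (j + 1)) := by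
      rw [map_pow, map_neg, map_one]
    have hassoc : (-1 : PS) ^ (j + 1) * (X : PS) ^ ((j + 1) ^ 2) * G =
        C ((-1 : ℚ) ^ (j + 1)) * (G * (X : PS) ^ ((j + 1) ^ 2)) := by
      rw [hC]
      ring
    rw [hassoc, PowerSeries.coeff_C_mul, PowerSeries.coeff_mul_X_pow']
    congr 1
    split_ifs with hle
    · exact coeff_DF n _ (by omega)
    · rfl
  rw [Finset.sum_congr rfl hterm, coeff_DF n n le_rfl] at h
  rw [← h]
  ring

end

end OPartGauss


/-- For every `n ≥ 0`,
`p̄(n) + 2 * ∑_{j ≥ 1} (-1)^j p̄(n - j²)` equals `1` if `n = 0` and `0` otherwise. -/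
theorem stmt2 (n : ℕ) :
    (pbar n : ℤ) + 2 * ∑' j : ℕ, (-1 : ℤ) ^ (j + 1) * pbarZ ((n : ℤ) - ((j : ℤ) + 1) ^ 2) =
      if n = 0 then 1 else 0 := by
  have hts : ∑' j : ℕ, (-1 : ℤ) ^ (j + 1) * pbarZ ((n : ℤ) - ((j : ℤ) + 1) ^ 2) =
      ∑ j ∈ Finset.range (n + 1), (-1 : ℤ) ^ (j + 1) * pbarZ ((n : ℤ) - ((j : ℤ) + 1) ^ 2) := by
    apply tsum_eq_sum
    intro j hj
    have hj' : n + 1 ≤ j := by simpa using hj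
    have hneg : ¬(0 ≤ (n : ℤ) - ((j : ℤ) + 1) ^ 2) := by
      have h1 : (n : ℤ) + 1 ≤ (j : ℤ) + 1 := by exact_mod_cast by omega
      nlinarith
    rw [pbarZ, if_neg hneg, mul_zero]
  rw [hts]
  have hterm : ∀ j : ℕ, pbarZ ((n : ℤ) - ((j : ℤ) + 1) ^ 2) =
      if (j + 1) ^ 2 ≤ n then ((pbar (n - (j + 1) ^ 2) : ℤ)) else 0 := by
    intro j
    have hcast : ((j : ℤ) + 1) ^ 2 = (((j + 1) ^ 2 : ℕ) : ℤ) := by push_cast; ring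
    rw [pbarZ, hcast]
    generalize (j + 1) ^ 2 = e
    rcases le_or_gt e n with h | h
    · rw [if_pos (by omega), if_pos h]
      congr 2
      omega
    · rw [if_neg (by omega), if_neg (by omega)]
  have hsum : ∑ j ∈ Finset.range (n + 1), (-1 : ℤ) ^ (j + 1) * pbarZ ((n : ℤ) - ((j : ℤ) + 1) ^ 2) =
      ∑ j ∈ Finset.range (n + 1), (-1 : ℤ) ^ (j + 1) *
        (if (j + 1) ^ 2 ≤ n then ((pbar (n - (j + 1) ^ 2) : ℤ)) else 0) := by
    apply Finset.sum_congr rfl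
    intro j _
    rw [hterm j]
  rw [hsum]
  have hq := OPartGauss.main_q n
  apply Int.cast_injective (α := ℚ)
  push_cast [apply_ite (fun z : ℤ => (z : ℚ))]
  exact hq
end

section
/- For every integer n ≥ 0, p̄(n) + ∑_{j≥1} (−1)^j [ p̄(n − j(3j−1)/2) + p̄(n − j(3j+1)/2) ] = p_d(n), where the sum is finite under the convention p̄(m) = 0 for m < 0. -/
/-!
Euler's pentagonal number theorem identifies `∏ₖ (1 - Xᵏ)` with the pentagonal series
`∑ₖ (-1)ᵏ X^{k(3k-1)/2}`, and this product is the inverse of the partition generating function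
`∑ p(n) Xⁿ`. The overpartition generating function is the product of the generating functions of
`p_d` and `p`, so multiplying it by the pentagonal series leaves `∑ p_d(n) Xⁿ`. Comparing
coefficients of `Xⁿ` gives the identity.
-/

open PowerSeries PowerSeries.WithPiTopology

section
variable {R : Type*} [CommRing R]

theorem mk_p_mul_pentagonalSeries : (mk fun n ↦ (p n : R)) * pentagonalSeries R = 1 := by
  -- The identity is algebraic; the discrete topology lets us compute with infinite products.
  let _ : TopologicalSpace R := ⊥
  have _ : DiscreteTopology R := ⟨rfl⟩
  have hprod := (Nat.Partition.hasProd_powerSeriesMk_card_restricted R fun _ ↦ True).mul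
    (hasProd_one_sub_X_pow R)
  have hfactor (i : ℕ) : (∑' j, (X ^ (i + 1) : R⟦X⟧) ^ j) * (1 - X ^ (i + 1)) = 1 :=
    tsum_pow_mul_one_sub_of_constantCoeff_eq_zero (by simp)
  simp only [ite_true, pow_mul, hfactor] at hprod
  rw [← hprod.unique hasProd_one]
  congr
  ext n
  simp [Nat.Partition.restricted, p]

theorem mk_pbar_eq_mk_pd_mul_mk_p :
    (mk fun n ↦ (pbar n : R)) = (mk fun n ↦ (pd n : R)) * mk fun n ↦ (p n : R) := by
  ext n
  simp [pbar, coeff_mul, Finset.Nat.sum_antidiagonal_eq_sum_range_succ fun i j ↦ (pd i : R) * p j]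

theorem mk_pbar_mul_pentagonalSeries :
    (mk fun n ↦ (pbar n : R)) * pentagonalSeries R = mk fun n ↦ (pd n : R) := by
  rw [mk_pbar_eq_mk_pd_mul_mk_p, mul_assoc, mk_p_mul_pentagonalSeries, mul_one]

section Topological
variable [TopologicalSpace R] [IsTopologicalRing R]

theorem hasSum_coeff_mul_pentagonalSeries (A : R⟦X⟧) (n : ℕ) :
    HasSum (fun k : ℤ ↦ (k.negOnePow : R) * coeff n (A * X ^ pentagonal k))
      (coeff n (A * pentagonalSeries R)) := by
  have h := ((hasSum_pentagonalSeries R).mul_left A).map (coeff n) (continuous_coeff R n)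
  convert h using 2 with k
  rw [Function.comp_apply, mul_left_comm, ← map_intCast (C (R := R)), coeff_C_mul]

theorem hasSum_nat_coeff_mul_pentagonalSeries (A : R⟦X⟧) (n : ℕ) :
    HasSum (fun j : ℕ ↦ (-1) ^ (j + 1) *
        (coeff n (A * X ^ pentagonal ((j : ℤ) + 1)) + coeff n (A * X ^ pentagonal (-((j : ℤ) + 1)))))
      (coeff n (A * pentagonalSeries R) - coeff n A) := by
  have h := (hasSum_coeff_mul_pentagonalSeries A n).nat_add_neg
  rw [← hasSum_nat_add_iff' 1] at h
  simp only [Int.negOnePow_neg, Int.cast_negOnePow_natCast, ← mul_add] at h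
  simpa [pentagonal, add_sub_add_right_eq_sub] using h

end Topological

end

theorem natCast_pentagonal_neg (k : ℤ) : (pentagonal (-k) : ℤ) = k * (3 * k + 1) / 2 := by
  rw [natCast_pentagonal]
  ring_nf

theorem coeff_mk_pbar_mul_X_pow (n a : ℕ) :
    coeff n ((mk fun m ↦ (pbar m : ℤ)) * X ^ a) = pbarZ (n - a) := by
  rw [coeff_mul_X_pow', pbarZ, coeff_mk]
  by_cases h : a ≤ n
  · rw [if_pos h, if_pos (by omega), show ((n : ℤ) - a).toNat = n - a by omega]
  · rw [if_neg h, if_neg (by omega)]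

/-- For every `n ≥ 0`,
`p̄(n) + ∑_{j ≥ 1} (-1)^j [p̄(n - j(3j-1)/2) + p̄(n - j(3j+1)/2)] = p_d(n)`. -/
theorem stmt3 (n : ℕ) :
    (pbar n : ℤ) +
      ∑' j : ℕ, (-1 : ℤ) ^ (j + 1) *
        (pbarZ ((n : ℤ) - ((j : ℤ) + 1) * (3 * ((j : ℤ) + 1) - 1) / 2) +
          pbarZ ((n : ℤ) - ((j : ℤ) + 1) * (3 * ((j : ℤ) + 1) + 1) / 2)) =
      (pd n : ℤ) := by
  have h := hasSum_nat_coeff_mul_pentagonalSeries (mk fun m ↦ (pbar m : ℤ)) n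
  simp only [mk_pbar_mul_pentagonalSeries, coeff_mk, coeff_mk_pbar_mul_X_pow,
    natCast_pentagonal_neg] at h
  simp only [natCast_pentagonal] at h
  rw [h.tsum_eq]
  ring
end

section
/- For every integer n ≥ 0, qq(n) + ∑_{j≥1} (−1)^j [ qq(n − 2j(3j−1)) + qq(n − 2j(3j+1)) ] equals 1 if n is a triangular number (n = k(k+1)/2 for some k ≥ 0) and equals 0 otherwise; the sum is finite under the convention qq(m) = 0 for m < 0. -/
open scoped Classical

open Finset

/-- triangular numbers, recursively -/
def tri : ℕ → ℕ
  | 0 => 0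
  | n+1 => tri n + (n+1)

lemma two_tri (k : ℕ) : 2 * tri k = k * (k+1) := by
  induction k with
  | zero => simp [tri]
  | succ k ih => simp only [tri]; ring_nf; ring_nf at ih; omega

section Ring
variable {R : Type*} [CommRing R] (x : R)

/-- Shanks' finite form of Euler's pentagonal number theorem. -/
lemma shanks_pent (n : ℕ) :
    ∑ i ∈ range (n+1), (-1:R)^i * x^(tri i + n*i) * ∏ k ∈ Ico i n, (1 - x^(k+1))
      = 1 + ∑ j ∈ range n, (-1:R)^(j+1) *
          (x^((j+1)*(j+1) + tri j) + x^((j+1)*(j+1) + tri (j+1))) := by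
  induction n with
  | zero => simp [tri]
  | succ n ih =>
    have key : ∑ i ∈ range (n+1+1), (-1:R)^i * x^(tri i + (n+1)*i) * ∏ k ∈ Ico i (n+1), (1 - x^(k+1))
        = (∑ i ∈ range (n+1), (-1:R)^i * x^(tri i + n*i) * ∏ k ∈ Ico i n, (1 - x^(k+1)))
          + (-1:R)^(n+1) * (x^((n+1)*(n+1) + tri n) + x^((n+1)*(n+1) + tri (n+1))) := by
      rw [sum_range_succ _ (n+1)]
      have hQ : ∀ i ∈ range (n+1), (-1:R)^i * x^(tri i + (n+1)*i) * ∏ k ∈ Ico i (n+1), (1 - x^(k+1))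
          = (-1:R)^i * x^(tri i + (n+1)*i) * ((∏ k ∈ Ico i n, (1 - x^(k+1))) * (1 - x^(n+1))) := by
        intro i hi
        rw [prod_Ico_succ_top (mem_range_succ_iff.mp hi)]
      rw [sum_congr rfl hQ]
      have hd : ∑ i ∈ range (n+1),
          ((-1:R)^i * x^(tri i + (n+1)*i) * ((∏ k ∈ Ico i n, (1 - x^(k+1))) * (1 - x^(n+1)))
            - (-1:R)^i * x^(tri i + n*i) * ∏ k ∈ Ico i n, (1 - x^(k+1)))
          = (-1:R)^(n+1) * x^((n+1)*(n+1) + tri n) := by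
        set g : ℕ → R := fun i =>
          (-1:R)^i * (x^(tri i + n*i) - x^(tri i + (n+1)*i)) * ∏ k ∈ Ico i n, (1 - x^(k+1)) with hg
        have hterm : ∀ i ∈ range n,
            ((-1:R)^i * x^(tri i + (n+1)*i) * ((∏ k ∈ Ico i n, (1 - x^(k+1))) * (1 - x^(n+1)))
              - (-1:R)^i * x^(tri i + n*i) * ∏ k ∈ Ico i n, (1 - x^(k+1)))
            = g (i+1) - g i := by
          intro i hi
          have hin : i < n := mem_range.mp hi
          have hsplit : ∏ k ∈ Ico i n, (1 - x^(k+1))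
              = (1 - x^(i+1)) * ∏ k ∈ Ico (i+1) n, (1 - x^(k+1)) :=
            prod_eq_prod_Ico_succ_bot hin _
          simp only [hg]
          rw [hsplit]
          have hA : x^(tri i + (n+1)*i) = x^(tri i + n*i) * x^i := by
            rw [← pow_add]; congr 1 <;> ring
          have hB : x^(n+1) = x^n * x := pow_succ x n
          have hC : x^(i+1) = x^i * x := pow_succ x i
          have hD : x^(tri (i+1) + n*(i+1)) = x^(tri i + n*i) * x^i * x * x^n := by
            rw [← pow_add, ← pow_succ, ← pow_add]; congr 1 <;> (simp [tri]; ring)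
          have hE : x^(tri (i+1) + (n+1)*(i+1))
              = x^(tri i + n*i) * x^i * x * x^n * x^i * x := by
            rw [← pow_add, ← pow_succ, ← pow_add, ← pow_add, ← pow_succ]
            congr 1 <;> (simp [tri]; ring)
          have hS : (-1:R)^(i+1) = (-1)^i * (-1) := pow_succ _ i
          rw [hA, hB, hC, hD, hE, hS]
          ring
        rw [sum_range_succ, sum_congr rfl hterm, sum_range_sub g]
        have hg0 : g 0 = 0 := by simp [hg, tri]
        rw [hg0, sub_zero]
        simp only [hg, Ico_self, prod_empty, mul_one]
        have hA : x^(tri n + (n+1)*n) = x^(tri n + n*n) * x^n := by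
          rw [← pow_add]; congr 1 <;> ring
        have hB : x^(n+1) = x^n * x := pow_succ x n
        have hC : x^((n+1)*(n+1) + tri n) = x^(tri n + n*n) * x^n * x^n * x := by
          rw [← pow_add, ← pow_add, ← pow_succ]; congr 1 <;> ring
        have hS : (-1:R)^(n+1) = (-1)^n * (-1) := pow_succ _ n
        rw [hA, hB, hC, hS]
        ring
      have expand : ∑ i ∈ range (n+1),
            (-1:R)^i * x^(tri i + (n+1)*i) * ((∏ k ∈ Ico i n, (1 - x^(k+1))) * (1 - x^(n+1)))
          = (∑ i ∈ range (n+1), (-1:R)^i * x^(tri i + n*i) * ∏ k ∈ Ico i n, (1 - x^(k+1)))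
            + (-1:R)^(n+1) * x^((n+1)*(n+1) + tri n) := by
        rw [← hd, sum_sub_distrib]; ring
      rw [expand, Ico_self, prod_empty, mul_one]
      rw [show tri (n+1) + (n+1)*(n+1) = (n+1)*(n+1) + tri (n+1) from by ring]
      ring
    rw [key, ih, sum_range_succ _ n]
    ring

/-- Shanks' finite form of Gauss' identity for the triangular-number series. -/
lemma shanks_gauss (n : ℕ) :
    ∑ i ∈ range (n+1), x^(i*(2*n+1)) * (∏ k ∈ range i, (1 - x^(2*k+1)))
        * ∏ k ∈ Ico i n, (1 - x^(2*k+2))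
      = (∑ k ∈ range (2*n+1), x^(tri k)) * ∏ k ∈ range n, (1 - x^(2*k+1)) := by
  induction n with
  | zero => simp [tri]
  | succ n ih =>
    have htri1 : tri (2*n+1) = (n+1)*(2*n+1) := by
      have h1 := two_tri (2*n+1)
      have h2 : (2*n+1) * (2*n+1+1) = 2*((n+1)*(2*n+1)) := by ring
      omega
    have htri2 : tri (2*n+2) = (n+1)*(2*n+3) := by
      have h1 := two_tri (2*n+2)
      have h2 : (2*n+2) * (2*n+2+1) = 2*((n+1)*(2*n+3)) := by ring
      omega
    have hrhs : (∑ k ∈ range (2*(n+1)+1), x^(tri k)) * ∏ k ∈ range (n+1), (1 - x^(2*k+1))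
        = (1 - x^(2*n+1)) * ((∑ k ∈ range (2*n+1), x^(tri k)) * ∏ k ∈ range n, (1 - x^(2*k+1)))
          + (x^((n+1)*(2*n+1)) + x^((n+1)*(2*n+3))) * ∏ k ∈ range (n+1), (1 - x^(2*k+1)) := by
      rw [show 2*(n+1)+1 = (2*n+1) + 1 + 1 from by ring, sum_range_succ, sum_range_succ,
        prod_range_succ]
      rw [show 2*n+1+1 = 2*n+2 from rfl, htri1, htri2]
      ring
    rw [hrhs, ← ih]
    have key : ∑ i ∈ range (n+1+1), x^(i*(2*(n+1)+1)) * (∏ k ∈ range i, (1 - x^(2*k+1)))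
        * ∏ k ∈ Ico i (n+1), (1 - x^(2*k+2))
        = (1 - x^(2*n+1)) * ∑ i ∈ range (n+1),
            x^(i*(2*n+1)) * (∏ k ∈ range i, (1 - x^(2*k+1))) * ∏ k ∈ Ico i n, (1 - x^(2*k+2))
          + (x^((n+1)*(2*n+1)) + x^((n+1)*(2*n+3))) * ∏ k ∈ range (n+1), (1 - x^(2*k+1)) := by
      rw [sum_range_succ _ (n+1)]
      have hQ : ∀ i ∈ range (n+1),
          x^(i*(2*(n+1)+1)) * (∏ k ∈ range i, (1 - x^(2*k+1))) * ∏ k ∈ Ico i (n+1), (1 - x^(2*k+2))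
          = x^(i*(2*n+3)) * (∏ k ∈ range i, (1 - x^(2*k+1)))
              * ((∏ k ∈ Ico i n, (1 - x^(2*k+2))) * (1 - x^(2*n+2))) := by
        intro i hi
        rw [prod_Ico_succ_top (mem_range_succ_iff.mp hi),
          show i*(2*(n+1)+1) = i*(2*n+3) from by ring]
      rw [sum_congr rfl hQ]
      have hd : ∑ i ∈ range (n+1),
          (x^(i*(2*n+3)) * (∏ k ∈ range i, (1 - x^(2*k+1)))
              * ((∏ k ∈ Ico i n, (1 - x^(2*k+2))) * (1 - x^(2*n+2)))
            - (1 - x^(2*n+1)) * (x^(i*(2*n+1)) * (∏ k ∈ range i, (1 - x^(2*k+1)))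
              * ∏ k ∈ Ico i n, (1 - x^(2*k+2))))
          = x^((n+1)*(2*n+1)) * ∏ k ∈ range (n+1), (1 - x^(2*k+1)) := by
        set g : ℕ → R := fun i =>
          (x^(i*(2*n+1)) - x^(i*(2*n+3))) * (∏ k ∈ range i, (1 - x^(2*k+1)))
            * ∏ k ∈ Ico i n, (1 - x^(2*k+2)) with hg
        have hterm : ∀ i ∈ range n,
            (x^(i*(2*n+3)) * (∏ k ∈ range i, (1 - x^(2*k+1)))
                * ((∏ k ∈ Ico i n, (1 - x^(2*k+2))) * (1 - x^(2*n+2)))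
              - (1 - x^(2*n+1)) * (x^(i*(2*n+1)) * (∏ k ∈ range i, (1 - x^(2*k+1)))
                * ∏ k ∈ Ico i n, (1 - x^(2*k+2))))
            = g (i+1) - g i := by
          intro i hi
          have hin : i < n := mem_range.mp hi
          have hsplit : ∏ k ∈ Ico i n, (1 - x^(2*k+2))
              = (1 - x^(2*i+2)) * ∏ k ∈ Ico (i+1) n, (1 - x^(2*k+2)) :=
            prod_eq_prod_Ico_succ_bot hin _
          simp only [hg]
          rw [hsplit, prod_range_succ]
          have hA : x^(i*(2*n+3)) = x^(i*(2*n+1)) * x^i * x^i := by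
            rw [← pow_add, ← pow_add]; congr 1 <;> ring
          have hB : x^((i+1)*(2*n+1)) = x^(i*(2*n+1)) * x^n * x^n * x := by
            rw [← pow_add, ← pow_add, ← pow_succ]; congr 1 <;> ring
          have hC : x^((i+1)*(2*n+3)) = x^(i*(2*n+1)) * x^i * x^i * x^n * x^n * x * x * x := by
            rw [← pow_add, ← pow_add, ← pow_add, ← pow_add, ← pow_succ, ← pow_succ, ← pow_succ]
            congr 1 <;> ring
          have hD : x^(2*n+2) = x^n * x^n * x * x := by
            rw [← pow_add, ← pow_succ, ← pow_succ]; congr 1 <;> ring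
          have hE : x^(2*n+1) = x^n * x^n * x := by
            rw [← pow_add, ← pow_succ]; congr 1 <;> ring
          have hF : x^(2*i+2) = x^i * x^i * x * x := by
            rw [← pow_add, ← pow_succ, ← pow_succ]; congr 1 <;> ring
          have hG : x^(2*i+1) = x^i * x^i * x := by
            rw [← pow_add, ← pow_succ]; congr 1 <;> ring
          rw [hA, hB, hC, hD, hE, hF, hG]
          ring
        rw [sum_range_succ, sum_congr rfl hterm, sum_range_sub g]
        have hg0 : g 0 = 0 := by simp [hg]
        rw [hg0, sub_zero]
        simp only [hg, Ico_self, prod_empty, mul_one, prod_range_succ]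
        have hA : x^(n*(2*n+3)) = x^(n*(2*n+1)) * x^n * x^n := by
          rw [← pow_add, ← pow_add]; congr 1 <;> ring
        have hB : x^((n+1)*(2*n+1)) = x^(n*(2*n+1)) * x^n * x^n * x := by
          rw [← pow_add, ← pow_add, ← pow_succ]; congr 1 <;> ring
        have hD : x^(2*n+2) = x^n * x^n * x * x := by
          rw [← pow_add, ← pow_succ, ← pow_succ]; congr 1 <;> ring
        have hE : x^(2*n+1) = x^n * x^n * x := by
          rw [← pow_add, ← pow_succ]; congr 1 <;> ring
        rw [hA, hB, hD, hE]
        ring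
      calc ∑ i ∈ range (n+1),
            x^(i*(2*n+3)) * (∏ k ∈ range i, (1 - x^(2*k+1)))
              * ((∏ k ∈ Ico i n, (1 - x^(2*k+2))) * (1 - x^(2*n+2)))
            + x^((n+1)*(2*(n+1)+1)) * (∏ k ∈ range (n+1), (1 - x^(2*k+1)))
              * ∏ k ∈ Ico (n+1) (n+1), (1 - x^(2*k+2))
          = (∑ i ∈ range (n+1),
              (x^(i*(2*n+3)) * (∏ k ∈ range i, (1 - x^(2*k+1)))
                * ((∏ k ∈ Ico i n, (1 - x^(2*k+2))) * (1 - x^(2*n+2)))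
               - (1 - x^(2*n+1)) * (x^(i*(2*n+1)) * (∏ k ∈ range i, (1 - x^(2*k+1)))
                * ∏ k ∈ Ico i n, (1 - x^(2*k+2)))))
            + (1 - x^(2*n+1)) * ∑ i ∈ range (n+1),
                x^(i*(2*n+1)) * (∏ k ∈ range i, (1 - x^(2*k+1))) * ∏ k ∈ Ico i n, (1 - x^(2*k+2))
            + x^((n+1)*(2*n+3)) * ∏ k ∈ range (n+1), (1 - x^(2*k+1)) := by
            rw [sum_sub_distrib, mul_sum]
            simp only [Ico_self, prod_empty, mul_one]
            rw [show (n+1)*(2*(n+1)+1) = (n+1)*(2*n+3) from by ring]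
            ring
        _ = _ := by rw [hd]; ring
    rw [key]


end Ring

/-- `qq n` is the number of partitions of `n` into distinct odd parts. -/
def qq (n : ℕ) : ℕ := (Nat.Partition.oddDistincts n).card

/-- `qqZ` extends `qq` to `ℤ` by the convention `qq m = 0` for `m < 0`. -/
def qqZ (x : ℤ) : ℤ := if 0 ≤ x then (qq x.toNat : ℤ) else 0

open PowerSeries

namespace QQ5

noncomputable section

variable {α : Type*}

/-! ### Congruence of power series up to degree N (exclusive) -/

def Cong (N : ℕ) (A B : PowerSeries ℤ) : Prop := ∀ k < N, coeff k A = coeff k B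

lemma Cong.refl {N A} : Cong N A A := fun _ _ => _root_.rfl

lemma Cong.symm {N A B} (h : Cong N A B) : Cong N B A := fun k hk => (h k hk).symm

lemma Cong.trans {N A B C} (h1 : Cong N A B) (h2 : Cong N B C) : Cong N A C :=
  fun k hk => (h1 k hk).trans (h2 k hk)

lemma Cong.add {N A B C D} (h1 : Cong N A B) (h2 : Cong N C D) : Cong N (A + C) (B + D) := by
  intro k hk; simp only [map_add, h1 k hk, h2 k hk]

lemma Cong.mul {N A B C D} (h1 : Cong N A B) (h2 : Cong N C D) : Cong N (A * C) (B * D) := by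
  intro k hk
  rw [coeff_mul, coeff_mul]
  refine Finset.sum_congr _root_.rfl fun p hp => ?_
  have hpk := Finset.HasAntidiagonal.mem_antidiagonal.mp hp
  rw [h1 p.1 (lt_of_le_of_lt (le_trans (Nat.le_add_right _ _) hpk.le) hk),
    h2 p.2 (lt_of_le_of_lt (le_trans (Nat.le_add_left _ _) hpk.le) hk)]

lemma cong_X_pow_mul {N e : ℕ} (h : N ≤ e) (A : PowerSeries ℤ) : Cong N (X ^ e * A) 0 := by
  intro k hk
  rw [coeff_X_pow_mul', if_neg (by omega), map_zero]

lemma Cong.sum {N : ℕ} {s : Finset ℕ} {f g : ℕ → PowerSeries ℤ}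
    (h : ∀ i ∈ s, Cong N (f i) (g i)) : Cong N (∑ i ∈ s, f i) (∑ i ∈ s, g i) := by
  intro k hk
  rw [map_sum, map_sum]
  exact Finset.sum_congr _root_.rfl fun i hi => h i hi k hk

lemma Cong.prod_one {N : ℕ} {s : Finset ℕ} {f : ℕ → PowerSeries ℤ}
    (h : ∀ i ∈ s, Cong N (f i) 1) : Cong N (∏ i ∈ s, f i) 1 := by
  classical
  induction s using Finset.induction_on with
  | empty => exact Cong.refl
  | @insert a s' hx ih =>
    rw [Finset.prod_insert hx]
    have := (h a (Finset.mem_insert_self a s')).mul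
      (ih fun i hi => h i (Finset.mem_insert_of_mem hi))
    simpa using this

lemma Cong.cancel {N : ℕ} {A B U : PowerSeries ℤ} (hU : constantCoeff U = 1)
    (h : Cong N (A * U) (B * U)) : Cong N A B := by
  intro k hk
  induction k using Nat.strong_induction_on with
  | _ k ih =>
    have hh := h k hk
    rw [coeff_mul, coeff_mul, Finset.Nat.sum_antidiagonal_eq_sum_range_succ_mk,
      Finset.Nat.sum_antidiagonal_eq_sum_range_succ_mk, Finset.sum_range_succ,
      Finset.sum_range_succ] at hh
    have hsum : ∑ i ∈ range k, coeff i A * coeff (k - i) U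
        = ∑ i ∈ range k, coeff i B * coeff (k - i) U := by
      refine Finset.sum_congr _root_.rfl fun i hi => ?_
      rw [ih i (mem_range.mp hi) (lt_trans (mem_range.mp hi) hk)]
    rw [hsum] at hh
    have : coeff k A * coeff (k - k) U = coeff k B * coeff (k - k) U :=
      add_left_cancel hh
    simpa [Nat.sub_self, coeff_zero_eq_constantCoeff, hU] using this

/-! ### Generating function machinery (adapted from Archive.Wiedijk100Theorems.Partition) -/

/-- A convenience constructor for the power series whose coefficients indicate a subset. -/
def indicatorSeries (α : Type*) [Semiring α] (s : Set ℕ) : PowerSeries α :=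
  PowerSeries.mk fun n => if n ∈ s then 1 else 0

theorem coeff_indicator (s : Set ℕ) [Semiring α] (n : ℕ) :
    coeff n (indicatorSeries α s) = if n ∈ s then 1 else 0 :=
  coeff_mk _ _

theorem coeff_indicator_pos (s : Set ℕ) [Semiring α] (n : ℕ) (h : n ∈ s) :
    coeff n (indicatorSeries α s) = 1 := by rw [coeff_indicator, if_pos h]

theorem coeff_indicator_neg (s : Set ℕ) [Semiring α] (n : ℕ) (h : n ∉ s) :
    coeff n (indicatorSeries α s) = 0 := by rw [coeff_indicator, if_neg h]

theorem two_series (i : ℕ) [Semiring α] :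
    1 + (X : PowerSeries α) ^ i.succ = indicatorSeries α {0, i.succ} := by
  ext n
  simp only [coeff_indicator, coeff_one, coeff_X_pow, Set.mem_insert_iff, Set.mem_singleton_iff,
    map_add]
  cases' n with d
  · simp [(Nat.succ_ne_zero i).symm]
  · simp [Nat.succ_ne_zero d]

def mkOdd : ℕ ↪ ℕ :=
  ⟨fun i => 2 * i + 1, fun x y h => by linarith⟩

open Finset.HasAntidiagonal

-- The main workhorse of the partition theorem proof.
set_option maxHeartbeats 1600000 in
theorem partialGF_prop (α : Type*) [CommSemiring α] (n : ℕ) (s : Finset ℕ) (hs : ∀ i ∈ s, 0 < i)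
    (c : ℕ → Set ℕ) (hc : ∀ i, i ∉ s → 0 ∈ c i) :
    #{p : n.Partition | (∀ j, p.parts.count j ∈ c j) ∧ ∀ j ∈ p.parts, j ∈ s} =
      coeff n (∏ i ∈ s, indicatorSeries α ((· * i) '' c i)) := by
  simp_rw [coeff_prod, coeff_indicator, prod_boole, sum_boole]
  apply congr_arg
  simp only [mem_univ, forall_true_left, not_and, not_forall, exists_prop,
    Set.mem_image, not_exists]
  set φ : (a : Nat.Partition n) →
    a ∈ filter (fun p ↦ (∀ (j : ℕ), Multiset.count j p.parts ∈ c j) ∧ ∀ j ∈ p.parts, j ∈ s) univ →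
    ℕ →₀ ℕ := fun p _ => {
      toFun := fun i => Multiset.count i p.parts • i
      support := Finset.filter (fun i => i ≠ 0) p.parts.toFinset
      mem_support_toFun := fun a => by
        simp only [smul_eq_mul, ne_eq, mul_eq_zero, Multiset.count_eq_zero]
        rw [not_or, not_not]
        simp only [Multiset.mem_toFinset, not_not, mem_filter] }
  refine Finset.card_bij φ ?_ ?_ ?_
  · intro a ha
    simp only [φ, not_forall, not_exists, not_and, exists_prop, mem_filter]
    rw [mem_finsuppAntidiag]
    dsimp only [ne_eq, smul_eq_mul, id_eq, eq_mpr_eq_cast, le_eq_subset, Finsupp.coe_mk]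
    simp only [mem_univ, forall_true_left, not_and, not_forall, exists_prop,
      mem_filter, true_and] at ha
    refine ⟨⟨?_, fun i ↦ ?_⟩, fun i _ ↦ ⟨a.parts.count i, ha.1 i, rfl⟩⟩
    · conv_rhs => simp [← a.parts_sum]
      rw [sum_multiset_count_of_subset _ s]
      · simp only [smul_eq_mul]
      · intro i
        simp only [Multiset.mem_toFinset, not_not, mem_filter]
        apply ha.2
    · simp only [ne_eq, Multiset.mem_toFinset, not_not, mem_filter, and_imp]
      exact fun hi _ ↦ ha.2 i hi
  · intro p₁ hp₁ p₂ hp₂ h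
    apply Nat.Partition.ext
    simp only [true_and, mem_univ, mem_filter] at hp₁ hp₂
    ext i
    simp only [φ, ne_eq, Multiset.mem_toFinset, not_not, smul_eq_mul, Finsupp.mk.injEq] at h
    by_cases hi : i = 0
    · rw [hi]
      rw [Multiset.count_eq_zero_of_notMem]
      · rw [Multiset.count_eq_zero_of_notMem]
        intro a; exact Nat.lt_irrefl 0 (hs 0 (hp₂.2 0 a))
      intro a; exact Nat.lt_irrefl 0 (hs 0 (hp₁.2 0 a))
    · rw [← mul_left_inj' hi]
      rw [funext_iff] at h
      exact h.2 i
  · simp only [φ, mem_filter, mem_finsuppAntidiag, mem_univ, exists_prop, true_and, and_assoc]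
    rintro f ⟨hf, hf₃, hf₄⟩
    have hf' : f ∈ finsuppAntidiag s n := mem_finsuppAntidiag.mpr ⟨hf, hf₃⟩
    simp only [mem_finsuppAntidiag] at hf'
    refine ⟨⟨∑ i ∈ s, Multiset.replicate (f i / i) i, ?_, ?_⟩, ?_, ?_, ?_⟩
    · intro i hi
      simp only [exists_prop, Multiset.mem_sum, mem_map, Function.Embedding.coeFn_mk] at hi
      rcases hi with ⟨t, ht, z⟩
      apply hs
      rwa [Multiset.eq_of_mem_replicate z]
    · simp_rw [Multiset.sum_sum, Multiset.sum_replicate, Nat.nsmul_eq_mul]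
      rw [← hf'.1]
      refine sum_congr rfl fun i hi => Nat.div_mul_cancel ?_
      rcases hf₄ i hi with ⟨w, _, hw₂⟩
      rw [← hw₂]
      exact dvd_mul_left _ _
    · intro i
      simp_rw [Multiset.count_sum', Multiset.count_replicate, sum_ite_eq']
      split_ifs with h
      · rcases hf₄ i h with ⟨w, hw₁, hw₂⟩
        rwa [← hw₂, Nat.mul_div_cancel _ (hs i h)]
      · exact hc _ h
    · intro i hi
      rw [Multiset.mem_sum] at hi
      rcases hi with ⟨j, hj₁, hj₂⟩
      rwa [Multiset.eq_of_mem_replicate hj₂]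
    · ext i
      simp_rw [Multiset.count_sum', Multiset.count_replicate, sum_ite_eq']
      simp only [ne_eq, Multiset.mem_toFinset, not_not, smul_eq_mul, ite_mul,
        zero_mul, Finsupp.coe_mk]
      split_ifs with h
      · apply Nat.div_mul_cancel
        rcases hf₄ i h with ⟨w, _, hw₂⟩
        apply Dvd.intro_left _ hw₂
      · apply symm
        rw [← Finsupp.notMem_support_iff]
        exact notMem_mono hf'.2 h

set_option maxHeartbeats 1600000 in
/-- The `k`-th coefficient of the partial product for distinct odd parts counts
the partitions of `k` into distinct odd parts, provided `k < 2m+1`. -/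
theorem oddDistinctGF_prop [CommSemiring α] (k m : ℕ) (h : k < 2 * m + 1) :
    (#(Nat.Partition.oddDistincts k) : α) =
      coeff k (∏ i ∈ range m, (1 + (X : PowerSeries α) ^ (2 * i + 1))) := by
  have hgf := partialGF_prop α k ((range m).map mkOdd) (by
      intro i hi
      simp only [mem_map, mkOdd, Function.Embedding.coeFn_mk] at hi
      obtain ⟨a, -, rfl⟩ := hi
      exact Nat.succ_pos _)
    (fun _ => {0, 1}) (fun _ _ => Or.inl rfl)
  convert hgf using 2
  · -- the two finsets have the same cardinality
    congr 1
    ext p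
    simp only [Nat.Partition.oddDistincts, Nat.Partition.odds, Nat.Partition.distincts, Nat.Partition.restricted,
      Finset.mem_inter, mem_filter, mem_univ, true_and, Set.mem_setOf_eq]
    constructor
    · rintro ⟨hodd, hnodup⟩
      constructor
      · intro j
        have h1 := Multiset.nodup_iff_count_le_one.mp hnodup j
        rcases Nat.le_one_iff_eq_zero_or_eq_one.mp h1 with h' | h'
        · exact Or.inl h'
        · exact Or.inr h'
      · intro j hj
        have hjodd := hodd j hj
        have hjk : j ≤ k := by
          simpa [p.parts_sum] using Multiset.single_le_sum (fun _ _ => Nat.zero_le _) _ hj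
        simp only [mem_map, mkOdd, Function.Embedding.coeFn_mk, mem_range]
        rcases Nat.even_or_odd j with he | ho
        · exact absurd he hjodd
        · obtain ⟨a, ha⟩ := ho
          exact ⟨a, by omega, by show 2 * a + 1 = j; omega⟩
    · rintro ⟨hcount, hmem⟩
      constructor
      · intro j hj
        obtain ⟨a, -, rfl⟩ := Finset.mem_map.mp (hmem j hj)
        simp only [mkOdd, Function.Embedding.coeFn_mk]
        intro he
        rw [Nat.even_iff] at he
        change (2 * a + 1) % 2 = 0 at he
        omega
      · rw [Multiset.nodup_iff_count_le_one]
        intro j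
        have := hcount j
        simp only [Set.mem_insert_iff, Set.mem_singleton_iff] at this
        omega
  · -- the two power series agree
    rw [Finset.prod_map]
    refine Finset.prod_congr rfl fun i _ => ?_
    have : (fun x => x * (mkOdd i)) '' {0, 1} = {0, 2 * i + 1} := by
      simp only [mkOdd, Function.Embedding.coeFn_mk, Set.image_pair]
      norm_num
      rfl
    rw [this, show (2 * i + 1 : ℕ) = (2 * i).succ from rfl, ← two_series]

end

end QQ5


namespace QQ5

noncomputable section

-- real content starts here

/-- partial product for distinct odd parts -/
def DOs (m : ℕ) : PowerSeries ℤ := ∏ i ∈ range m, (1 + X^(2*i+1))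

/-- partial product `∏ (1 - X^(2i+1))` -/
def Uo (m : ℕ) : PowerSeries ℤ := ∏ i ∈ range m, (1 - X^(2*i+1))

def E2 (m : ℕ) : PowerSeries ℤ := ∏ k ∈ range m, (1 - X^(2*k+2))

def E4 (m : ℕ) : PowerSeries ℤ := ∏ k ∈ range m, (1 - X^(4*(k+1)))

def F4 (m : ℕ) : PowerSeries ℤ := ∏ k ∈ range m, (1 - X^(4*k+2))

def PentS (m : ℕ) : PowerSeries ℤ :=
  1 + ∑ j ∈ range m, (-1 : PowerSeries ℤ)^(j+1) *
    (X^(4*((j+1)*(j+1) + tri j)) + X^(4*((j+1)*(j+1) + tri (j+1))))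

def TriS (K : ℕ) : PowerSeries ℤ := ∑ k ∈ range K, (X : PowerSeries ℤ)^(tri k)

lemma tri_succ_pos (i : ℕ) : 1 ≤ tri (i+1) := by
  show 1 ≤ tri i + (i+1); omega

lemma cong_pent (n m : ℕ) (h : n + 1 ≤ 4*m + 4) : Cong (n+1) (PentS m) (E4 m) := by
  have hs := shanks_pent ((X : PowerSeries ℤ)^4) m
  have hpow : ∀ e : ℕ, (((X : PowerSeries ℤ)^4))^e = X^(4*e) := fun e => by rw [← pow_mul]
  simp only [hpow] at hs
  rw [PentS, ← hs, sum_range_succ']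
  have h0 : (-1 : PowerSeries ℤ)^0 * X^(4*(tri 0 + m*0)) * ∏ k ∈ Ico 0 m, (1 - X^(4*(k+1)))
      = E4 m := by
    simp only [pow_zero, one_mul, tri, Nat.mul_zero, Nat.add_zero]
    rw [E4, range_eq_Ico]
  rw [h0]
  have hrest : Cong (n+1)
      (∑ i ∈ range m, (-1 : PowerSeries ℤ)^(i+1) * X^(4*(tri (i+1) + m*(i+1)))
        * ∏ k ∈ Ico (i+1) m, (1 - X^(4*(k+1)))) 0 := by
    have := Cong.sum (N := n+1) (s := range m)
      (f := fun i => (-1 : PowerSeries ℤ)^(i+1) * X^(4*(tri (i+1) + m*(i+1)))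
        * ∏ k ∈ Ico (i+1) m, (1 - X^(4*(k+1))))
      (g := fun _ => 0) ?_
    · simpa using this
    · intro i _
      have hee : (-1 : PowerSeries ℤ)^(i+1) * X^(4*(tri (i+1) + m*(i+1)))
          * ∏ k ∈ Ico (i+1) m, (1 - X^(4*(k+1)))
          = X^(4*(tri (i+1) + m*(i+1))) *
            ((-1 : PowerSeries ℤ)^(i+1) * ∏ k ∈ Ico (i+1) m, (1 - X^(4*(k+1)))) := by ring
      rw [hee]
      apply cong_X_pow_mul
      have h1 : 1 ≤ tri (i+1) := tri_succ_pos i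
      have h2 : m ≤ m*(i+1) := Nat.le_mul_of_pos_right m (by omega)
      omega
  intro k hk
  have hz := hrest k hk
  rw [map_add, hz]
  simp

lemma cong_gauss (n M : ℕ) (h : n + 1 ≤ 4*M + 1) :
    Cong (n+1) (E2 (2*M)) (TriS (4*M+1) * Uo (2*M)) := by
  have hs := shanks_gauss (X : PowerSeries ℤ) (2*M)
  rw [show 2*(2*M)+1 = 4*M+1 from by ring] at hs
  rw [TriS, Uo, ← hs, sum_range_succ']
  have h0 : (X : PowerSeries ℤ)^(0*(4*M+1)) * (∏ k ∈ range 0, (1 - X^(2*k+1)))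
      * ∏ k ∈ Ico 0 (2*M), (1 - X^(2*k+2)) = E2 (2*M) := by
    simp only [Nat.zero_mul, pow_zero, prod_empty, one_mul, range_eq_Ico, Ico_self]
    rw [E2, range_eq_Ico]
  rw [h0]
  have hrest : Cong (n+1)
      (∑ i ∈ range (2*M), (X : PowerSeries ℤ)^((i+1)*(4*M+1))
        * (∏ k ∈ range (i+1), (1 - X^(2*k+1))) * ∏ k ∈ Ico (i+1) (2*M), (1 - X^(2*k+2))) 0 := by
    have := Cong.sum (N := n+1) (s := range (2*M))
      (f := fun i => (X : PowerSeries ℤ)^((i+1)*(4*M+1))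
        * (∏ k ∈ range (i+1), (1 - X^(2*k+1))) * ∏ k ∈ Ico (i+1) (2*M), (1 - X^(2*k+2)))
      (g := fun _ => 0) ?_
    · simpa using this
    · intro i _
      have hee : (X : PowerSeries ℤ)^((i+1)*(4*M+1))
          * (∏ k ∈ range (i+1), (1 - X^(2*k+1))) * ∏ k ∈ Ico (i+1) (2*M), (1 - X^(2*k+2))
          = X^((i+1)*(4*M+1)) *
            ((∏ k ∈ range (i+1), (1 - X^(2*k+1))) * ∏ k ∈ Ico (i+1) (2*M), (1 - X^(2*k+2))) := by
        ring
      rw [hee]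
      apply cong_X_pow_mul
      have h2 : 4*M+1 ≤ (i+1)*(4*M+1) := Nat.le_mul_of_pos_left _ (by omega)
      omega
  intro k hk
  have hz := hrest k hk
  rw [map_add, hz]
  simp

lemma DOs_mul_Uo (m : ℕ) : DOs m * Uo m = F4 m := by
  rw [DOs, Uo, F4, ← prod_mul_distrib]
  refine prod_congr rfl fun i _ => ?_
  have hx : (X : PowerSeries ℤ)^(4*i+2) = X^(2*i+1) * X^(2*i+1) := by
    rw [← pow_add]; congr 1; ring
  rw [hx]; ring

lemma F4_mul_E4 (m : ℕ) : F4 m * E4 m = E2 (2*m) := by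
  induction m with
  | zero => simp [F4, E4, E2]
  | succ m ih =>
    have e : E2 (2*(m+1)) = E2 (2*m) * (1 - X^(4*m+2)) * (1 - X^(4*(m+1))) := by
      simp only [E2, show 2*(m+1) = 2*m+1+1 from by ring, prod_range_succ]
      rw [show 2*(2*m)+2 = 4*m+2 from by ring, show 2*(2*m+1)+2 = 4*(m+1) from by ring]
    rw [e, ← ih]
    simp only [F4, E4, prod_range_succ]
    ring

lemma constCoeff_Uo (m : ℕ) : constantCoeff (Uo m) = 1 := by
  rw [Uo, map_prod]
  refine prod_eq_one fun i _ => ?_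
  rw [map_sub, map_one, map_pow, constantCoeff_X]
  simp

lemma cong_main (n : ℕ) :
    Cong (n+1) (DOs (n+1) * PentS (n+1)) (TriS (4*(n+1)+1)) := by
  set m := n + 1 with hm
  have h1 : Cong (n+1) (PentS m) (E4 m) := cong_pent n m (by omega)
  have h4 : Cong (n+1) (E2 (2*m)) (TriS (4*m+1) * Uo (2*m)) := cong_gauss n m (by omega)
  have h5 : Uo (2*m) = Uo m * ∏ k ∈ range m, (1 - X^(2*(m+k)+1)) := by
    rw [Uo, Uo, show 2*m = m + m from by ring, prod_range_add]
  have h6 : Cong (n+1) (∏ k ∈ range m, (1 - (X : PowerSeries ℤ)^(2*(m+k)+1))) 1 := by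
    apply Cong.prod_one
    intro i _
    have heq : (1 - (X : PowerSeries ℤ)^(2*(m+i)+1)) = 1 + X^(2*(m+i)+1) * (-1) := by ring
    rw [heq]
    have : Cong (n+1) ((X : PowerSeries ℤ)^(2*(m+i)+1) * (-1)) 0 :=
      cong_X_pow_mul (by omega) _
    have h' := (Cong.refl (N := n+1) (A := (1 : PowerSeries ℤ))).add this
    rw [add_zero] at h'
    exact h'
  -- chain
  have hA : Cong (n+1) ((DOs m * PentS m) * Uo m) ((TriS (4*m+1) * ∏ k ∈ range m, (1 - X^(2*(m+k)+1))) * Uo m) := by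
    have e1 : (DOs m * PentS m) * Uo m = F4 m * PentS m := by
      rw [← DOs_mul_Uo]; ring
    rw [e1]
    have c2 : Cong (n+1) (F4 m * PentS m) (F4 m * E4 m) := Cong.mul Cong.refl h1
    rw [F4_mul_E4]  at c2
    refine c2.trans (h4.trans ?_)
    rw [h5]
    have e2 : TriS (4*m+1) * (Uo m * ∏ k ∈ range m, (1 - X^(2*(m+k)+1)))
        = (TriS (4*m+1) * ∏ k ∈ range m, (1 - X^(2*(m+k)+1))) * Uo m := by ring
    rw [e2]
    exact Cong.refl
  have hB := Cong.cancel (constCoeff_Uo m) hA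
  refine hB.trans ?_
  have := (Cong.refl (N := n+1) (A := TriS (4*m+1))).mul h6
  rw [mul_one] at this
  exact this

lemma tri_strictMono : StrictMono tri := by
  apply strictMono_nat_of_lt_succ
  intro n
  show tri n < tri n + (n+1)
  omega

lemma coeff_TriS (n K : ℕ) (h : 2*n < K) :
    coeff n (TriS K) = if ∃ k : ℕ, 2*n = k*(k+1) then 1 else 0 := by
  rw [TriS, map_sum]
  have hco : ∀ k, coeff n ((X : PowerSeries ℤ)^(tri k)) = if n = tri k then 1 else 0 :=
    fun k => coeff_X_pow _ _
  by_cases hex : ∃ k : ℕ, 2*n = k*(k+1)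
  · obtain ⟨k0, hk0⟩ := hex
    have htk : tri k0 = n := by have := two_tri k0; omega
    have hk0le : k0 ≤ 2*n := by
      have h1 : k0 ≤ k0*(k0+1) := Nat.le_mul_of_pos_right k0 (by omega)
      omega
    rw [if_pos ⟨k0, hk0⟩]
    rw [Finset.sum_eq_single k0]
    · rw [hco, if_pos htk.symm]
    · intro k _ hkne
      rw [hco, if_neg]
      intro hn
      exact hkne (tri_strictMono.injective (by omega))
    · intro habs
      exact absurd (mem_range.mpr (by omega)) habs
  · rw [if_neg hex]
    refine Finset.sum_eq_zero fun k _ => ?_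
    rw [hco, if_neg]
    intro hn
    exact hex ⟨k, by have := two_tri k; omega⟩

lemma coeff_DOs (k m : ℕ) (h : k < 2*m+1) : coeff k (DOs m) = (qq k : ℤ) := by
  rw [DOs, ← oddDistinctGF_prop k m h, qq]

lemma neg_one_pow_C (j : ℕ) : ((-1 : PowerSeries ℤ))^j = C ((-1 : ℤ)^j) := by
  rw [map_pow, map_neg, map_one]

lemma coeff_DOs_mul_pent (n : ℕ) :
    coeff n (DOs (n+1) * PentS (n+1))
      = (qq n : ℤ) + ∑ j ∈ range (n+1), (-1:ℤ)^(j+1) *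
          (qqZ ((n:ℤ) - (4*((j+1)*(j+1) + tri j) : ℕ)) +
            qqZ ((n:ℤ) - (4*((j+1)*(j+1) + tri (j+1)) : ℕ))) := by
  set m := n + 1 with hm
  have hexp : DOs m * PentS m = DOs m + ∑ j ∈ range m,
      ((X^(4*((j+1)*(j+1) + tri j)) * DOs m + X^(4*((j+1)*(j+1) + tri (j+1))) * DOs m)
        * C ((-1 : ℤ)^(j+1))) := by
    rw [PentS, mul_add, mul_one, mul_sum]
    congr 1
    refine sum_congr rfl fun j _ => ?_
    rw [← neg_one_pow_C]
    ring
  rw [hexp, map_add, map_sum]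
  congr 1
  · exact coeff_DOs n m (by omega)
  refine sum_congr rfl fun j _ => ?_
  rw [coeff_mul_C, map_add, coeff_X_pow_mul', coeff_X_pow_mul']
  have hq : ∀ e : ℕ, (if e ≤ n then coeff (n - e) (DOs m) else 0) = qqZ ((n:ℤ) - e) := by
    intro e
    split_ifs with he
    · rw [coeff_DOs (n - e) m (by omega), qqZ, if_pos (by push_cast; omega)]
      congr 2
      omega
    · rw [qqZ, if_neg (by push_cast; omega)]
  rw [hq, hq]
  ring

end

end QQ5



open QQ5 in

/-- For every `n ≥ 0`,
`qq(n) + ∑_{j ≥ 1} (-1)^j [qq(n - 2j(3j-1)) + qq(n - 2j(3j+1))]` equals `1` if `n`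
is a triangular number and `0` otherwise. -/
theorem stmt5 (n : ℕ) :
    (qq n : ℤ) +
      ∑' j : ℕ, (-1 : ℤ) ^ (j + 1) *
        (qqZ ((n : ℤ) - 2 * (((j : ℤ) + 1) * (3 * ((j : ℤ) + 1) - 1))) +
          qqZ ((n : ℤ) - 2 * (((j : ℤ) + 1) * (3 * ((j : ℤ) + 1) + 1)))) =
      if ∃ k : ℕ, 2 * n = k * (k + 1) then 1 else 0 := by
  have hcast1 : ∀ j : ℕ, ((4*((j+1)*(j+1) + tri j) : ℕ) : ℤ)
      = 2 * (((j : ℤ) + 1) * (3 * ((j : ℤ) + 1) - 1)) := by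
    intro j
    have h2t : ((2 * tri j : ℕ) : ℤ) = (j : ℤ) * ((j : ℤ)+1) := by
      rw [two_tri j]; push_cast; ring
    push_cast at h2t ⊢
    linear_combination 2 * h2t
  have hcast2 : ∀ j : ℕ, ((4*((j+1)*(j+1) + tri (j+1)) : ℕ) : ℤ)
      = 2 * (((j : ℤ) + 1) * (3 * ((j : ℤ) + 1) + 1)) := by
    intro j
    have h2t : ((2 * tri (j+1) : ℕ) : ℤ) = ((j : ℤ)+1) * ((j : ℤ)+2) := by
      rw [two_tri (j+1)]; push_cast; ring
    push_cast at h2t ⊢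
    linear_combination 2 * h2t
  have hsupp : ∀ j : ℕ, j ∉ range (n+1) →
      (-1 : ℤ) ^ (j + 1) *
        (qqZ ((n : ℤ) - 2 * (((j : ℤ) + 1) * (3 * ((j : ℤ) + 1) - 1))) +
          qqZ ((n : ℤ) - 2 * (((j : ℤ) + 1) * (3 * ((j : ℤ) + 1) + 1)))) = 0 := by
    intro j hj
    have hjn : (n : ℤ) < (j : ℤ) + 1 := by
      have := mem_range.not.mp hj
      push_cast
      omega
    have hb1 : (n : ℤ) - 2 * (((j : ℤ) + 1) * (3 * ((j : ℤ) + 1) - 1)) < 0 := by nlinarith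
    have hb2 : (n : ℤ) - 2 * (((j : ℤ) + 1) * (3 * ((j : ℤ) + 1) + 1)) < 0 := by nlinarith
    rw [qqZ, if_neg (by omega), qqZ, if_neg (by omega)]
    ring
  rw [tsum_eq_sum hsupp]
  have hterm : ∀ j ∈ range (n+1),
      (-1 : ℤ) ^ (j + 1) *
        (qqZ ((n : ℤ) - 2 * (((j : ℤ) + 1) * (3 * ((j : ℤ) + 1) - 1))) +
          qqZ ((n : ℤ) - 2 * (((j : ℤ) + 1) * (3 * ((j : ℤ) + 1) + 1))))
      = (-1:ℤ)^(j+1) *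
          (qqZ ((n:ℤ) - (4*((j+1)*(j+1) + tri j) : ℕ)) +
            qqZ ((n:ℤ) - (4*((j+1)*(j+1) + tri (j+1)) : ℕ))) := by
    intro j _
    rw [hcast1 j, hcast2 j]
  rw [sum_congr rfl hterm, ← coeff_DOs_mul_pent n]
  have hC := cong_main n
  rw [hC n (by omega), coeff_TriS n (4*(n+1)+1) (by omega)]
end

section
/- Let p_{R2}(n) denote the number of partitions of n into parts congruent to 2 or 3 modulo 5. For every integer n ≥ 0, p_{R2}(n) + ∑_{j≥1} (−1)^j [ p_{R2}(n − j(3j−1)/2) + p_{R2}(n − j(3j+1)/2) ] equals (−1)^j if n = j(5j+3)/2 for some integer j ∈ ℤ (the generalized heptagonal numbers), and equals 0 otherwise; the sum is finite under the convention p_{R2}(x) = 0 for x < 0. -/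
/-- `pR2 n` is the number of partitions of `n` all of whose parts are congruent to
`2` or `3` modulo `5` (i.e. to `±2 (mod 5)`). -/
def pR2 (n : ℕ) : ℕ :=
  (Finset.univ.filter fun P : Nat.Partition n => ∀ i ∈ P.parts, i % 5 = 2 ∨ i % 5 = 3).card

/-- `pR2Z` extends `pR2` to `ℤ` by the convention `pR2 x = 0` for `x < 0`. -/
def pR2Z (x : ℤ) : ℤ := if 0 ≤ x then (pR2 x.toNat : ℤ) else 0


open Finset PowerSeries

section GaussBinomial
variable {A : Type*} [CommRing A]

/-- Gaussian binomial as a polynomial expression in `Q`. -/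
def gb (Q : A) : ℕ → ℕ → A
  | _, 0 => 1
  | 0, _+1 => 0
  | M+1, k+1 => Q^(k+1) * gb Q M (k+1) + gb Q M k

@[simp] lemma gb_zero (Q : A) (M : ℕ) : gb Q M 0 = 1 := by cases M <;> rfl

lemma gb_succ (Q : A) (M k : ℕ) :
    gb Q (M+1) (k+1) = Q^(k+1) * gb Q M (k+1) + gb Q M k := rfl

lemma gb_of_lt (Q : A) : ∀ M k, M < k → gb Q M k = 0 := by
  intro M
  induction M with
  | zero => intro k hk; match k, hk with | (k+1), _ => rfl
  | succ M ih =>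
    intro k hk
    match k, hk with
    | (k+1), hk =>
      rw [gb_succ, ih (k+1) (by omega), ih k (by omega), mul_zero, zero_add]

lemma gb_diag (Q : A) : ∀ M, gb Q M M = 1 := by
  intro M
  induction M with
  | zero => rfl
  | succ M ih => rw [gb_succ, gb_of_lt Q M (M+1) (by omega), ih, mul_zero, zero_add]

lemma gb_pascal (Q : A) : ∀ M k, gb Q (M+1) (k+1) = gb Q M (k+1) + Q^(M - k) * gb Q M k := by
  intro M
  induction M with
  | zero =>
    intro k
    cases k with
    | zero => simp [gb_succ, gb_of_lt Q 0 1 (by omega)]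
    | succ k => simp [gb_succ, gb_of_lt Q 0 (k+1) (by omega), gb_of_lt Q 0 (k+2) (by omega)]
  | succ M ih =>
    intro k
    cases k with
    | zero =>
      have h3 : gb Q (M+1+1) (0+1) = Q^(0+1) * gb Q (M+1) (0+1) + gb Q (M+1) 0 := gb_succ ..
      have hb2 : gb Q (M+1) (0+1) = gb Q M (0+1) + Q^(M-0) * gb Q M 0 := ih 0
      have hb2def : gb Q (M+1) (0+1) = Q^(0+1) * gb Q M (0+1) + gb Q M 0 := gb_succ ..
      simp only [gb_zero, Nat.sub_zero, pow_one, mul_one] at *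
      linear_combination h3 + Q * hb2 - hb2def
    | succ k =>
      have h3 : gb Q (M+2) (k+2) = Q^(k+2) * gb Q (M+1) (k+2) + gb Q (M+1) (k+1) := gb_succ ..
      have hb2 : gb Q (M+1) (k+2) = gb Q M (k+2) + Q^(M-(k+1)) * gb Q M (k+1) := ih (k+1)
      have hb2def : gb Q (M+1) (k+2) = Q^(k+2) * gb Q M (k+2) + gb Q M (k+1) := gb_succ ..
      have hb1def : gb Q (M+1) (k+1) = Q^(k+1) * gb Q M (k+1) + gb Q M k := gb_succ ..
      have hb1' : gb Q (M+1) (k+1) = gb Q M (k+1) + Q^(M-k) * gb Q M k := ih k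
      rcases lt_or_ge k M with hk | hk
      · have e1 : Q^(k+2) * Q^(M-(k+1)) = Q^(M+1) := by rw [← pow_add]; congr 1; omega
        have e2 : Q^(M-k) * Q^(k+1) = Q^(M+1) := by rw [← pow_add]; congr 1; omega
        have hsub : M + 1 - (k+1) = M - k := by omega
        rw [hsub]
        linear_combination h3 + Q^(k+2) * hb2 - hb2def + hb1' - Q^(M-k) * hb1def +
          gb Q M (k+1) * e1 - gb Q M (k+1) * e2
      · -- k ≥ M: everything high vanishes
        have hsub : M + 1 - (k+1) = M - k := by omega
        rw [hsub]
        rcases eq_or_lt_of_le hk with rfl | hk'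
        · rw [gb_diag Q (M+1+1), gb_of_lt Q (M+1) (M+1+1) (by omega), gb_diag Q (M+1),
            Nat.sub_self, pow_zero]
          ring
        · rw [gb_of_lt Q (M+1+1) (k+1+1) (by omega), gb_of_lt Q (M+1) (k+1+1) (by omega),
            gb_of_lt Q (M+1) (k+1) (by omega)]
          ring

lemma gb_prod (Q : A) : ∀ M k, k ≤ M →
    gb Q M k * ∏ i ∈ Icc 1 k, (1 - Q^i) = ∏ i ∈ Icc (M-k+1) M, (1 - Q^i) := by
  intro M
  induction M with
  | zero =>
    intro k hk
    interval_cases k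
    simp
  | succ M ih =>
    intro k hk
    cases k with
    | zero =>
      simp only [gb_zero, one_mul, Nat.sub_zero]
      rw [Icc_eq_empty (by omega), Icc_eq_empty (by omega)]
    | succ k =>
      rcases lt_or_ge (k+1) (M+1) with hkM | hkM
      · have hkM' : k + 1 ≤ M := by omega
        rw [gb_pascal, add_mul]
        have e1 : gb Q M (k+1) * ∏ i ∈ Icc 1 (k+1), (1 - Q^i)
            = ∏ i ∈ Icc (M-(k+1)+1) M, (1 - Q^i) := ih (k+1) hkM'
        have e2 : gb Q M k * ∏ i ∈ Icc 1 k, (1 - Q^i) = ∏ i ∈ Icc (M-k+1) M, (1 - Q^i) :=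
          ih k (by omega)
        have hsplit : ∏ i ∈ Icc 1 (k+1), (1 - Q^i)
            = (∏ i ∈ Icc 1 k, (1 - Q^i)) * (1 - Q^(k+1)) := by
          rw [prod_Icc_succ_top (by omega)]
        have hsplit2 : ∏ i ∈ Icc (M-(k+1)+1) M, (1 - Q^i)
            = (1 - Q^(M+1-(k+1))) * ∏ i ∈ Icc (M-k+1) M, (1 - Q^i) := by
          have h1 : Icc (M-(k+1)+1) M = Ico (M+1-(k+1)) (M+1) := by
            ext x; simp only [mem_Icc, mem_Ico]; omega
          have h2 : Icc (M-k+1) M = Ico (M+1-(k+1)+1) (M+1) := by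
            ext x; simp only [mem_Icc, mem_Ico]; omega
          rw [h1, h2, Finset.prod_eq_prod_Ico_succ_bot (by omega)]
        have hM1 : M+1-(k+1) = M-k := by omega
        have hexp' : Q^(M-k) * Q^(k+1) = Q^(M+1) := by rw [← pow_add]; congr 1; omega
        have target : Icc (M+1-(k+1)+1) (M+1) = Icc (M-k+1) M ∪ {M+1} := by
          ext x; simp only [mem_Icc, mem_union, mem_singleton]; omega
        have final : ∏ i ∈ Icc (M+1-(k+1)+1) (M+1), (1-Q^i)
            = (∏ i ∈ Icc (M-k+1) M, (1-Q^i)) * (1-Q^(M+1)) := by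
          rw [target, prod_union (by simp only [disjoint_singleton_right, mem_Icc]; omega),
            prod_singleton]
        calc gb Q M (k+1) * ∏ i ∈ Icc 1 (k+1), (1 - Q^i)
              + Q^(M-k) * gb Q M k * ∏ i ∈ Icc 1 (k+1), (1 - Q^i)
            = gb Q M (k+1) * ∏ i ∈ Icc 1 (k+1), (1-Q^i)
              + Q^(M-k) * ((gb Q M k * ∏ i ∈ Icc 1 k, (1-Q^i)) * (1 - Q^(k+1))) := by
              rw [hsplit]; ring
          _ = ∏ i ∈ Icc (M-(k+1)+1) M, (1-Q^i)
              + Q^(M-k) * ((∏ i ∈ Icc (M-k+1) M, (1-Q^i)) * (1 - Q^(k+1))) := by rw [e1, e2]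
          _ = (∏ i ∈ Icc (M-k+1) M, (1-Q^i)) * (1 - Q^(M+1)) := by
              rw [hsplit2, hM1]
              linear_combination (-(∏ i ∈ Icc (M-k+1) M, (1 - Q^i))) * hexp'
          _ = ∏ i ∈ Icc (M+1-(k+1)+1) (M+1), (1-Q^i) := final.symm
      · -- k+1 = M+1
        have hk1 : k = M := by omega
        subst hk1
        rw [gb_diag, one_mul, show k+1-(k+1)+1 = 1 from by omega]

end GaussBinomial

section JTP
variable {A : Type*} [CommRing A]

/-- Triangular-type exponent `(i-N)(i-N+1)/2`. -/
def TT (N i : ℕ) : ℕ := ((((i:ℤ) - N) * ((i:ℤ) - N + 1)) / 2).toNat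

lemma consec_nonneg (m : ℤ) : 0 ≤ m * (m + 1) := by nlinarith [sq_nonneg (2*m+1)]

lemma TT_cast (N i : ℕ) : (TT N i : ℤ) = ((i:ℤ) - N) * ((i:ℤ) - N + 1) / 2 := by
  rw [TT, Int.toNat_of_nonneg]
  exact Int.ediv_nonneg (consec_nonneg _) (by norm_num)

lemma TT2 (N i : ℕ) : 2 * (TT N i : ℤ) = ((i:ℤ) - N) * ((i:ℤ) - N + 1) := by
  rw [TT_cast]
  exact Int.mul_ediv_cancel' (Int.even_mul_succ_self _).two_dvd

lemma T1 (N i : ℕ) : TT N i + N = TT (N+1) i + i := by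
  have a := TT2 N i
  have b := TT2 (N+1) i
  push_cast at b
  have key : 2 * ((TT N i : ℤ) + N) = 2 * ((TT (N+1) i : ℤ) + i) := by
    linear_combination a - b
  omega

lemma T2 (N i : ℕ) : TT N i = TT (N+1) (i+1) := by
  have a := TT2 N i
  have b := TT2 (N+1) (i+1)
  push_cast at b
  have key : 2 * (TT N i : ℤ) = 2 * (TT (N+1) (i+1) : ℤ) := by
    linear_combination a - b
  omega

lemma T3 (N m : ℕ) (hm : m ≤ 2*N) : TT N m + (N+1) = TT (N+1) (m+2) + (2*N - m) := by
  have a := TT2 N m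
  have b := TT2 (N+1) (m+2)
  push_cast at b
  have key : 2 * ((TT N m : ℤ) + (N+1)) = 2 * ((TT (N+1) (m+2) : ℤ) + (2*(N:ℤ) - m)) := by
    linear_combination a - b
  omega

lemma gb_key (Q : A) (N m : ℕ) (hm : m ≤ 2*N) :
    gb Q (2*N+2) (m+2) = (1 + Q^(2*N+1)) * gb Q (2*N) (m+1)
      + Q^(m+2) * gb Q (2*N) (m+2) + Q^(2*N-m) * gb Q (2*N) m := by
  have h1 : gb Q (2*N+2) (m+2)
      = gb Q (2*N+1) (m+2) + Q^(2*N+1-(m+1)) * gb Q (2*N+1) (m+1) := by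
    simpa using gb_pascal Q (2*N+1) (m+1)
  have h2 : gb Q (2*N+1) (m+2) = Q^(m+2) * gb Q (2*N) (m+2) + gb Q (2*N) (m+1) := by
    simpa using gb_succ Q (2*N) (m+1)
  have h3 : gb Q (2*N+1) (m+1) = Q^(m+1) * gb Q (2*N) (m+1) + gb Q (2*N) m := by
    simpa using gb_succ Q (2*N) m
  have e2 : 2*N+1-(m+1) = 2*N-m := by omega
  have e' : Q^(2*N-m) * Q^(m+1) = Q^(2*N+1) := by rw [← pow_add]; congr 1; omega
  rw [e2] at h1
  rw [h1, h2, h3]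
  linear_combination gb Q (2*N) (m+1) * e'

lemma gb_key1 (Q : A) (N : ℕ) :
    gb Q (2*N+2) 1 = (1 + Q^(2*N+1)) + Q * gb Q (2*N) 1 := by
  have h1 : gb Q (2*N+2) 1 = gb Q (2*N+1) 1 + Q^(2*N+1) * gb Q (2*N+1) 0 := by
    simpa using gb_pascal Q (2*N+1) 0
  have h2 : gb Q (2*N+1) 1 = Q^1 * gb Q (2*N) 1 + gb Q (2*N) 0 := by
    simpa using gb_succ Q (2*N) 0
  rw [h1, h2, gb_zero, gb_zero]
  ring

open Finset in
lemma sum_shift1 (m : ℕ) (z : A) (f : ℕ → A) :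
    ∑ i ∈ range m, z^(i+1) * f i
      = ∑ i ∈ range (m+1), z^i * (if i = 0 then 0 else f (i-1)) := by
  rw [Finset.sum_range_succ' (fun i => z^i * (if i = 0 then 0 else f (i-1))) m]
  simp

open Finset in
lemma sum_shift2 (m : ℕ) (z : A) (f : ℕ → A) :
    ∑ i ∈ range m, z^(i+2) * f i
      = ∑ i ∈ range (m+2), z^i * (if i < 2 then 0 else f (i-2)) := by
  have step1 : ∑ i ∈ range m, z^(i+2) * f i
      = ∑ i ∈ range (m+1), z^(i+1) * (if i = 0 then 0 else f (i-1)) := by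
    rw [Finset.sum_range_succ' (fun i => z^(i+1) * (if i = 0 then 0 else f (i-1))) m]
    simp only [if_pos rfl, if_true, mul_zero, add_zero, Nat.add_sub_cancel, Nat.succ_ne_zero,
      if_false]
  rw [step1, sum_shift1]
  apply Finset.sum_congr rfl
  intro i _
  congr 1
  match i with
  | 0 => simp
  | 1 => simp
  | (i+2) =>
    rw [if_neg (by omega : ¬(i+2 = 0)), if_neg (by omega : ¬(i+2-1 = 0)),
      if_neg (by omega : ¬(i+2 < 2))]
    congr 1

open Finset in
lemma sum_extend {m M : ℕ} (f : ℕ → A) (h : m ≤ M) (hf : ∀ i, m ≤ i → f i = 0) :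
    ∑ i ∈ range m, f i = ∑ i ∈ range M, f i := by
  apply Finset.sum_subset (Finset.range_subset_range.2 h)
  intro x _ hxm
  exact hf x (by simpa using hxm)

open Finset in
theorem jtp (z Q : A) : ∀ N, ∏ k ∈ Icc 1 N, ((1 + z*Q^k) * (z + Q^(k-1))) =
    ∑ i ∈ range (2*N+1), z^i * (Q^(TT N i) * gb Q (2*N) i) := by
  intro N
  induction N with
  | zero =>
    rw [Icc_eq_empty (by omega), prod_empty, show 2*0+1 = 1 from rfl, Finset.sum_range_one]
    norm_num [TT]
  | succ N ih =>
    have hgb_hi : ∀ j, 2*N+1 ≤ j → Q^(TT N j) * gb Q (2*N) j = 0 := by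
      intro j hj
      rw [gb_of_lt Q (2*N) j (by omega), mul_zero]
    rw [prod_Icc_succ_top (show 1 ≤ N+1 by omega), ih, show N+1-1 = N from rfl]
    have hQQ : Q^(N+1) * Q^N = Q^(2*N+1) := by rw [← pow_add]; congr 1; omega
    have hexp : (1 + z*Q^(N+1)) * (z + Q^N) = z + Q^N + z^2*Q^(N+1) + z*Q^(2*N+1) := by
      linear_combination z * hQQ
    rw [hexp]
    have hS : (∑ i ∈ range (2*N+1), z^i * (Q^(TT N i) * gb Q (2*N) i))
        * (z + Q^N + z^2*Q^(N+1) + z*Q^(2*N+1))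
      = (∑ i ∈ range (2*N+1), z^(i+1) * (Q^(TT N i) * gb Q (2*N) i))
      + ((∑ i ∈ range (2*N+1), z^i * (Q^N * (Q^(TT N i) * gb Q (2*N) i)))
      + ((∑ i ∈ range (2*N+1), z^(i+2) * (Q^(N+1) * (Q^(TT N i) * gb Q (2*N) i)))
      + (∑ i ∈ range (2*N+1), z^(i+1) * (Q^(2*N+1) * (Q^(TT N i) * gb Q (2*N) i))))) := by
      rw [← Finset.sum_add_distrib, ← Finset.sum_add_distrib, ← Finset.sum_add_distrib,
        Finset.sum_mul]
      exact Finset.sum_congr rfl fun i _ => by ring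
    rw [hS]
    -- normalize all four sums to range (2*N+3)
    have S1 : ∑ i ∈ range (2*N+1), z^(i+1) * (Q^(TT N i) * gb Q (2*N) i)
        = ∑ i ∈ range (2*N+3), z^i *
            (if i = 0 then 0 else Q^(TT N (i-1)) * gb Q (2*N) (i-1)) := by
      rw [sum_shift1]
      apply sum_extend _ (by omega)
      intro i hi
      rcases Nat.eq_zero_or_pos i with rfl | hpos
      · simp
      · rw [if_neg (by omega)]; simp [hgb_hi (i-1) (by omega)]
    have S2 : ∑ i ∈ range (2*N+1), z^i * (Q^N * (Q^(TT N i) * gb Q (2*N) i))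
        = ∑ i ∈ range (2*N+3), z^i * (Q^N * (Q^(TT N i) * gb Q (2*N) i)) := by
      apply sum_extend _ (by omega)
      intro i hi
      simp [hgb_hi i (by omega)]
    have S3 : ∑ i ∈ range (2*N+1), z^(i+2) * (Q^(N+1) * (Q^(TT N i) * gb Q (2*N) i))
        = ∑ i ∈ range (2*N+3), z^i *
            (if i < 2 then 0 else Q^(N+1) * (Q^(TT N (i-2)) * gb Q (2*N) (i-2))) := by
      rw [sum_shift2]
    have S4 : ∑ i ∈ range (2*N+1), z^(i+1) * (Q^(2*N+1) * (Q^(TT N i) * gb Q (2*N) i))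
        = ∑ i ∈ range (2*N+3), z^i *
            (if i = 0 then 0 else Q^(2*N+1) * (Q^(TT N (i-1)) * gb Q (2*N) (i-1))) := by
      rw [sum_shift1]
      apply sum_extend _ (by omega)
      intro i hi
      rcases Nat.eq_zero_or_pos i with rfl | hpos
      · simp
      · rw [if_neg (by omega)]; simp [hgb_hi (i-1) (by omega)]
    rw [S1, S2, S3, S4, ← Finset.sum_add_distrib, ← Finset.sum_add_distrib,
      ← Finset.sum_add_distrib]
    rw [show 2*(N+1)+1 = 2*N+3 from by ring]
    apply Finset.sum_congr rfl
    intro i hi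
    rw [mem_range] at hi
    rw [← mul_add, ← mul_add, ← mul_add]
    congr 1
    match i with
    | 0 =>
      rw [if_pos rfl, if_pos (by omega : (0:ℕ) < 2), if_pos rfl]
      simp only [gb_zero, mul_one, zero_add, add_zero]
      rw [← pow_add, show N + TT N 0 = TT (N+1) 0 from by have := T1 N 0; omega]
    | 1 =>
      rw [if_neg (by omega), if_pos (by omega), if_neg (by omega)]
      simp only [show (1:ℕ)-1 = 0 from rfl, gb_zero, mul_one]
      rw [show 2*(N+1) = 2*N+2 from by ring, gb_key1]
      have m0 : TT N 0 = TT (N+1) 1 := T2 N 0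
      have m1 : Q^N * Q^(TT N 1) = Q^(TT (N+1) 1) * Q := by
        rw [← pow_add, ← pow_succ]; congr 1; have := T1 N 1; omega
      rw [m0]
      linear_combination gb Q (2*N) 1 * m1
    | (m+2) =>
      rw [if_neg (by omega), if_neg (by omega), if_neg (by omega)]
      simp only [show m+2-1 = m+1 from by omega, show m+2-2 = m from by omega]
      have hm : m ≤ 2*N := by omega
      rw [show 2*(N+1) = 2*N+2 from by ring, gb_key Q N m hm]
      have mA : TT N (m+1) = TT (N+1) (m+2) := T2 N (m+1)
      have mB : Q^N * Q^(TT N (m+2)) = Q^(TT (N+1) (m+2)) * Q^(m+2) := by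
        rw [← pow_add, ← pow_add]; congr 1; have := T1 N (m+2); omega
      have mC : Q^(N+1) * Q^(TT N m) = Q^(TT (N+1) (m+2)) * Q^(2*N-m) := by
        rw [← pow_add, ← pow_add]; congr 1; have := T3 N m hm; omega
      rw [mA]
      linear_combination gb Q (2*N) (m+2) * mB + gb Q (2*N) m * mC

end JTP

section Specialize

lemma gb_map {A B : Type*} [CommRing A] [CommRing B] (f : A →+* B) (Q : A) :
    ∀ M k, f (gb Q M k) = gb (f Q) M k := by
  intro M
  induction M with
  | zero =>
    intro k
    cases k with
    | zero => simp
    | succ k => rw [show gb Q 0 (k+1) = 0 from rfl, show gb (f Q) 0 (k+1) = 0 from rfl, map_zero]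
  | succ M ih =>
    intro k
    cases k with
    | zero => simp
    | succ k => rw [gb_succ, gb_succ, map_add, map_mul, map_pow, ih, ih]

/-- The exponent `(N-i)*b + c*(i-N)(i-N+1)/2`. -/
def EE (c b N i : ℕ) : ℕ := (((N:ℤ) - i)*b + c * TT N i).toNat

lemma TT_ge (N i : ℕ) : (i:ℤ) - N ≤ (TT N i : ℤ) := by
  have h1 := TT2 N i
  have h2 := consec_nonneg ((i:ℤ) - N - 1)
  nlinarith

lemma EE_nonneg (c b N i : ℕ) (hbc : b ≤ c) : 0 ≤ ((N:ℤ) - i)*b + c * TT N i := by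
  rcases le_total (i:ℤ) (N:ℤ) with h | h
  · have h1 : (0:ℤ) ≤ (TT N i : ℤ) := Int.natCast_nonneg _
    have hb' : (0:ℤ) ≤ (b:ℤ) := Int.natCast_nonneg _
    have hc' : (0:ℤ) ≤ (c:ℤ) := Int.natCast_nonneg _
    nlinarith
  · have h1 := TT_ge N i
    have hb' : (b:ℤ) ≤ (c:ℤ) := by exact_mod_cast hbc
    have hb0 : (0:ℤ) ≤ (b:ℤ) := Int.natCast_nonneg _
    nlinarith

lemma EE_cast (c b N i : ℕ) (hbc : b ≤ c) :
    ((EE c b N i : ℕ) : ℤ) = ((N:ℤ) - i)*b + c * TT N i := by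
  rw [EE, Int.toNat_of_nonneg (EE_nonneg c b N i hbc)]

open Finset PowerSeries in
theorem prop1 (c b : ℕ) (hb : 0 < b) (hbc : 2*b < c) (N : ℕ) :
    (∏ k ∈ Icc 1 N, ((1 - (X:PowerSeries ℤ)^(c*k-b)) * (1 - (X:PowerSeries ℤ)^(c*k-(c-b)))))
      * (∏ k ∈ Icc 1 (2*N), (1 - (X:PowerSeries ℤ)^(c*k)))
    = ∑ i ∈ range (2*N+1), (-1:PowerSeries ℤ)^(N+i) * X^(EE c b N i) *
        ((∏ j ∈ Icc (2*N-i+1) (2*N), (1 - (X:PowerSeries ℤ)^(c*j)))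
          * (∏ j ∈ Icc (i+1) (2*N), (1 - (X:PowerSeries ℤ)^(c*j)))) := by
  have hbc' : b ≤ c := by omega
  apply HahnSeries.ofPowerSeries_injective (Γ := ℤ) (R := ℤ)
  set φ : PowerSeries ℤ →+* LaurentSeries ℤ := HahnSeries.ofPowerSeries ℤ ℤ with hφ
  set z : LaurentSeries ℤ := -(HahnSeries.single (-(b:ℤ)) 1) with hz
  set Q : LaurentSeries ℤ := φ ((X:PowerSeries ℤ) ^ c) with hQ
  have hQpow : ∀ m : ℕ, Q ^ m = HahnSeries.single ((c*m : ℕ) : ℤ) 1 := by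
    intro m
    rw [hQ, ← map_pow, ← pow_mul, hφ, HahnSeries.ofPowerSeries_X_pow]
  have hXpow : ∀ m : ℕ, φ ((X:PowerSeries ℤ) ^ m) = HahnSeries.single ((m:ℕ) : ℤ) 1 :=
    fun m => HahnSeries.ofPowerSeries_X_pow m
  have key := jtp z Q N
  -- LHS factors
  have fact1 : ∀ k, 1 ≤ k → 1 + z * Q^k = φ (1 - X^(c*k-b)) := by
    intro k hk
    rw [map_sub, show φ (1:PowerSeries ℤ) = 1 from map_one φ, hXpow, hQpow, hz]
    have hck : c ≤ c * k := Nat.le_mul_of_pos_right c hk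
    have hbck : b ≤ c*k := by omega
    have e : HahnSeries.single (-(b:ℤ)) (1:ℤ) * HahnSeries.single ((c*k : ℕ):ℤ) 1
        = HahnSeries.single ((c*k-b : ℕ) : ℤ) 1 := by
      rw [HahnSeries.single_mul_single, one_mul]
      congr 1
      push_cast [Nat.cast_sub hbck]
      ring
    linear_combination -e
  have fact2 : ∀ k, 1 ≤ k → z + Q^(k-1)
      = (-(HahnSeries.single (-(b:ℤ)) 1)) * φ (1 - X^(c*k-(c-b))) := by
    intro k hk
    rw [map_sub, show φ (1:PowerSeries ℤ) = 1 from map_one φ, hXpow, hQpow, hz]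
    have hck : c ≤ c * k := Nat.le_mul_of_pos_right c hk
    have h1 : c - b ≤ c*k := by omega
    have e : HahnSeries.single (-(b:ℤ)) (1:ℤ) * HahnSeries.single ((c*k-(c-b) : ℕ):ℤ) 1
        = HahnSeries.single ((c*(k-1) : ℕ) : ℤ) 1 := by
      rw [HahnSeries.single_mul_single, one_mul]
      congr 1
      push_cast [Nat.cast_sub h1, Nat.cast_sub hbc', Nat.cast_sub hk]
      ring
    linear_combination -e
  have hL : ∏ k ∈ Icc 1 N, ((1 + z*Q^k) * (z + Q^(k-1)))
      = (-(HahnSeries.single (-(b:ℤ)) 1))^N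
        * φ (∏ k ∈ Icc 1 N, ((1 - (X:PowerSeries ℤ)^(c*k-b)) * (1 - X^(c*k-(c-b))))) := by
    rw [map_prod]
    have hcong : ∀ k ∈ Icc 1 N, (1 + z*Q^k) * (z + Q^(k-1))
        = (-(HahnSeries.single (-(b:ℤ)) 1))
          * φ ((1 - (X:PowerSeries ℤ)^(c*k-b)) * (1 - X^(c*k-(c-b)))) := by
      intro k hk
      rw [mem_Icc] at hk
      rw [map_mul, fact1 k hk.1, fact2 k hk.1]
      ring
    rw [prod_congr rfl hcong, prod_mul_distrib, prod_const, Nat.card_Icc]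
    norm_num
  have hnegpow : ∀ n : ℕ, (-(HahnSeries.single (-(b:ℤ)) (1:ℤ)) : LaurentSeries ℤ)^n
      = (-1)^n * HahnSeries.single (-((n:ℤ)*b)) 1 := by
    intro n
    rw [show (-(HahnSeries.single (-(b:ℤ)) (1:ℤ)) : LaurentSeries ℤ)
        = (-1) * HahnSeries.single (-(b:ℤ)) 1 from by ring,
      mul_pow, HahnSeries.single_pow, one_pow]
    congr 2
    rw [nsmul_eq_mul]
    push_cast
    ring
  have hRt : ∀ i : ℕ, z^i * (Q^(TT N i) * gb Q (2*N) i)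
      = (-1:LaurentSeries ℤ)^i * (HahnSeries.single (-(i:ℤ)*b + c*TT N i) 1
          * φ (gb ((X:PowerSeries ℤ)^c) (2*N) i)) := by
    intro i
    have e3 : gb Q (2*N) i = φ (gb ((X:PowerSeries ℤ)^c) (2*N) i) := by
      rw [hQ]; exact (gb_map φ _ _ _).symm
    have e4 : HahnSeries.single (-((i:ℤ)*b)) (1:ℤ) * HahnSeries.single ((c*TT N i : ℕ):ℤ) 1
        = HahnSeries.single (-(i:ℤ)*b + c*TT N i) 1 := by
      rw [HahnSeries.single_mul_single, one_mul]
      congr 1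
      push_cast
      ring
    rw [hz, hnegpow i, hQpow, e3]
    linear_combination ((-1:LaurentSeries ℤ)^i * φ (gb ((X:PowerSeries ℤ)^c) (2*N) i)) * e4
  simp only [hRt] at key
  rw [hL] at key
  -- multiply by (-1)^N * single(N*b)
  have hu : ((-1:LaurentSeries ℤ)^N * HahnSeries.single ((N:ℤ)*b) 1)
      * (-(HahnSeries.single (-(b:ℤ)) 1))^N = 1 := by
    rw [hnegpow N]
    have h2 : HahnSeries.single ((N:ℤ)*b) (1:ℤ) * HahnSeries.single (-((N:ℤ)*b)) 1
        = 1 := by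
      rw [HahnSeries.single_mul_single, one_mul, show (N:ℤ)*b + -((N:ℤ)*b) = 0 from by ring]
      exact HahnSeries.single_zero_one
    calc ((-1:LaurentSeries ℤ)^N * HahnSeries.single ((N:ℤ)*b) 1)
          * ((-1)^N * HahnSeries.single (-((N:ℤ)*b)) 1)
        = ((-1:LaurentSeries ℤ)^(N+N))
          * (HahnSeries.single ((N:ℤ)*b) 1 * HahnSeries.single (-((N:ℤ)*b)) 1) := by
          rw [pow_add]; ring
      _ = 1 := by rw [h2, mul_one, ← two_mul, pow_mul]; norm_num
  have key2 : φ (∏ k ∈ Icc 1 N, ((1 - (X:PowerSeries ℤ)^(c*k-b)) * (1 - X^(c*k-(c-b)))))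
      = ∑ i ∈ range (2*N+1), (-1:LaurentSeries ℤ)^(N+i)
          * (HahnSeries.single (((N:ℤ)-i)*b + c*TT N i) 1
            * φ (gb ((X:PowerSeries ℤ)^c) (2*N) i)) := by
    calc φ (∏ k ∈ Icc 1 N, ((1 - (X:PowerSeries ℤ)^(c*k-b)) * (1 - X^(c*k-(c-b)))))
        = ((-1:LaurentSeries ℤ)^N * HahnSeries.single ((N:ℤ)*b) 1)
          * ((-(HahnSeries.single (-(b:ℤ)) 1))^N
          * φ (∏ k ∈ Icc 1 N, ((1 - (X:PowerSeries ℤ)^(c*k-b)) * (1 - X^(c*k-(c-b)))))) := by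
          rw [← mul_assoc, hu, one_mul]
      _ = ((-1:LaurentSeries ℤ)^N * HahnSeries.single ((N:ℤ)*b) 1)
          * ∑ i ∈ range (2*N+1), (-1:LaurentSeries ℤ)^i
            * (HahnSeries.single (-(i:ℤ)*b + c*TT N i) 1
              * φ (gb ((X:PowerSeries ℤ)^c) (2*N) i)) := by rw [← key]
      _ = ∑ i ∈ range (2*N+1), (-1:LaurentSeries ℤ)^(N+i)
            * (HahnSeries.single (((N:ℤ)-i)*b + c*TT N i) 1
              * φ (gb ((X:PowerSeries ℤ)^c) (2*N) i)) := by
          rw [Finset.mul_sum]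
          apply Finset.sum_congr rfl
          intro i _
          have e5 : HahnSeries.single ((N:ℤ)*b) (1:ℤ)
              * HahnSeries.single (-(i:ℤ)*b + c*TT N i) 1
              = HahnSeries.single (((N:ℤ)-i)*b + c*TT N i) 1 := by
            rw [HahnSeries.single_mul_single, one_mul]
            congr 1
            ring
          rw [pow_add]
          linear_combination ((-1:LaurentSeries ℤ)^N * (-1:LaurentSeries ℤ)^i
            * φ (gb ((X:PowerSeries ℤ)^c) (2*N) i)) * e5
  -- final assembly
  have hW : ∀ i, i ≤ 2*N → gb ((X:PowerSeries ℤ)^c) (2*N) i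
        * ∏ k ∈ Icc 1 (2*N), (1 - (X:PowerSeries ℤ)^(c*k))
      = (∏ j ∈ Icc (2*N-i+1) (2*N), (1 - (X:PowerSeries ℤ)^(c*j)))
        * ∏ j ∈ Icc (i+1) (2*N), (1 - (X:PowerSeries ℤ)^(c*j)) := by
    intro i hi'
    have hpm : ∀ (s : Finset ℕ), ∏ j ∈ s, (1 - ((X:PowerSeries ℤ)^c)^j)
        = ∏ j ∈ s, (1 - (X:PowerSeries ℤ)^(c*j)) :=
      fun s => prod_congr rfl (fun j _ => by rw [← pow_mul])
    have hsplit : ∏ k ∈ Icc 1 (2*N), (1 - (X:PowerSeries ℤ)^(c*k))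
        = (∏ k ∈ Icc 1 i, (1 - (X:PowerSeries ℤ)^(c*k)))
          * ∏ k ∈ Icc (i+1) (2*N), (1 - (X:PowerSeries ℤ)^(c*k)) := by
      rw [show Icc 1 (2*N) = Ico 1 (2*N+1) from by ext x; simp [Nat.lt_succ_iff],
        show Icc 1 i = Ico 1 (i+1) from by ext x; simp [Nat.lt_succ_iff],
        show Icc (i+1) (2*N) = Ico (i+1) (2*N+1) from by ext x; simp [Nat.lt_succ_iff]]
      exact (prod_Ico_consecutive _ (by omega) (by omega)).symm
    rw [hsplit, ← mul_assoc, ← hpm (Icc 1 i), gb_prod _ (2*N) i hi', hpm]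
  rw [map_mul, map_sum, key2, Finset.sum_mul]
  apply Finset.sum_congr rfl
  intro i hi
  rw [mem_range] at hi
  have hsingle : HahnSeries.single (((N:ℤ)-i)*b + c*TT N i) (1:ℤ) = φ (X ^ (EE c b N i)) := by
    rw [hXpow, EE_cast c b N i hbc']
  rw [hsingle, ← hW i (by omega)]
  simp only [← hφ, map_mul, map_pow, map_neg, map_one]
  ring
end Specialize

section Theta
open Finset PowerSeries

/-- `P` has coefficients `δ_{t,0}` for `t < K`. -/
def DeltaTo (K : ℕ) (P : PowerSeries ℤ) : Prop :=
  ∀ t, t < K → coeff t P = if t = 0 then 1 else 0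

lemma deltaTo_mul {K : ℕ} {P Q : PowerSeries ℤ} (hP : DeltaTo K P) (hQ : DeltaTo K Q) :
    DeltaTo K (P * Q) := by
  intro t ht
  rw [coeff_mul, Finset.Nat.sum_antidiagonal_eq_sum_range_succ_mk]
  cases t with
  | zero =>
    rw [Finset.sum_range_one, hP 0 ht, hQ 0 ht]
    norm_num
  | succ t =>
    rw [if_neg (Nat.succ_ne_zero t)]
    apply Finset.sum_eq_zero
    intro i hi
    rw [mem_range] at hi
    rw [hP i (by omega), hQ (t+1-i) (by omega)]
    rcases Nat.eq_zero_or_pos i with rfl | h0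
    · rw [if_pos rfl, one_mul, if_neg (show ¬(t+1-0 = 0) by omega)]
    · rw [if_neg (show ¬(i = 0) by omega), zero_mul]

lemma deltaTo_one_sub_pow {K m : ℕ} (h : K ≤ m) : DeltaTo K (1 - (X:PowerSeries ℤ)^m) := by
  intro t ht
  rw [map_sub, coeff_one, coeff_X_pow, if_neg (show ¬(t = m) by omega), sub_zero]

lemma deltaTo_prod (K : ℕ) (s : Finset ℕ) (f : ℕ → ℕ) (hf : ∀ j ∈ s, K ≤ f j) :
    DeltaTo K (∏ j ∈ s, (1 - (X:PowerSeries ℤ)^(f j))) := by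
  classical
  induction s using Finset.induction_on with
  | empty =>
    intro t ht
    simpa using (coeff_one t : coeff t 1 = _)
  | @insert a s ha ih =>
    rw [prod_insert ha]
    exact deltaTo_mul (deltaTo_one_sub_pow (hf a (mem_insert_self a s)))
      (ih fun j hj => hf j (mem_insert_of_mem hj))

lemma coeff_termX (m p E : ℕ) (W : PowerSeries ℤ) :
    coeff m ((-1:PowerSeries ℤ)^p * X^E * W)
      = (-1:ℤ)^p * (if E ≤ m then coeff (m - E) W else 0) := by
  have h1 : ((-1:PowerSeries ℤ))^p * X^E * W = C ((-1)^p) * (X^E * W) := by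
    rw [show (-1 : PowerSeries ℤ) = C (-1) from by rw [map_neg, map_one], ← map_pow, mul_assoc]
  rw [h1, coeff_C_mul, PowerSeries.coeff_X_pow_mul']

lemma int_consec2 (w : ℤ) : 0 ≤ (w - 1) * (w - 2) := by
  rcases le_or_gt w 1 with h | h
  · nlinarith
  · nlinarith

lemma theta_arith (c b n i : ℕ) (hb : 0 < b) (hbc : 2*b < c) (hc : 3 ≤ c)
    (m : ℕ) (hm : m ≤ n) (hi : i ≤ 2*(n+1)) :
    m < EE c b (n+1) i + c*(min i (2*(n+1)-i) + 1) := by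
  have hZ : (m:ℤ) < ((EE c b (n+1) i : ℕ):ℤ)
      + (c:ℤ)*(((min i (2*(n+1)-i) : ℕ):ℤ) + 1) := by
    rw [EE_cast c b (n+1) i (by omega)]
    have htt := TT2 (n+1) i
    push_cast at htt
    have hb0 : (0:ℤ) ≤ (b:ℤ) := Int.natCast_nonneg _
    have hc0 : (0:ℤ) ≤ (c:ℤ) := Int.natCast_nonneg _
    have hc3 : (3:ℤ) ≤ (c:ℤ) := by exact_mod_cast hc
    have hbc2 : 2*(b:ℤ) + 1 ≤ (c:ℤ) := by exact_mod_cast hbc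
    have hmn : (m:ℤ) ≤ (n:ℤ) := by exact_mod_cast hm
    rcases le_total i (n+1) with h | h
    · have hmin : min i (2*(n+1)-i) = i := min_eq_left (by omega)
      rw [hmin]
      have hv0 : (0:ℤ) ≤ ((n:ℤ)+1) - i := by
        have : (i:ℤ) ≤ (n:ℤ)+1 := by exact_mod_cast h
        linarith
      have hcons := int_consec2 (((n:ℤ)+1) - i)
      push_cast
      nlinarith [mul_nonneg hv0 hb0, mul_nonneg hc0 hcons]
    · have hmin : min i (2*(n+1)-i) = 2*(n+1)-i := min_eq_right (by omega)
      rw [hmin]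
      have hu0 : (0:ℤ) ≤ (i:ℤ) - ((n:ℤ)+1) := by
        have : ((n:ℤ)+1) ≤ (i:ℤ) := by exact_mod_cast h
        linarith
      have hcons := int_consec2 ((i:ℤ) - ((n:ℤ)+1))
      have hcast : ((2*(n+1)-i : ℕ):ℤ) = 2*((n:ℤ)+1) - i := by
        push_cast [Nat.cast_sub hi]
        ring
      rw [hcast]
      push_cast
      nlinarith [mul_nonneg hc0 hcons, mul_nonneg hu0 (by linarith : (0:ℤ) ≤ (c:ℤ) - b)]
  have hcast2 : ((EE c b (n+1) i + c*(min i (2*(n+1)-i) + 1) : ℕ) : ℤ)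
      = ((EE c b (n+1) i : ℕ):ℤ) + (c:ℤ)*(((min i (2*(n+1)-i) : ℕ):ℤ) + 1) := by
    push_cast
    ring
  exact_mod_cast hcast2 ▸ hZ

theorem theta_coeff (c b n : ℕ) (hb : 0 < b) (hbc : 2*b < c) (hc : 3 ≤ c)
    (m : ℕ) (hm : m ≤ n) :
    coeff m ((∏ k ∈ Icc 1 (n+1), ((1 - (X:PowerSeries ℤ)^(c*k-b)) * (1 - (X:PowerSeries ℤ)^(c*k-(c-b)))))
      * (∏ k ∈ Icc 1 (2*(n+1)), (1 - (X:PowerSeries ℤ)^(c*k))))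
    = ∑ i ∈ range (2*(n+1)+1), (-1:ℤ)^((n+1)+i) * (if m = EE c b (n+1) i then 1 else 0) := by
  rw [prop1 c b hb hbc (n+1), map_sum]
  apply Finset.sum_congr rfl
  intro i hi
  rw [mem_range] at hi
  rw [coeff_termX]
  congr 1
  set K := c*(min i (2*(n+1)-i) + 1) with hK
  have hdelta : DeltaTo K ((∏ j ∈ Icc (2*(n+1)-i+1) (2*(n+1)), (1 - (X:PowerSeries ℤ)^(c*j)))
      * (∏ j ∈ Icc (i+1) (2*(n+1)), (1 - (X:PowerSeries ℤ)^(c*j)))) := by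
    apply deltaTo_mul
    · apply deltaTo_prod
      intro j hj
      rw [mem_Icc] at hj
      exact Nat.mul_le_mul_left c (by omega)
    · apply deltaTo_prod
      intro j hj
      rw [mem_Icc] at hj
      exact Nat.mul_le_mul_left c (by omega)
  have harith := theta_arith c b n i hb hbc hc m hm (by omega)
  by_cases hle : EE c b (n+1) i ≤ m
  · rw [if_pos hle, hdelta (m - EE c b (n+1) i) (by omega)]
    by_cases hEq : m = EE c b (n+1) i
    · rw [if_pos (by omega), if_pos hEq]
    · rw [if_neg (by omega), if_neg hEq]
  · rw [if_neg hle, if_neg (by omega)]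

lemma theta_unique (c b : ℕ) (hb : 0 < b) (hbc : 2*b < c) (u v : ℤ)
    (h : u*((c:ℤ)*u + ((c:ℤ) - 2*b)) = v*((c:ℤ)*v + ((c:ℤ) - 2*b))) : u = v := by
  by_contra hne
  have h2 : (u - v) * ((c:ℤ)*(u+v) + ((c:ℤ) - 2*b)) = 0 := by linear_combination h
  rcases mul_eq_zero.1 h2 with h3 | h3
  · exact hne (by linarith)
  · have hdvd : (c:ℤ) ∣ 2*b := ⟨u+v+1, by linear_combination -h3⟩
    have hle := Int.le_of_dvd (by exact_mod_cast (by omega : (0:ℕ) < 2*b)) hdvd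
    have : (c:ℤ) ≤ 2*(b:ℤ) := by exact_mod_cast hle
    have hbc' : 2*(b:ℤ) < (c:ℤ) := by exact_mod_cast hbc
    omega

lemma EE_eq_iff (c b n : ℕ) (hb : 0 < b) (hbc : 2*b < c) (m i : ℕ) (hi : i ≤ 2*(n+1)) :
    m = EE c b (n+1) i ↔ 2*(m:ℤ) = ((i:ℤ) - ((n:ℤ)+1))*((c:ℤ)*((i:ℤ) - ((n:ℤ)+1)) + ((c:ℤ) - 2*b)) := by
  have h1 := EE_cast c b (n+1) i (by omega)
  have h2 := TT2 (n+1) i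
  push_cast at h1 h2
  constructor
  · intro hEq
    have hm : (m:ℤ) = (EE c b (n+1) i : ℤ) := by exact_mod_cast hEq
    linear_combination 2*hm + 2*h1 + (c:ℤ)*h2
  · intro hj
    have h3 : 2*(m:ℤ) = 2*((EE c b (n+1) i : ℕ):ℤ) := by
      linear_combination hj - 2*h1 - (c:ℤ)*h2
    omega

lemma theta_b (c b n : ℕ) (hb : 0 < b) (hbc : 2*b < c) (hc : 3 ≤ c)
    (m : ℕ) (hm : m ≤ n)
    (hno : ¬ ∃ j : ℤ, 2*(m:ℤ) = j*((c:ℤ)*j + ((c:ℤ) - 2*b))) :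
    coeff m ((∏ k ∈ Icc 1 (n+1), ((1 - (X:PowerSeries ℤ)^(c*k-b)) * (1 - (X:PowerSeries ℤ)^(c*k-(c-b)))))
      * (∏ k ∈ Icc 1 (2*(n+1)), (1 - (X:PowerSeries ℤ)^(c*k)))) = 0 := by
  rw [theta_coeff c b n hb hbc hc m hm]
  apply Finset.sum_eq_zero
  intro i hi
  rw [mem_range] at hi
  rw [if_neg, mul_zero]
  intro hEq
  exact hno ⟨(i:ℤ) - ((n:ℤ)+1), (EE_eq_iff c b n hb hbc m i (by omega)).1 hEq⟩

lemma theta_a (c b n : ℕ) (hb : 0 < b) (hbc : 2*b < c) (hc : 3 ≤ c)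
    (m : ℕ) (hm : m ≤ n)
    (j : ℤ) (hj : 2*(m:ℤ) = j*((c:ℤ)*j + ((c:ℤ) - 2*b))) :
    coeff m ((∏ k ∈ Icc 1 (n+1), ((1 - (X:PowerSeries ℤ)^(c*k-b)) * (1 - (X:PowerSeries ℤ)^(c*k-(c-b)))))
      * (∏ k ∈ Icc 1 (2*(n+1)), (1 - (X:PowerSeries ℤ)^(c*k))))
    = (if Even j then 1 else -1) := by
  have hc3 : (3:ℤ) ≤ (c:ℤ) := by exact_mod_cast hc
  have hbc2 : 2*(b:ℤ) + 1 ≤ (c:ℤ) := by exact_mod_cast hbc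
  have hb1 : (1:ℤ) ≤ (b:ℤ) := by exact_mod_cast hb
  have hmn : (m:ℤ) ≤ (n:ℤ) := by exact_mod_cast hm
  -- bound |j| ≤ n+1
  have hjb : -((n:ℤ)+1) ≤ j ∧ j ≤ (n:ℤ)+1 := by
    constructor
    · by_contra hcon
      push_neg at hcon
      have hj2 : j ≤ -((n:ℤ)+2) := by omega
      have hm0 : (0:ℤ) ≤ (m:ℤ) := Int.natCast_nonneg _
      nlinarith [mul_nonneg (by linarith : (0:ℤ) ≤ -j) (by linarith : (0:ℤ) ≤ -j - 1)]
    · by_contra hcon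
      push_neg at hcon
      have hj2 : (n:ℤ)+2 ≤ j := by omega
      nlinarith [mul_nonneg (by linarith : (0:ℤ) ≤ j) (by linarith : (0:ℤ) ≤ j - 1)]
  set i₀ : ℕ := (((n:ℤ)+1) + j).toNat with hi₀
  have hi₀cast : (i₀:ℤ) = ((n:ℤ)+1) + j := by
    rw [hi₀]
    omega
  have hi₀mem : i₀ ∈ range (2*(n+1)+1) := by
    rw [mem_range]
    omega
  rw [theta_coeff c b n hb hbc hc m hm]
  rw [Finset.sum_eq_single_of_mem i₀ hi₀mem]
  · have hEq : m = EE c b (n+1) i₀ := by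
      rw [EE_eq_iff c b n hb hbc m i₀ (by omega)]
      rw [show (i₀:ℤ) - ((n:ℤ)+1) = j from by omega]
      exact hj
    rw [if_pos hEq, mul_one]
    -- parity
    have hpar : Even ((n+1) + i₀) ↔ Even j := by
      rw [← Int.even_coe_nat]
      constructor
      · intro h
        rcases h with ⟨r, hr⟩
        exact ⟨r - ((n:ℤ)+1), by push_cast at hr ⊢; omega⟩
      · intro h
        rcases h with ⟨r, hr⟩
        exact ⟨((n:ℤ)+1) + r, by push_cast at hr ⊢; omega⟩
    rcases Int.even_or_odd j with hev | hodd
    · rw [if_pos hev, Even.neg_one_pow (hpar.2 hev)]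
    · rw [if_neg (Int.not_even_iff_odd.2 hodd)]
      have : ¬ Even ((n+1) + i₀) := fun h => (Int.not_even_iff_odd.2 hodd) (hpar.1 h)
      rw [(Nat.not_even_iff_odd.1 this).neg_one_pow]
  · intro i hi hne
    rw [mem_range] at hi
    rw [if_neg, mul_zero]
    intro hEq
    apply hne
    have := (EE_eq_iff c b n hb hbc m i (by omega)).1 hEq
    have huniq := theta_unique c b hb hbc ((i:ℤ) - ((n:ℤ)+1)) j (by linarith [this, hj] )
    omega

end Theta

section PartGF
open Finset PowerSeries
open scoped Classical

/-- A convenience constructor for the power series whose coefficients indicate a subset. -/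
noncomputable def indicatorSeries (α : Type*) [Semiring α] (s : Set ℕ) : PowerSeries α :=
  PowerSeries.mk fun n => if n ∈ s then 1 else 0

theorem coeff_indicator {α : Type*} (s : Set ℕ) [Semiring α] (n : ℕ) :
    coeff n (indicatorSeries α s) = if n ∈ s then 1 else 0 :=
  coeff_mk _ _

open Finset.HasAntidiagonal

-- The main workhorse of the partition theorem proof.
theorem partialGF_prop (α : Type*) [CommSemiring α] (n : ℕ) (s : Finset ℕ) (hs : ∀ i ∈ s, 0 < i)
    (c : ℕ → Set ℕ) (hc : ∀ i, i ∉ s → 0 ∈ c i) :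
    (Finset.univ.filter fun p : n.Partition => (∀ j, p.parts.count j ∈ c j) ∧ ∀ j ∈ p.parts, j ∈ s).card =
      coeff n (∏ i ∈ s, indicatorSeries α ((· * i) '' c i)) := by
  simp_rw [coeff_prod, coeff_indicator, prod_boole, sum_boole]
  apply congr_arg
  simp only [mem_univ, forall_true_left, not_and, not_forall, exists_prop,
    Set.mem_image, not_exists]
  set φ : (a : Nat.Partition n) →
    a ∈ filter (fun p ↦ (∀ (j : ℕ), Multiset.count j p.parts ∈ c j) ∧ ∀ j ∈ p.parts, j ∈ s) univ →
    ℕ →₀ ℕ := fun p _ => {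
      toFun := fun i => Multiset.count i p.parts • i
      support := Finset.filter (fun i => i ≠ 0) p.parts.toFinset
      mem_support_toFun := fun a => by
        simp only [smul_eq_mul, ne_eq, mul_eq_zero, Multiset.count_eq_zero]
        rw [not_or, not_not]
        simp only [Multiset.mem_toFinset, not_not, mem_filter] }
  refine Finset.card_bij φ ?_ ?_ ?_
  · intro a ha
    simp only [φ, not_forall, not_exists, not_and, exists_prop, mem_filter]
    rw [mem_finsuppAntidiag]
    dsimp only [ne_eq, smul_eq_mul, id_eq, eq_mpr_eq_cast, le_eq_subset, Finsupp.coe_mk]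
    simp only [mem_univ, forall_true_left, not_and, not_forall, exists_prop,
      mem_filter, true_and] at ha
    refine ⟨⟨?_, fun i ↦ ?_⟩, fun i _ ↦ ⟨a.parts.count i, ha.1 i, rfl⟩⟩
    · conv_rhs => simp [← a.parts_sum]
      rw [sum_multiset_count_of_subset _ s]
      · simp only [smul_eq_mul]
      · intro i
        simp only [Multiset.mem_toFinset, not_not, mem_filter]
        apply ha.2
    · simp only [ne_eq, Multiset.mem_toFinset, not_not, mem_filter, and_imp]
      exact fun hi _ ↦ ha.2 i hi
  · intro p₁ hp₁ p₂ hp₂ h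
    apply Nat.Partition.ext
    simp only [true_and, mem_univ, mem_filter] at hp₁ hp₂
    ext i
    simp only [φ, ne_eq, Multiset.mem_toFinset, not_not, smul_eq_mul, Finsupp.mk.injEq] at h
    by_cases hi : i = 0
    · rw [hi]
      rw [Multiset.count_eq_zero_of_notMem]
      · rw [Multiset.count_eq_zero_of_notMem]
        intro a; exact Nat.lt_irrefl 0 (hs 0 (hp₂.2 0 a))
      intro a; exact Nat.lt_irrefl 0 (hs 0 (hp₁.2 0 a))
    · rw [← mul_left_inj' hi]
      rw [funext_iff] at h
      exact h.2 i
  · simp only [φ, mem_filter, mem_finsuppAntidiag, mem_univ, exists_prop, true_and, and_assoc]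
    rintro f ⟨hf, hf₃, hf₄⟩
    have hf' : f ∈ finsuppAntidiag s n := mem_finsuppAntidiag.mpr ⟨hf, hf₃⟩
    simp only [mem_finsuppAntidiag] at hf'
    refine ⟨⟨∑ i ∈ s, Multiset.replicate (f i / i) i, ?_, ?_⟩, ?_, ?_, ?_⟩
    · intro i hi
      simp only [exists_prop, Multiset.mem_sum, mem_map, Function.Embedding.coeFn_mk] at hi
      rcases hi with ⟨t, ht, z⟩
      apply hs
      rwa [Multiset.eq_of_mem_replicate z]
    · simp_rw [Multiset.sum_sum, Multiset.sum_replicate, Nat.nsmul_eq_mul]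
      rw [← hf'.1]
      refine sum_congr rfl fun i hi => Nat.div_mul_cancel ?_
      rcases hf₄ i hi with ⟨w, _, hw₂⟩
      rw [← hw₂]
      exact dvd_mul_left _ _
    · intro i
      simp_rw [Multiset.count_sum', Multiset.count_replicate, sum_ite_eq']
      split_ifs with h
      · rcases hf₄ i h with ⟨w, hw₁, hw₂⟩
        rwa [← hw₂, Nat.mul_div_cancel _ (hs i h)]
      · exact hc _ h
    · intro i hi
      rw [Multiset.mem_sum] at hi
      rcases hi with ⟨j, hj₁, hj₂⟩
      rwa [Multiset.eq_of_mem_replicate hj₂]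
    · ext i
      simp_rw [Multiset.count_sum', Multiset.count_replicate, sum_ite_eq']
      simp only [ne_eq, Multiset.mem_toFinset, not_not, smul_eq_mul, ite_mul,
        zero_mul, Finsupp.coe_mk]
      split_ifs with h
      · apply Nat.div_mul_cancel
        rcases hf₄ i h with ⟨w, _, hw₂⟩
        apply Dvd.intro_left _ hw₂
      · apply symm
        rw [← Finsupp.notMem_support_iff]
        exact notMem_mono hf'.2 h


lemma inv1 (i : ℕ) (hi : 0 < i) :
    (1 - (X:PowerSeries ℤ)^i) * indicatorSeries ℤ {k | i ∣ k} = 1 := by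
  ext t
  rw [sub_mul, one_mul, map_sub, coeff_one, PowerSeries.coeff_X_pow_mul', coeff_indicator]
  rcases Nat.eq_zero_or_pos t with rfl | ht
  · rw [if_pos (show (0:ℕ) ∈ {k | i ∣ k} from dvd_zero i), if_neg (by omega), if_pos rfl]
    norm_num
  · rw [if_neg (by omega : ¬(t = 0))]
    by_cases hd : i ∣ t
    · have h1 : i ≤ t := Nat.le_of_dvd ht hd
      rw [if_pos (show t ∈ {k | i ∣ k} from hd), if_pos h1, coeff_indicator,
        if_pos (show t - i ∈ {k | i ∣ k} from Nat.dvd_sub hd (dvd_refl i))]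
      norm_num
    · rw [if_neg (show ¬(t ∈ {k | i ∣ k}) from hd)]
      by_cases h1 : i ≤ t
      · rw [if_pos h1, coeff_indicator, if_neg (show ¬(t - i ∈ {k | i ∣ k}) from ?_)]
        · norm_num
        · intro hh
          exact hd (by
            have : t = (t - i) + i := by omega
            rw [this]
            exact dvd_add hh (dvd_refl i))
      · rw [if_neg h1]
        norm_num

lemma coeff_G (n m : ℕ) (hm : m ≤ n) :
    coeff m (∏ i ∈ (Icc 1 n).filter (fun i => i % 5 = 2 ∨ i % 5 = 3),
      indicatorSeries ℤ {k | i ∣ k}) = pR2 m := by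
  have hs : ∀ i ∈ (Icc 1 n).filter (fun i => i % 5 = 2 ∨ i % 5 = 3), 0 < i := by
    intro i hi
    rw [mem_filter, mem_Icc] at hi
    omega
  have h := partialGF_prop ℤ m ((Icc 1 n).filter (fun i => i % 5 = 2 ∨ i % 5 = 3)) hs
    (fun _ => Set.univ) (fun _ _ => trivial)
  have himg : ∀ i : ℕ, ((· * i) '' Set.univ) = {k | i ∣ k} := by
    intro i
    ext k
    simp only [Set.mem_image, Set.mem_univ, true_and, Set.mem_setOf_eq]
    constructor
    · rintro ⟨a, rfl⟩
      exact Dvd.intro_left a rfl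
    · rintro ⟨a, rfl⟩
      exact ⟨a, mul_comm a i⟩
  simp only [himg] at h
  rw [← h, pR2]
  congr 1
  congr 1
  apply Finset.filter_congr
  intro p _
  constructor
  · rintro ⟨-, h2⟩ i hi
    have := h2 i hi
    rw [mem_filter] at this
    exact this.2
  · intro h2
    refine ⟨fun j => trivial, fun j hj => ?_⟩
    rw [mem_filter, mem_Icc]
    have hj1 : 0 < j := p.parts_pos hj
    have hj2 : j ≤ m := by
      have := Multiset.single_le_sum (fun _ _ => Nat.zero_le _) _ hj
      rwa [p.parts_sum] at this
    exact ⟨⟨hj1, by omega⟩, h2 j hj⟩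

end PartGF

section Assembly
open Finset PowerSeries

lemma negpow_eq (p q : ℕ) (h : p % 2 = q % 2) : (-1:ℤ)^p = (-1)^q := by
  rcases Nat.even_or_odd p with hp | hp
  · have hq : Even q := Nat.even_iff.2 (by rw [Nat.even_iff] at hp; omega)
    rw [hp.neg_one_pow, hq.neg_one_pow]
  · have hq : Odd q := Nat.odd_iff.2 (by rw [Nat.odd_iff] at hp; omega)
    rw [hp.neg_one_pow, hq.neg_one_pow]

lemma half_pent (k : ℤ) : 2*(k*(3*k-1)/2) = k*(3*k-1) := by
  apply Int.mul_ediv_cancel'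
  rcases Int.even_or_odd k with ⟨t, ht⟩ | ⟨t, ht⟩
  · exact ⟨t*(3*k-1), by rw [ht]; ring⟩
  · exact ⟨k*(3*t+1), by rw [ht]; ring⟩

lemma half_pent' (k : ℤ) : 2*(k*(3*k+1)/2) = k*(3*k+1) := by
  apply Int.mul_ediv_cancel'
  rcases Int.even_or_odd k with ⟨t, ht⟩ | ⟨t, ht⟩
  · exact ⟨t*(3*k+1), by rw [ht]; ring⟩
  · exact ⟨k*(3*t+2), by rw [ht]; ring⟩

lemma coeff_mul_deltaTo (D T : PowerSeries ℤ) (n : ℕ) (hT : DeltaTo (n+1) T)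
    (m : ℕ) (hm : m ≤ n) : coeff m (D * T) = coeff m D := by
  rw [coeff_mul, Finset.Nat.sum_antidiagonal_eq_sum_range_succ_mk]
  rw [Finset.sum_eq_single_of_mem m (mem_range.2 (by omega))]
  · rw [Nat.sub_self, hT 0 (by omega), if_pos rfl, mul_one]
  · intro i hi hne
    rw [mem_range] at hi
    rw [hT (m - i) (by omega), if_neg (by omega), mul_zero]

lemma coeff_mul_congr (A B C : PowerSeries ℤ) (n : ℕ)
    (h : ∀ u ≤ n, coeff u A = coeff u B) :
    coeff n (A * C) = coeff n (B * C) := by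
  rw [coeff_mul, coeff_mul]
  apply Finset.sum_congr rfl
  intro x hx
  rw [Finset.HasAntidiagonal.mem_antidiagonal] at hx
  rw [h x.1 (by omega)]

lemma inner_eval (n E : ℕ) :
    ∑ u ∈ range (n+1), (if u = E then (1:ℤ) else 0) * (pR2 (n-u) : ℤ)
      = pR2Z ((n:ℤ) - E) := by
  by_cases hE : E ≤ n
  · rw [Finset.sum_eq_single_of_mem E (mem_range.2 (by omega))]
    · rw [if_pos rfl, one_mul, pR2Z, if_pos (by omega)]
      congr 2
      omega
    · intro i hi hne
      rw [if_neg hne, zero_mul]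
  · rw [pR2Z, if_neg (by omega)]
    apply Finset.sum_eq_zero
    intro u hu
    rw [mem_range] at hu
    rw [if_neg (by omega), zero_mul]

lemma group3 : ∀ M, (∏ k ∈ Icc 1 M, ((1-(X:PowerSeries ℤ)^(3*k-1)) * (1-(X:PowerSeries ℤ)^(3*k-2)) * (1-(X:PowerSeries ℤ)^(3*k))))
    = ∏ i ∈ Icc 1 (3*M), (1-(X:PowerSeries ℤ)^i) := by
  intro M
  induction M with
  | zero => simp
  | succ M ih =>
    rw [prod_Icc_succ_top (by omega : (1:ℕ) ≤ M+1), ih,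
      show 3*(M+1) = (3*M+1+1)+1 from by ring,
      prod_Icc_succ_top (by omega : 1 ≤ (3*M+1+1)+1),
      prod_Icc_succ_top (by omega : 1 ≤ (3*M+1)+1),
      prod_Icc_succ_top (by omega : 1 ≤ (3*M)+1)]
    rw [show (3*M+1+1)+1-1 = 3*M+1+1 from by omega, show (3*M+1+1)+1-2 = 3*M+1 from by omega]
    ring

lemma group5 : ∀ M, (∏ k ∈ Icc 1 M, ((1-(X:PowerSeries ℤ)^(5*k-1)) * (1-(X:PowerSeries ℤ)^(5*k-4)) * (1-(X:PowerSeries ℤ)^(5*k))))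
    = ∏ i ∈ (Icc 1 (5*M)).filter (fun i => ¬(i % 5 = 2 ∨ i % 5 = 3)), (1-(X:PowerSeries ℤ)^i) := by
  intro M
  induction M with
  | zero => simp
  | succ M ih =>
    classical
    have hset : (Icc 1 (5*(M+1))).filter (fun i => ¬(i % 5 = 2 ∨ i % 5 = 3))
        = insert (5*M+1) (insert (5*M+4) (insert (5*M+5)
            ((Icc 1 (5*M)).filter (fun i => ¬(i % 5 = 2 ∨ i % 5 = 3))))) := by
      ext x
      simp only [mem_filter, mem_insert, mem_Icc]
      omega
    rw [prod_Icc_succ_top (by omega), ih, hset]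
    rw [prod_insert (by simp only [mem_insert, mem_filter, mem_Icc]; omega),
      prod_insert (by simp only [mem_insert, mem_filter, mem_Icc]; omega),
      prod_insert (by simp only [mem_filter, mem_Icc]; omega)]
    rw [show 5*(M+1)-1 = 5*M+4 from by omega, show 5*(M+1)-4 = 5*M+1 from by omega,
      show 5*(M+1) = 5*M+5 from by omega]
    ring

lemma icc_split_prod (a m : ℕ) (hm : a ≤ m) (f : ℕ → PowerSeries ℤ) :
    ∏ k ∈ Icc 1 m, f k = (∏ k ∈ Icc 1 a, f k) * ∏ k ∈ Icc (a+1) m, f k := by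
  rw [show Icc 1 m = Ico 1 (m+1) from by ext x; simp [Nat.lt_succ_iff],
    show Icc 1 a = Ico 1 (a+1) from by ext x; simp [Nat.lt_succ_iff],
    show Icc (a+1) m = Ico (a+1) (m+1) from by ext x; simp [Nat.lt_succ_iff]]
  exact (prod_Ico_consecutive _ (by omega) (by omega)).symm

-- PP3 decomposition
lemma PP3_eq (n : ℕ) :
    (∏ k ∈ Icc 1 (n+1), ((1 - (X:PowerSeries ℤ)^(3*k-1)) * (1 - (X:PowerSeries ℤ)^(3*k-2))))
      * (∏ k ∈ Icc 1 (2*(n+1)), (1 - (X:PowerSeries ℤ)^(3*k)))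
    = (∏ i ∈ Icc 1 n, (1-(X:PowerSeries ℤ)^i)) *
        ((∏ i ∈ Icc (n+1) (3*(n+1)), (1-(X:PowerSeries ℤ)^i))
          * (∏ k ∈ Icc ((n+1)+1) (2*(n+1)), (1 - (X:PowerSeries ℤ)^(3*k)))) := by
  rw [icc_split_prod (n+1) (2*(n+1)) (by omega) (fun k => 1 - (X:PowerSeries ℤ)^(3*k))]
  rw [show (∏ k ∈ Icc 1 (n+1), ((1 - (X:PowerSeries ℤ)^(3*k-1)) * (1 - (X:PowerSeries ℤ)^(3*k-2))))
      * ((∏ k ∈ Icc 1 (n+1), (1 - (X:PowerSeries ℤ)^(3*k))) * ∏ k ∈ Icc ((n+1)+1) (2*(n+1)), (1 - (X:PowerSeries ℤ)^(3*k)))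
    = ((∏ k ∈ Icc 1 (n+1), ((1 - (X:PowerSeries ℤ)^(3*k-1)) * (1 - (X:PowerSeries ℤ)^(3*k-2))))
      * (∏ k ∈ Icc 1 (n+1), (1 - (X:PowerSeries ℤ)^(3*k))))
      * ∏ k ∈ Icc ((n+1)+1) (2*(n+1)), (1 - (X:PowerSeries ℤ)^(3*k)) from by ring]
  rw [← prod_mul_distrib, group3 (n+1)]
  rw [icc_split_prod n (3*(n+1)) (by omega) (fun i => 1 - (X:PowerSeries ℤ)^i)]
  ring

lemma PP5_eq (n : ℕ) :
    (∏ k ∈ Icc 1 (n+1), ((1 - (X:PowerSeries ℤ)^(5*k-1)) * (1 - (X:PowerSeries ℤ)^(5*k-4))))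
      * (∏ k ∈ Icc 1 (2*(n+1)), (1 - (X:PowerSeries ℤ)^(5*k)))
    = (∏ i ∈ (Icc 1 n).filter (fun i => ¬(i % 5 = 2 ∨ i % 5 = 3)), (1-(X:PowerSeries ℤ)^i)) *
        ((∏ i ∈ (Icc (n+1) (5*(n+1))).filter (fun i => ¬(i % 5 = 2 ∨ i % 5 = 3)), (1-(X:PowerSeries ℤ)^i))
          * (∏ k ∈ Icc ((n+1)+1) (2*(n+1)), (1 - (X:PowerSeries ℤ)^(5*k)))) := by
  classical
  rw [icc_split_prod (n+1) (2*(n+1)) (by omega) (fun k => 1 - (X:PowerSeries ℤ)^(5*k))]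
  rw [show (∏ k ∈ Icc 1 (n+1), ((1 - (X:PowerSeries ℤ)^(5*k-1)) * (1 - (X:PowerSeries ℤ)^(5*k-4))))
      * ((∏ k ∈ Icc 1 (n+1), (1 - (X:PowerSeries ℤ)^(5*k))) * ∏ k ∈ Icc ((n+1)+1) (2*(n+1)), (1 - (X:PowerSeries ℤ)^(5*k)))
    = ((∏ k ∈ Icc 1 (n+1), ((1 - (X:PowerSeries ℤ)^(5*k-1)) * (1 - (X:PowerSeries ℤ)^(5*k-4))))
      * (∏ k ∈ Icc 1 (n+1), (1 - (X:PowerSeries ℤ)^(5*k))))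
      * ∏ k ∈ Icc ((n+1)+1) (2*(n+1)), (1 - (X:PowerSeries ℤ)^(5*k)) from by ring]
  rw [← prod_mul_distrib, group5 (n+1)]
  have hsplit : Icc 1 (5*(n+1)) = Icc 1 n ∪ Icc (n+1) (5*(n+1)) := by
    ext x; simp only [mem_Icc, mem_union]; omega
  have hdisj : Disjoint ((Icc 1 n).filter (fun i => ¬(i % 5 = 2 ∨ i % 5 = 3)))
      ((Icc (n+1) (5*(n+1))).filter (fun i => ¬(i % 5 = 2 ∨ i % 5 = 3))) := by
    rw [Finset.disjoint_left]
    intro x hx hx2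
    rw [mem_filter, mem_Icc] at hx hx2
    omega
  rw [hsplit, filter_union, prod_union hdisj]
  ring

end Assembly

section Final
open Finset PowerSeries

lemma FF_zero (n j' : ℕ) (h : n < j') :
    (-1:ℤ)^(j'+1) * (pR2Z ((n:ℤ) - ((j':ℤ)+1)*(3*((j':ℤ)+1)-1)/2)
      + pR2Z ((n:ℤ) - ((j':ℤ)+1)*(3*((j':ℤ)+1)+1)/2)) = 0 := by
  have hp := half_pent ((j':ℤ)+1)
  have hp' := half_pent' ((j':ℤ)+1)
  have hk : (n:ℤ) < (j':ℤ)+1 := by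
    have : (n:ℤ) < (j':ℤ) := by exact_mod_cast h
    omega
  have hk0 : (0:ℤ) ≤ (j':ℤ) := Int.natCast_nonneg _
  have hA : (0:ℤ) ≤ 3*((j':ℤ)+1)*(j':ℤ) := by positivity
  have h1 : (n:ℤ) - ((j':ℤ)+1)*(3*((j':ℤ)+1)-1)/2 < 0 := by nlinarith
  have h2 : (n:ℤ) - ((j':ℤ)+1)*(3*((j':ℤ)+1)+1)/2 < 0 := by nlinarith
  rw [pR2Z, if_neg (not_le.2 h1), pR2Z, if_neg (not_le.2 h2)]
  simp

lemma EE_diag (c b N : ℕ) (hbc : b ≤ c) : EE c b N N = 0 := by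
  have h1 := EE_cast c b N N hbc
  have h2 := TT2 N N
  have h3 : ((N:ℤ) - N) * ((N:ℤ) - N + 1) = 0 := by ring
  rw [h3] at h2
  have h4 : (TT N N : ℤ) = 0 := by omega
  rw [h4] at h1
  have : ((EE c b N N : ℕ) : ℤ) = 0 := by rw [h1]; ring
  omega

lemma EE3_lo (n i : ℕ) (hi : i ≤ n) :
    ((EE 3 1 (n+1) (n-i) : ℕ) : ℤ) = ((i:ℤ)+1)*(3*((i:ℤ)+1)-1)/2 := by
  have hE := EE_cast 3 1 (n+1) (n-i) (by omega)
  have hT := TT2 (n+1) (n-i)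
  have hp := half_pent ((i:ℤ)+1)
  push_cast [Nat.cast_sub hi] at hE hT
  have h2 : 2*((EE 3 1 (n+1) (n-i) : ℕ) : ℤ)
      = 2*(((i:ℤ)+1)*(3*((i:ℤ)+1)-1)/2) := by
    linear_combination 2*hE + 3*hT - hp
  omega

lemma EE3_hi (n i : ℕ) :
    ((EE 3 1 (n+1) ((n+1)+(i+1)) : ℕ) : ℤ) = ((i:ℤ)+1)*(3*((i:ℤ)+1)+1)/2 := by
  have hE := EE_cast 3 1 (n+1) ((n+1)+(i+1)) (by omega)
  have hT := TT2 (n+1) ((n+1)+(i+1))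
  have hp := half_pent' ((i:ℤ)+1)
  push_cast at hE hT
  have h2 : 2*((EE 3 1 (n+1) ((n+1)+(i+1)) : ℕ) : ℤ)
      = 2*(((i:ℤ)+1)*(3*((i:ℤ)+1)+1)/2) := by
    linear_combination 2*hE + 3*hT - hp
  omega

lemma pR2Z_natCast (n : ℕ) : pR2Z (n:ℤ) = pR2 n := by
  rw [pR2Z, if_pos (Int.natCast_nonneg n), Int.toNat_natCast]

lemma hsum_lemma (n : ℕ) :
    (pR2 n : ℤ) + ∑ j' ∈ range (n+1), (-1:ℤ)^(j'+1) *
        (pR2Z ((n:ℤ) - ((j':ℤ)+1)*(3*((j':ℤ)+1)-1)/2)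
          + pR2Z ((n:ℤ) - ((j':ℤ)+1)*(3*((j':ℤ)+1)+1)/2))
    = ∑ i ∈ range (2*(n+1)+1), (-1:ℤ)^((n+1)+i) * pR2Z ((n:ℤ) - EE 3 1 (n+1) i) := by
  conv_rhs => rw [show 2*(n+1)+1 = (n+1) + ((n+1)+1) from by ring, Finset.sum_range_add]
  rw [Finset.sum_range_succ'
    (fun i => (-1:ℤ)^((n+1)+((n+1)+i)) * pR2Z ((n:ℤ) - EE 3 1 (n+1) ((n+1)+i))) (n+1)]
  rw [← Finset.sum_range_reflect
    (fun i => (-1:ℤ)^((n+1)+i) * pR2Z ((n:ℤ) - EE 3 1 (n+1) i)) (n+1)]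
  rw [← add_assoc, ← Finset.sum_add_distrib]
  have hdiag : (-1:ℤ)^((n+1)+((n+1)+0)) * pR2Z ((n:ℤ) - EE 3 1 (n+1) ((n+1)+0))
      = (pR2 n : ℤ) := by
    rw [show (n+1)+0 = n+1 from rfl, EE_diag 3 1 (n+1) (by omega)]
    rw [negpow_eq ((n+1)+(n+1)) 0 (by omega), pow_zero, one_mul]
    push_cast
    rw [sub_zero, pR2Z_natCast]
  rw [hdiag]
  have hpair : ∀ i ∈ range (n+1),
      (-1:ℤ)^(i+1) * (pR2Z ((n:ℤ) - ((i:ℤ)+1)*(3*((i:ℤ)+1)-1)/2)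
        + pR2Z ((n:ℤ) - ((i:ℤ)+1)*(3*((i:ℤ)+1)+1)/2))
      = (-1:ℤ)^((n+1)+(n+1-1-i)) * pR2Z ((n:ℤ) - EE 3 1 (n+1) (n+1-1-i))
        + (-1:ℤ)^((n+1)+((n+1)+(i+1))) * pR2Z ((n:ℤ) - EE 3 1 (n+1) ((n+1)+(i+1))) := by
    intro i hi
    rw [mem_range] at hi
    have hin : i ≤ n := by omega
    rw [show n+1-1-i = n-i from by omega]
    rw [EE3_lo n i hin, EE3_hi n i]
    rw [negpow_eq ((n+1)+(n-i)) (i+1) (by omega),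
      negpow_eq ((n+1)+((n+1)+(i+1))) (i+1) (by omega)]
    ring
  rw [Finset.sum_congr rfl hpair]
  ring

lemma theta3_coeff (n m : ℕ) (hm : m ≤ n) :
    coeff m ((∏ k ∈ Icc 1 (n+1), ((1 - (X:PowerSeries ℤ)^(3*k-1)) * (1 - (X:PowerSeries ℤ)^(3*k-2))))
      * (∏ k ∈ Icc 1 (2*(n+1)), (1 - (X:PowerSeries ℤ)^(3*k))))
    = ∑ i ∈ range (2*(n+1)+1), (-1:ℤ)^((n+1)+i) * (if m = EE 3 1 (n+1) i then 1 else 0) := by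
  have h := theta_coeff 3 1 n (by norm_num) (by norm_num) (by norm_num) m hm
  simp only [show (3:ℕ)-1 = 2 from by norm_num] at h
  exact h

lemma hconv_lemma (n : ℕ) :
    coeff n (((∏ k ∈ Icc 1 (n+1), ((1 - (X:PowerSeries ℤ)^(3*k-1)) * (1 - (X:PowerSeries ℤ)^(3*k-2))))
      * (∏ k ∈ Icc 1 (2*(n+1)), (1 - (X:PowerSeries ℤ)^(3*k))))
      * (∏ i ∈ (Icc 1 n).filter (fun i => i % 5 = 2 ∨ i % 5 = 3), indicatorSeries ℤ {k | i ∣ k}))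
    = ∑ i ∈ range (2*(n+1)+1), (-1:ℤ)^((n+1)+i) * pR2Z ((n:ℤ) - EE 3 1 (n+1) i) := by
  rw [coeff_mul, Finset.Nat.sum_antidiagonal_eq_sum_range_succ_mk]
  have hterm : ∀ u ∈ range (n+1),
      coeff u ((∏ k ∈ Icc 1 (n+1), ((1 - (X:PowerSeries ℤ)^(3*k-1)) * (1 - (X:PowerSeries ℤ)^(3*k-2))))
        * (∏ k ∈ Icc 1 (2*(n+1)), (1 - (X:PowerSeries ℤ)^(3*k))))
        * coeff (n-u) (∏ i ∈ (Icc 1 n).filter (fun i => i % 5 = 2 ∨ i % 5 = 3), indicatorSeries ℤ {k | i ∣ k})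
      = ∑ i ∈ range (2*(n+1)+1), ((-1:ℤ)^((n+1)+i) * (if u = EE 3 1 (n+1) i then 1 else 0)) * (pR2 (n-u) : ℤ) := by
    intro u hu
    rw [mem_range] at hu
    rw [theta3_coeff n u (by omega), coeff_G n (n-u) (by omega), Finset.sum_mul]
  rw [Finset.sum_congr rfl hterm, Finset.sum_comm]
  apply Finset.sum_congr rfl
  intro i _
  calc ∑ u ∈ range (n+1), ((-1:ℤ)^((n+1)+i) * (if u = EE 3 1 (n+1) i then 1 else 0)) * (pR2 (n-u) : ℤ)
      = (-1:ℤ)^((n+1)+i) * ∑ u ∈ range (n+1), (if u = EE 3 1 (n+1) i then (1:ℤ) else 0) * (pR2 (n-u) : ℤ) := by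
        rw [Finset.mul_sum]
        exact Finset.sum_congr rfl fun u _ => by ring
    _ = (-1:ℤ)^((n+1)+i) * pR2Z ((n:ℤ) - EE 3 1 (n+1) i) := by rw [inner_eval]

lemma main_sum (n : ℕ) :
    (pR2 n : ℤ) + ∑' j' : ℕ, (-1 : ℤ) ^ (j' + 1) *
        (pR2Z ((n : ℤ) - ((j' : ℤ) + 1) * (3 * ((j' : ℤ) + 1) - 1) / 2) +
          pR2Z ((n : ℤ) - ((j' : ℤ) + 1) * (3 * ((j' : ℤ) + 1) + 1) / 2))
    = coeff n ((∏ k ∈ Icc 1 (n+1), ((1 - (X:PowerSeries ℤ)^(5*k-1)) * (1 - (X:PowerSeries ℤ)^(5*k-4))))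
        * (∏ k ∈ Icc 1 (2*(n+1)), (1 - (X:PowerSeries ℤ)^(5*k)))) := by
  classical
  have htsum : (∑' j' : ℕ, (-1 : ℤ) ^ (j' + 1) *
      (pR2Z ((n : ℤ) - ((j' : ℤ) + 1) * (3 * ((j' : ℤ) + 1) - 1) / 2) +
        pR2Z ((n : ℤ) - ((j' : ℤ) + 1) * (3 * ((j' : ℤ) + 1) + 1) / 2)))
      = ∑ j' ∈ range (n+1), (-1 : ℤ) ^ (j' + 1) *
      (pR2Z ((n : ℤ) - ((j' : ℤ) + 1) * (3 * ((j' : ℤ) + 1) - 1) / 2) +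
        pR2Z ((n : ℤ) - ((j' : ℤ) + 1) * (3 * ((j' : ℤ) + 1) + 1) / 2)) := by
    apply tsum_eq_sum
    intro j' hj'
    rw [mem_range] at hj'
    exact FF_zero n j' (by omega)
  rw [htsum, hsum_lemma n, ← hconv_lemma n]
  -- now: coeff n (PP3 * G) = coeff n PP5
  have hD3 : ∀ u ≤ n,
      coeff u ((∏ k ∈ Icc 1 (n+1), ((1 - (X:PowerSeries ℤ)^(3*k-1)) * (1 - (X:PowerSeries ℤ)^(3*k-2))))
        * (∏ k ∈ Icc 1 (2*(n+1)), (1 - (X:PowerSeries ℤ)^(3*k))))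
      = coeff u (∏ i ∈ Icc 1 n, (1-(X:PowerSeries ℤ)^i)) := by
    intro u hu
    rw [PP3_eq n]
    apply coeff_mul_deltaTo _ _ n _ u hu
    apply deltaTo_mul
    · apply deltaTo_prod (n+1) _ (fun i => i)
      intro j hj
      rw [mem_Icc] at hj
      omega
    · apply deltaTo_prod (n+1) _ (fun k => 3*k)
      intro j hj
      rw [mem_Icc] at hj
      omega
  have hD5 : coeff n ((∏ k ∈ Icc 1 (n+1), ((1 - (X:PowerSeries ℤ)^(5*k-1)) * (1 - (X:PowerSeries ℤ)^(5*k-4))))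
        * (∏ k ∈ Icc 1 (2*(n+1)), (1 - (X:PowerSeries ℤ)^(5*k))))
      = coeff n (∏ i ∈ (Icc 1 n).filter (fun i => ¬(i % 5 = 2 ∨ i % 5 = 3)), (1-(X:PowerSeries ℤ)^i)) := by
    rw [PP5_eq n]
    apply coeff_mul_deltaTo _ _ n _ n (le_refl n)
    apply deltaTo_mul
    · apply deltaTo_prod (n+1) _ (fun i => i)
      intro j hj
      rw [mem_filter, mem_Icc] at hj
      omega
    · apply deltaTo_prod (n+1) _ (fun k => 5*k)
      intro j hj
      rw [mem_Icc] at hj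
      omega
  rw [coeff_mul_congr _ _ _ n hD3, hD5]
  -- D3 * G = D5
  have hKG : (∏ i ∈ (Icc 1 n).filter (fun i => i % 5 = 2 ∨ i % 5 = 3), (1-(X:PowerSeries ℤ)^i))
      * (∏ i ∈ (Icc 1 n).filter (fun i => i % 5 = 2 ∨ i % 5 = 3), indicatorSeries ℤ {k | i ∣ k}) = 1 := by
    rw [← prod_mul_distrib]
    apply Finset.prod_eq_one
    intro i hi
    rw [mem_filter, mem_Icc] at hi
    exact inv1 i (by omega)
  have hD3split : (∏ i ∈ Icc 1 n, (1-(X:PowerSeries ℤ)^i))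
      = (∏ i ∈ (Icc 1 n).filter (fun i => i % 5 = 2 ∨ i % 5 = 3), (1-(X:PowerSeries ℤ)^i))
        * ∏ i ∈ (Icc 1 n).filter (fun i => ¬(i % 5 = 2 ∨ i % 5 = 3)), (1-(X:PowerSeries ℤ)^i) :=
    (Finset.prod_filter_mul_prod_filter_not (Icc 1 n) _ _).symm
  rw [hD3split]
  congr 1
  rw [mul_comm _ (∏ i ∈ (Icc 1 n).filter (fun i => ¬(i % 5 = 2 ∨ i % 5 = 3)), (1-(X:PowerSeries ℤ)^i)),
    mul_assoc, hKG, mul_one]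

end Final

/-- For every `n ≥ 0`,
`p_{R2}(n) + ∑_{j ≥ 1} (-1)^j [p_{R2}(n - j(3j-1)/2) + p_{R2}(n - j(3j+1)/2)]`
equals `(-1)^j` if `n = j(5j+3)/2` for some `j ∈ ℤ` (the generalized heptagonal numbers),
and `0` otherwise. -/
theorem stmt10 (n : ℕ) :
    (∀ j : ℤ, 2 * (n : ℤ) = j * (5 * j + 3) →
      (pR2 n : ℤ) +
        ∑' j' : ℕ, (-1 : ℤ) ^ (j' + 1) *
          (pR2Z ((n : ℤ) - ((j' : ℤ) + 1) * (3 * ((j' : ℤ) + 1) - 1) / 2) +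
            pR2Z ((n : ℤ) - ((j' : ℤ) + 1) * (3 * ((j' : ℤ) + 1) + 1) / 2)) =
        (if Even j then 1 else -1)) ∧
    ((¬ ∃ j : ℤ, 2 * (n : ℤ) = j * (5 * j + 3)) →
      (pR2 n : ℤ) +
        ∑' j' : ℕ, (-1 : ℤ) ^ (j' + 1) *
          (pR2Z ((n : ℤ) - ((j' : ℤ) + 1) * (3 * ((j' : ℤ) + 1) - 1) / 2) +
            pR2Z ((n : ℤ) - ((j' : ℤ) + 1) * (3 * ((j' : ℤ) + 1) + 1) / 2)) =
        0) := by
  constructor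
  · intro j hj
    rw [main_sum n]
    have h := theta_a 5 1 n (by norm_num) (by norm_num) (by norm_num) n (le_refl n) j
      (by push_cast; linear_combination hj)
    simp only [show (5:ℕ)-1 = 4 from by norm_num] at h
    exact h
  · intro hno
    rw [main_sum n]
    have hno' : ¬ ∃ j : ℤ, 2*(n:ℤ) = j*(((5:ℕ):ℤ)*j + (((5:ℕ):ℤ) - 2*((1:ℕ):ℤ))) := by
      rintro ⟨j, hjj⟩
      exact hno ⟨j, by push_cast at hjj; linear_combination hjj⟩
    have h := theta_b 5 1 n (by norm_num) (by norm_num) (by norm_num) n (le_refl n) hno'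
    simp only [show (5:ℕ)-1 = 4 from by norm_num] at h
    exact h
end
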